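/- arXiv:1905.02264 — 7 statements merged into one kernel-verified Lean document; each statement's English description precedes it below -/
import Mathlib

section
/- The multivariate matching polynomial μ_G(x_1,...,x_n) = ∑_M (-1)^{|M|} ∏_{i ∈ [n]\V(M)} x_i, where the sum runs over all matchings M of G, is stable: it is nonzero whenever all variables have strictly positive imaginary part. (Heilmann–Lieb theorem, multivariate form.) -/
open MvPolynomial Finset
open scoped Classical

/-- A polynomial is stable if it does not vanish when all variables lie in the
open upper half-plane (the zero polynomial is stable by convention). -/
def IsStable {n : ℕ} (f : MvPolynomial (Fin n) ℂ) : Prop :=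
  f = 0 ∨ ∀ x : Fin n → ℂ, (∀ i, 0 < (x i).im) → MvPolynomial.eval x f ≠ 0

/-- `M` is a matching of the simple graph `G`: a set of edges of `G`,
no two of which share a vertex. -/
def IsMatching {n : ℕ} (G : SimpleGraph (Fin n)) (M : Finset (Sym2 (Fin n))) : Prop :=
  (∀ e ∈ M, e ∈ G.edgeSet) ∧
    ∀ e ∈ M, ∀ f ∈ M, e ≠ f → ∀ v : Fin n, ¬(v ∈ e ∧ v ∈ f)

/-- The set of vertices covered by a matching. -/
noncomputable def matchedVerts {n : ℕ} (M : Finset (Sym2 (Fin n))) : Finset (Fin n) :=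
  Finset.univ.filter fun v => ∃ e ∈ M, v ∈ e

/-- The multivariate matching polynomial of a simple graph `G` on `[n]`. -/
noncomputable def matchPoly {n : ℕ} (G : SimpleGraph (Fin n)) : MvPolynomial (Fin n) ℂ :=
  ∑ M ∈ Finset.univ.filter (fun M => IsMatching G M),
    (-1 : MvPolynomial (Fin n) ℂ) ^ M.card * ∏ i ∈ Finset.univ \ matchedVerts M, X i

namespace HLaux

variable {n : ℕ} (G : SimpleGraph (Fin n)) (x : Fin n → ℂ)

lemma mem_matchedVerts {M : Finset (Sym2 (Fin n))} {v : Fin n} :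
    v ∈ matchedVerts M ↔ ∃ e ∈ M, v ∈ e := by
  simp [matchedVerts]

/-- Matchings whose edges are within `S` (as vertex set). -/
def MatchIn (S : Finset (Fin n)) (M : Finset (Sym2 (Fin n))) : Prop :=
  IsMatching G M ∧ ∀ e ∈ M, ∀ v : Fin n, v ∈ e → v ∈ S

noncomputable def pS (S : Finset (Fin n)) : ℂ :=
  ∑ M ∈ Finset.univ.filter (fun M => MatchIn G S M),
    (-1 : ℂ) ^ M.card * ∏ i ∈ S \ matchedVerts M, x i

lemma pS_empty : pS G x ∅ = 1 := by
  have h : (Finset.univ.filter (fun M => MatchIn G (∅ : Finset (Fin n)) M)) = {∅} := by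
    ext M
    simp only [Finset.mem_filter, Finset.mem_univ, true_and, Finset.mem_singleton]
    constructor
    · rintro ⟨-, h2⟩
      by_contra hM
      obtain ⟨e, he⟩ := Finset.nonempty_iff_ne_empty.mpr hM
      induction e using Sym2.ind with
      | _ a b => exact absurd (h2 _ he a (by simp)) (by simp)
    · rintro rfl
      exact ⟨⟨by simp, by simp⟩, by simp⟩
  rw [pS, h]
  simp

/-- the partner of `v` in a matching -/
noncomputable def partner (v : Fin n) (M : Finset (Sym2 (Fin n))) : Fin n :=
  if h : ∃ u, s(v, u) ∈ M then h.choose else v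

lemma partner_mem {v : Fin n} {M : Finset (Sym2 (Fin n))}
    (h : v ∈ matchedVerts M) : s(v, partner v M) ∈ M := by
  rw [mem_matchedVerts] at h
  obtain ⟨e, heM, hve⟩ := h
  obtain ⟨u, rfl⟩ := Sym2.mem_iff_exists.mp hve
  have hex : ∃ u, s(v, u) ∈ M := ⟨u, heM⟩
  rw [partner, dif_pos hex]
  exact hex.choose_spec

lemma partner_eq {v u : Fin n} {M : Finset (Sym2 (Fin n))}
    (hM : IsMatching G M) (h : s(v, u) ∈ M) : partner v M = u := by
  have hv : v ∈ matchedVerts M := mem_matchedVerts.mpr ⟨_, h, by simp⟩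
  have h2 := partner_mem hv
  by_contra hne
  have hedges : s(v, partner v M) ≠ s(v, u) := fun hc => hne (Sym2.congr_right.mp hc)
  exact hM.2 _ h2 _ h hedges v ⟨by simp, by simp⟩

lemma pS_rec {S : Finset (Fin n)} {v : Fin n} (hv : v ∈ S) :
    pS G x S = x v * pS G x (S.erase v) -
      ∑ u ∈ (S.erase v).filter (fun u => G.Adj v u), pS G x ((S.erase v).erase u) := by
  classical
  set S' := S.erase v with hS'
  rw [pS, ← Finset.sum_filter_add_sum_filter_not
      (Finset.univ.filter (fun M => MatchIn G S M)) (fun M => v ∈ matchedVerts M)]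
  have hA : ∑ M ∈ (Finset.univ.filter (fun M => MatchIn G S M)).filter
        (fun M => ¬ v ∈ matchedVerts M),
      ((-1 : ℂ) ^ M.card * ∏ i ∈ S \ matchedVerts M, x i) = x v * pS G x S' := by
    have hset : ((Finset.univ.filter (fun M => MatchIn G S M)).filter
          (fun M => ¬ v ∈ matchedVerts M))
        = Finset.univ.filter (fun M => MatchIn G S' M) := by
      ext M
      simp only [Finset.mem_filter, Finset.mem_univ, true_and, mem_matchedVerts, not_exists,
        not_and]
      constructor
      · rintro ⟨⟨h1, h2⟩, h3⟩
        refine ⟨h1, fun e he w hw => Finset.mem_erase.mpr ⟨?_, h2 e he w hw⟩⟩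
        rintro rfl; exact h3 e he hw
      · rintro ⟨h1, h2⟩
        refine ⟨⟨h1, fun e he w hw => Finset.mem_of_mem_erase (h2 e he w hw)⟩, fun e he hve =>
          Finset.notMem_erase v S (h2 e he v hve)⟩
    rw [hset, pS, Finset.mul_sum]
    refine Finset.sum_congr rfl fun M hM => ?_
    have hMv : ∀ e ∈ M, ∀ w : Fin n, w ∈ e → w ∈ S' := by
      exact (Finset.mem_filter.mp hM).2.2
    have hsd : S \ matchedVerts M = insert v (S' \ matchedVerts M) := by
      ext i
      simp only [Finset.mem_sdiff, Finset.mem_insert, hS', Finset.mem_erase]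
      constructor
      · rintro ⟨hiS, hiV⟩
        by_cases h : i = v
        · exact Or.inl h
        · exact Or.inr ⟨⟨h, hiS⟩, hiV⟩
      · rintro (hiv | ⟨⟨-, hiS⟩, hiV⟩)
        · rw [hiv]
          refine ⟨hv, ?_⟩
          rw [mem_matchedVerts]
          rintro ⟨e, he, hve⟩
          exact Finset.notMem_erase v S (hMv e he v hve)
        · exact ⟨hiS, hiV⟩
    rw [hsd, Finset.prod_insert (by simp [hS'])]
    ring
  have hB : ∑ M ∈ (Finset.univ.filter (fun M => MatchIn G S M)).filter
        (fun M => v ∈ matchedVerts M),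
      ((-1 : ℂ) ^ M.card * ∏ i ∈ S \ matchedVerts M, x i)
      = - ∑ u ∈ S'.filter (fun u => G.Adj v u), pS G x (S'.erase u) := by
    have hmaps : ∀ M ∈ (Finset.univ.filter (fun M => MatchIn G S M)).filter
          (fun M => v ∈ matchedVerts M),
        partner v M ∈ S'.filter (fun u => G.Adj v u) := by
      intro M hM
      simp only [Finset.mem_filter, Finset.mem_univ, true_and] at hM
      obtain ⟨⟨hmatch, hsub⟩, hcov⟩ := hM
      have hedge := partner_mem hcov
      have hadj : G.Adj v (partner v M) := (SimpleGraph.mem_edgeSet G).mp (hmatch.1 _ hedge)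
      refine Finset.mem_filter.mpr ⟨?_, hadj⟩
      rw [hS']
      exact Finset.mem_erase.mpr ⟨hadj.ne', hsub _ hedge _ (by simp)⟩
    rw [← Finset.sum_fiberwise_of_maps_to hmaps
      (fun M => (-1 : ℂ) ^ M.card * ∏ i ∈ S \ matchedVerts M, x i), ← Finset.sum_neg_distrib]
    refine Finset.sum_congr rfl fun u hu => ?_
    have huS' : u ∈ S' := (Finset.mem_filter.mp hu).1
    have hadj : G.Adj v u := (Finset.mem_filter.mp hu).2
    have hvu : v ≠ u := hadj.ne
    rw [pS, ← Finset.sum_neg_distrib]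
    refine Finset.sum_nbij' (fun M => M.erase s(v, u)) (fun M' => insert s(v, u) M')
      ?_ ?_ ?_ ?_ ?_
    · -- forward membership
      intro M hM
      simp only [Finset.mem_filter, Finset.mem_univ, true_and] at hM ⊢
      obtain ⟨⟨⟨⟨hedges, hdisj⟩, hsub⟩, hcov⟩, hpart⟩ := hM
      have hmem : s(v, u) ∈ M := by
        have := partner_mem hcov
        rwa [hpart] at this
      constructor
      constructor
      · exact fun e he => hedges e (Finset.mem_of_mem_erase he)
      · exact fun e he f hf => hdisj e (Finset.mem_of_mem_erase he) f (Finset.mem_of_mem_erase hf)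
      · intro e he w hw
        obtain ⟨hene, heM⟩ := Finset.mem_erase.mp he
        refine Finset.mem_erase.mpr ⟨?_, ?_⟩
        · intro hwu
          exact hdisj e heM _ hmem hene w ⟨hw, Sym2.mem_iff.mpr (Or.inr hwu)⟩
        · rw [hS']
          refine Finset.mem_erase.mpr ⟨?_, hsub e heM w hw⟩
          intro hwv
          exact hdisj e heM _ hmem hene w ⟨hw, Sym2.mem_iff.mpr (Or.inl hwv)⟩
    · -- backward membership
      intro M' hM'
      simp only [Finset.mem_filter, Finset.mem_univ, true_and] at hM' ⊢
      obtain ⟨⟨hedges, hdisj⟩, hsub⟩ := hM'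
      have hvnot : ∀ e ∈ M', ∀ w : Fin n, w ∈ e → w ≠ v ∧ w ≠ u := by
        intro e he w hw
        have := Finset.mem_erase.mp (hsub e he w hw)
        rw [hS'] at this
        exact ⟨(Finset.mem_erase.mp this.2).1, this.1⟩
      have hnotmem : s(v, u) ∉ M' := by
        intro hc
        exact ((hvnot _ hc v (by simp)).1 rfl)
      have hmatch : IsMatching G (insert s(v, u) M') := by
        constructor
        · intro e he
          rcases Finset.mem_insert.mp he with rfl | he'
          · exact (SimpleGraph.mem_edgeSet G).mpr hadj
          · exact hedges e he'
        · intro e he f hf hef w hw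
          rcases Finset.mem_insert.mp he with rfl | he' <;>
            rcases Finset.mem_insert.mp hf with rfl | hf'
          · exact hef rfl
          · rcases (Sym2.mem_iff.mp hw.1) with rfl | rfl
            · exact (hvnot f hf' w hw.2).1 rfl
            · exact (hvnot f hf' w hw.2).2 rfl
          · rcases (Sym2.mem_iff.mp hw.2) with rfl | rfl
            · exact (hvnot e he' w hw.1).1 rfl
            · exact (hvnot e he' w hw.1).2 rfl
          · exact hdisj e he' f hf' hef w hw
      refine ⟨⟨⟨hmatch, ?_⟩, ?_⟩, ?_⟩
      · intro e he w hw
        rcases Finset.mem_insert.mp he with rfl | he'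
        · rcases Sym2.mem_iff.mp hw with rfl | rfl
          · exact hv
          · exact Finset.mem_of_mem_erase huS'
        · have := Finset.mem_erase.mp (hsub e he' w hw)
          rw [hS'] at this
          exact Finset.mem_of_mem_erase this.2
      · exact mem_matchedVerts.mpr ⟨s(v, u), Finset.mem_insert_self _ _, by simp⟩
      · exact partner_eq G hmatch (Finset.mem_insert_self _ _)
    · -- left inverse
      intro M hM
      simp only [Finset.mem_filter, Finset.mem_univ, true_and] at hM
      obtain ⟨⟨⟨hmatch, hsub⟩, hcov⟩, hpart⟩ := hM
      have hmem : s(v, u) ∈ M := by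
        have := partner_mem hcov
        rwa [hpart] at this
      exact Finset.insert_erase hmem
    · -- right inverse
      intro M' hM'
      simp only [Finset.mem_filter, Finset.mem_univ, true_and] at hM'
      obtain ⟨⟨hedges, hdisj⟩, hsub⟩ := hM'
      have hnotmem : s(v, u) ∉ M' := by
        intro hc
        have := Finset.mem_erase.mp (hsub _ hc v (by simp))
        exact Finset.notMem_erase v S (hS' ▸ this.2)
      exact Finset.erase_insert hnotmem
    · -- terms agree
      intro M hM
      simp only [Finset.mem_filter, Finset.mem_univ, true_and] at hM
      obtain ⟨⟨⟨hmatch, hsub⟩, hcov⟩, hpart⟩ := hM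
      have hmem : s(v, u) ∈ M := by
        have := partner_mem hcov
        rwa [hpart] at this
      have hcard : M.card = (M.erase s(v, u)).card + 1 :=
        (Finset.card_erase_add_one hmem).symm
      have hsd : S \ matchedVerts M = (S'.erase u) \ matchedVerts (M.erase s(v, u)) := by
        ext i
        simp only [Finset.mem_sdiff, mem_matchedVerts, Finset.mem_erase, hS', not_exists, not_and]
        constructor
        · rintro ⟨hiS, hiV⟩
          have hiv : i ≠ v := by rintro rfl; exact hiV _ hmem (by simp)
          have hiu : i ≠ u := by rintro rfl; exact hiV _ hmem (by simp)
          exact ⟨⟨hiu, hiv, hiS⟩, fun e he hie => hiV e he.2 hie⟩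
        · rintro ⟨⟨hiu, hiv, hiS⟩, hiV⟩
          refine ⟨hiS, fun e he hie => ?_⟩
          by_cases hevu : e = s(v, u)
          · subst hevu
            rcases Sym2.mem_iff.mp hie with rfl | rfl
            · exact hiv rfl
            · exact hiu rfl
          · exact hiV e ⟨hevu, he⟩ hie
      rw [hsd, hcard, pow_succ]
      ring
  rw [hB, hA]
  ring

lemma key (hx : ∀ i, 0 < (x i).im) (S : Finset (Fin n)) :
    pS G x S ≠ 0 ∧ ∀ v ∈ S, 0 < (pS G x S / pS G x (S.erase v)).im := by
  induction S using Finset.strongInduction with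
  | _ S ih =>
    have hr : ∀ v ∈ S, 0 < (pS G x S / pS G x (S.erase v)).im := by
      intro v hv
      set S' := S.erase v with hS'
      have h1 := ih S' (Finset.erase_ssubset hv)
      have key2 : pS G x S / pS G x S' =
          x v - ∑ u ∈ S'.filter (fun u => G.Adj v u), pS G x (S'.erase u) / pS G x S' := by
        rw [pS_rec G x hv, sub_div, mul_div_assoc, div_self h1.1, mul_one, Finset.sum_div]
      rw [key2]
      have him : ∀ u ∈ S'.filter (fun u => G.Adj v u),
          (pS G x (S'.erase u) / pS G x S').im ≤ 0 := by
        intro u hu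
        have huS' : u ∈ S' := (Finset.mem_filter.mp hu).1
        have h2 := h1.2 u huS'
        rw [← inv_div, Complex.inv_im]
        have hnz : pS G x S' / pS G x (S'.erase u) ≠ 0 := by
          intro hz; rw [hz] at h2; simp at h2
        have hns := Complex.normSq_nonneg (pS G x S' / pS G x (S'.erase u))
        have h2' := h2.le
        exact div_nonpos_of_nonpos_of_nonneg (by linarith) hns
      rw [Complex.sub_im, Complex.im_sum]
      have hsum := Finset.sum_nonpos him
      linarith [hx v]
    refine ⟨?_, hr⟩
    rcases S.eq_empty_or_nonempty with rfl | ⟨v, hv⟩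
    · rw [pS_empty]; exact one_ne_zero
    · intro h0
      have := hr v hv
      rw [h0, zero_div] at this
      simp at this

lemma eval_matchPoly : MvPolynomial.eval x (matchPoly G) = pS G x Finset.univ := by
  have hfil : (Finset.univ.filter (fun M => IsMatching G M)) =
      (Finset.univ.filter (fun M => MatchIn G (Finset.univ : Finset (Fin n)) M)) := by
    ext M; simp [MatchIn]
  rw [matchPoly, hfil, map_sum, pS]
  refine Finset.sum_congr rfl fun M _ => ?_
  rw [map_mul, map_pow, map_prod]
  simp

end HLaux

/-- Heilmann–Lieb: the multivariate matching polynomial is stable. -/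
theorem stmt_1 {n : ℕ} (G : SimpleGraph (Fin n)) :
    ∀ x : Fin n → ℂ, (∀ i, 0 < (x i).im) → MvPolynomial.eval x (matchPoly G) ≠ 0 := by
  intro x hx
  rw [HLaux.eval_matchPoly]
  exact (HLaux.key G x hx Finset.univ).1
end

section
/- The multi-affine part operator MAP, which sends ∑_α a(α) x^α to the sum of those terms a(α) x^α with α_i ≤ 1 for all i, preserves stability: if f ∈ C[x_1,...,x_n] is stable then MAP(f) is stable. -/
section Aux
open Polynomial

lemma norm_msprod (s : Multiset ℂ) : ‖s.prod‖ = (s.map norm).prod := by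
  induction s using Multiset.induction_on with
  | empty => simp
  | cons a t ih => simp [norm_mul, ih]

lemma lemmaM (q : Polynomial ℂ) (r : ℝ) (hr : 0 < r)
    (hq : ∀ w : ℂ, ‖w‖ ≤ r → q.eval w ≠ 0) :
    ∀ w : ℂ, ‖w‖ ≤ r / 2 → ‖q.eval w‖ ≤ (3/2 : ℝ) ^ q.natDegree * ‖q.eval 0‖ := by
  intro w hw
  have hq0 : q ≠ 0 := fun h => hq 0 (by simp [hr.le]) (by simp [h])
  have hsplit : Splits q := IsAlgClosed.splits q
  have hfac := hsplit.eq_prod_roots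
  have hcard : q.roots.card = q.natDegree := by
    rw [hsplit.natDegree_eq_card_roots]
  have hroots : ∀ ρ ∈ q.roots, r ≤ ‖ρ‖ := by
    intro ρ hρ
    by_contra h
    exact hq ρ (le_of_not_ge h) ((mem_roots hq0).1 hρ)
  have hev : ∀ z : ℂ, q.eval z = q.leadingCoeff * (q.roots.map (fun a => z - a)).prod := by
    intro z
    conv_lhs => rw [hfac]
    rw [eval_mul, eval_C, eval_multiset_prod, Multiset.map_map]
    simp
  have key : ∀ s : Multiset ℂ, (∀ ρ ∈ s, r ≤ ‖ρ‖) →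
      (s.map (fun a => ‖w - a‖)).prod ≤ (3/2 : ℝ) ^ (Multiset.card s) * (s.map (fun a => ‖(0:ℂ) - a‖)).prod := by
    intro s
    induction s using Multiset.induction_on with
    | empty => simp
    | cons a t ih =>
      intro hmem
      simp only [Multiset.map_cons, Multiset.prod_cons, Multiset.card_cons]
      have h1 : ‖w - a‖ ≤ (3/2 : ℝ) * ‖(0:ℂ) - a‖ := by
        calc ‖w - a‖ ≤ ‖w‖ + ‖a‖ := norm_sub_le _ _
          _ ≤ r/2 + ‖a‖ := by linarith
          _ ≤ ‖a‖/2 + ‖a‖ := by have := hmem a (Multiset.mem_cons_self a t); linarith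
          _ = (3/2) * ‖(0:ℂ) - a‖ := by rw [zero_sub, norm_neg]; ring
      have h2 := ih (fun ρ hρ => hmem ρ (Multiset.mem_cons_of_mem hρ))
      have hnn : (0:ℝ) ≤ (t.map (fun a => ‖w - a‖)).prod :=
        Multiset.prod_nonneg (by intro x hx; simp only [Multiset.mem_map] at hx; obtain ⟨b,_,rfl⟩ := hx; positivity)
      calc ‖w - a‖ * (t.map (fun a => ‖w - a‖)).prod
          ≤ ((3/2:ℝ) * ‖(0:ℂ) - a‖) * ((3/2 : ℝ) ^ (Multiset.card t) * (t.map (fun a => ‖(0:ℂ) - a‖)).prod) := by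
            apply mul_le_mul h1 h2 hnn (by positivity)
        _ = (3/2:ℝ) ^ (Multiset.card t + 1) * (‖(0:ℂ) - a‖ * (t.map (fun a => ‖(0:ℂ) - a‖)).prod) := by ring
  rw [hev w, hev 0, norm_mul, norm_mul]
  calc ‖q.leadingCoeff‖ * ‖(q.roots.map (fun a => w - a)).prod‖
      = ‖q.leadingCoeff‖ * ((q.roots.map (fun a => ‖w - a‖))).prod := by
        rw [norm_msprod, Multiset.map_map]; rfl
    _ ≤ ‖q.leadingCoeff‖ * ((3/2 : ℝ) ^ (Multiset.card q.roots) * (q.roots.map (fun a => ‖(0:ℂ) - a‖)).prod) := by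
        apply mul_le_mul_of_nonneg_left (key q.roots hroots) (norm_nonneg _)
    _ = (3/2 : ℝ) ^ q.natDegree * (‖q.leadingCoeff‖ * (q.roots.map (fun a => ‖(0:ℂ) - a‖)).prod) := by
        rw [hcard]; ring
    _ = (3/2 : ℝ) ^ q.natDegree * (‖q.leadingCoeff‖ * ‖(q.roots.map (fun a => (0:ℂ) - a)).prod‖) := by
        rw [norm_msprod, Multiset.map_map]; rfl


-- coeff facts for (X - C ρ) * q
lemma coeff0_fac (ρ : ℂ) (q : Polynomial ℂ) : ((X - C ρ) * q).coeff 0 = -ρ * q.coeff 0 := by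
  rw [sub_mul, coeff_sub, mul_coeff_zero]
  simp [coeff_C_mul]

lemma coeff1_fac (ρ : ℂ) (q : Polynomial ℂ) : ((X - C ρ) * q).coeff 1 = q.coeff 0 - ρ * q.coeff 1 := by
  rw [sub_mul, coeff_sub, coeff_X_mul, coeff_C_mul]

lemma lemPs (c : ℂ) (hc : c ≠ 0) (s : Multiset ℂ) (hs : ∀ ρ ∈ s, ρ.im ≤ 0) :
    ((C c * (s.map (fun ρ => X - C ρ)).prod).coeff 0 = 0 ∧
     (C c * (s.map (fun ρ => X - C ρ)).prod).coeff 1 = 0) ∨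
    ∀ z : ℂ, 0 < z.im →
      (C c * (s.map (fun ρ => X - C ρ)).prod).coeff 0 +
      (C c * (s.map (fun ρ => X - C ρ)).prod).coeff 1 * z ≠ 0 := by
  induction s using Multiset.induction_on with
  | empty =>
    right
    intro z hz
    simpa using hc
  | cons ρ t ih =>
    have hρ : ρ.im ≤ 0 := hs ρ (Multiset.mem_cons_self ρ t)
    have ht : ∀ σ ∈ t, σ.im ≤ 0 := fun σ hσ => hs σ (Multiset.mem_cons_of_mem hσ)
    set q := C c * (t.map (fun ρ => X - C ρ)).prod with hqdef
    have hrw : C c * ((ρ ::ₘ t).map (fun ρ => X - C ρ)).prod = (X - C ρ) * q := by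
      rw [Multiset.map_cons, Multiset.prod_cons, hqdef]; ring
    rw [hrw, coeff0_fac, coeff1_fac]
    set a := q.coeff 0
    set b := q.coeff 1
    rcases ih ht with ⟨ha, hb⟩ | hnv
    · left; rw [ha, hb]; constructor <;> ring
    · by_cases hρ0 : ρ = 0
      · subst hρ0
        by_cases ha : a = 0
        · left; rw [ha]; constructor <;> ring
        · right; intro z hz h
          have h' : a * z = 0 := by linear_combination h
          have hz0 : z ≠ 0 := fun h' => by simp [h'] at hz
          -- h : -0*a + (a - 0*b)*z = 0 simplified
          apply ha
          rcases mul_eq_zero.1 h' with h | h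
          · exact h
          · exact absurd h hz0
      · right
        intro z hz h
        -- h : -ρ*a + (a - ρ*b)*z = 0
        have hzρ : z - ρ ≠ 0 := by
          intro h'
          have : z.im - ρ.im = 0 := by rw [← Complex.sub_im, h']; simp
          linarith
        have hz0 : z ≠ 0 := fun h' => by simp [h'] at hz
        set z' : ℂ := -ρ * z / (z - ρ) with hz'def
        have habz' : a + b * z' = 0 := by
          rw [hz'def]
          field_simp
          linear_combination (1 : ℂ) * h
        have him : 0 < z'.im := by
          have hρz : ρ - z ≠ 0 := by
            intro h'; apply hzρ; linear_combination -h'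
          have h1 : z' = (z⁻¹ - ρ⁻¹)⁻¹ := by
            rw [hz'def]
            have hd : z⁻¹ - ρ⁻¹ ≠ 0 := by
              intro h'
              apply hρz
              have := sub_eq_zero.1 h'
              have h2 : z = ρ := by
                have := congrArg (fun u => u⁻¹) this
                simpa using this
              rw [h2]; ring
            field_simp
            ring
          have h2 : (z⁻¹).im < 0 := by
            rw [Complex.inv_im]
            apply div_neg_of_neg_of_pos
            · linarith
            · exact Complex.normSq_pos.2 hz0
          have h3 : 0 ≤ (ρ⁻¹).im := by
            rw [Complex.inv_im]
            apply div_nonneg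
            · linarith
            · exact Complex.normSq_nonneg ρ
          have h4 : (z⁻¹ - ρ⁻¹).im < 0 := by
            rw [Complex.sub_im]; linarith
          have h5 : z⁻¹ - ρ⁻¹ ≠ 0 := by
            intro h'
            rw [h'] at h4
            simp at h4
          rw [h1, Complex.inv_im]
          apply div_pos
          · linarith
          · exact Complex.normSq_pos.2 h5
        exact hnv z' him habz'


lemma lemP (p : Polynomial ℂ) (hr : ∀ ρ : ℂ, p.IsRoot ρ → ρ.im ≤ 0) :
    (p.coeff 0 = 0 ∧ p.coeff 1 = 0) ∨
    ∀ z : ℂ, 0 < z.im → p.coeff 0 + p.coeff 1 * z ≠ 0 := by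
  by_cases hp0 : p = 0
  · left; simp [hp0]
  have hsplit : Splits p := IsAlgClosed.splits p
  have hfac := hsplit.eq_prod_roots
  have hlc : p.leadingCoeff ≠ 0 := leadingCoeff_ne_zero.2 hp0
  have hs : ∀ ρ ∈ p.roots, ρ.im ≤ 0 := fun ρ hρ => hr ρ ((mem_roots hp0).1 hρ)
  have := lemPs p.leadingCoeff hlc p.roots hs
  rw [← hfac] at this
  exact this

end Aux

open MvPolynomial Finset
open scoped Classical

/-- The multi-affine part operator: keep exactly those monomials in which every
variable occurs with degree at most one. -/
noncomputable def MAP {n : ℕ} (f : MvPolynomial (Fin n) ℂ) : MvPolynomial (Fin n) ℂ :=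
  ∑ m ∈ f.support.filter (fun m => ∀ i, m i ≤ 1), monomial m (f.coeff m)





noncomputable def mask {n : ℕ} (P : (Fin n →₀ ℕ) → Prop) (f : MvPolynomial (Fin n) ℂ) :
    MvPolynomial (Fin n) ℂ :=
  ∑ m ∈ f.support.filter P, monomial m (f.coeff m)

lemma coeff_mask {n : ℕ} (P : (Fin n →₀ ℕ) → Prop) (f : MvPolynomial (Fin n) ℂ)
    (m : Fin n →₀ ℕ) : (mask P f).coeff m = if P m then f.coeff m else 0 := by
  rw [mask, coeff_sum]
  simp only [coeff_monomial]
  rw [Finset.sum_ite_eq' (f.support.filter P) m (fun m' => f.coeff m')]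
  by_cases hP : P m
  · by_cases hm : m ∈ f.support
    · rw [if_pos (Finset.mem_filter.2 ⟨hm, hP⟩), if_pos hP]
    · rw [if_neg (fun h => hm (Finset.mem_filter.1 h).1), if_pos hP]
      exact (notMem_support_iff.1 hm).symm ▸ (notMem_support_iff.1 hm)
  · rw [if_neg (fun h => hP (Finset.mem_filter.1 h).2), if_neg hP]

lemma mask_add {n : ℕ} (P : (Fin n →₀ ℕ) → Prop) (f g : MvPolynomial (Fin n) ℂ) :
    mask P (f + g) = mask P f + mask P g := by
  apply MvPolynomial.ext
  intro m
  simp only [coeff_mask, coeff_add]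
  by_cases hP : P m <;> simp [hP]

lemma mask_monomial {n : ℕ} (P : (Fin n →₀ ℕ) → Prop) (m : Fin n →₀ ℕ) (c : ℂ) :
    mask P (monomial m c) = if P m then monomial m c else 0 := by
  apply MvPolynomial.ext
  intro m'
  rw [coeff_mask, coeff_monomial]
  by_cases hP : P m' <;> by_cases hm : m = m' <;> by_cases hPm : P m <;>
    simp_all [coeff_monomial]


lemma mask_zero {n : ℕ} (P : (Fin n →₀ ℕ) → Prop) : mask P (0 : MvPolynomial (Fin n) ℂ) = 0 := by
  apply MvPolynomial.ext
  intro m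
  rw [coeff_mask]
  by_cases hP : P m <;> simp [hP]

lemma mask_sum {n : ℕ} (P : (Fin n →₀ ℕ) → Prop) {X : Type*} (s : Finset X)
    (φ : X → MvPolynomial (Fin n) ℂ) : mask P (∑ t ∈ s, φ t) = ∑ t ∈ s, mask P (φ t) := by
  induction s using Finset.induction_on with
  | empty => simp [mask_zero]
  | insert a s hx ih => rw [Finset.sum_insert hx, Finset.sum_insert hx, mask_add, ih]

noncomputable def Psi {n : ℕ} (x : Fin n → ℂ) (i : Fin n) :
    MvPolynomial (Fin n) ℂ →+* Polynomial ℂ :=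
  eval₂Hom Polynomial.C (fun j => if j = i then Polynomial.X else Polynomial.C (x j))

lemma psi_eval {n : ℕ} (x : Fin n → ℂ) (i : Fin n) (f : MvPolynomial (Fin n) ℂ) (z : ℂ) :
    (Psi x i f).eval z = eval (Function.update x i z) f := by
  rw [Psi, coe_eval₂Hom]
  rw [show (Polynomial.eval z (eval₂ Polynomial.C (fun j => if j = i then Polynomial.X else Polynomial.C (x j)) f)) = (Polynomial.evalRingHom z) (eval₂ Polynomial.C _ f) from rfl]
  rw [eval₂_comp_left]
  have h1 : (Polynomial.evalRingHom z).comp Polynomial.C = RingHom.id ℂ := by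
    ext a; simp
  rw [h1]
  have h2 : ((Polynomial.evalRingHom z) ∘ fun j => if j = i then Polynomial.X else Polynomial.C (x j)) = Function.update x i z := by
    funext j
    by_cases hj : j = i <;> simp [hj, Function.update_apply]
  rw [h2]
  rfl

lemma finsupp_prod_split {n : ℕ} {M : Type*} [CommMonoid M] (m : Fin n →₀ ℕ) (i : Fin n)
    (F : Fin n → ℕ → M) (h1 : F i 0 = 1) :
    m.prod F = F i (m i) * ∏ j ∈ m.support.erase i, F j (m j) := by
  by_cases hi : i ∈ m.support
  · rw [Finsupp.prod, ← Finset.mul_prod_erase m.support _ hi]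
  · rw [Finsupp.prod, Finset.erase_eq_of_notMem hi, Finsupp.notMem_support_iff.1 hi, h1,
      one_mul]

lemma psi_monomial {n : ℕ} (x : Fin n → ℂ) (i : Fin n) (m : Fin n →₀ ℕ) (c : ℂ) :
    Psi x i (monomial m c) =
      Polynomial.C (c * ∏ j ∈ m.support.erase i, x j ^ m j) * Polynomial.X ^ (m i) := by
  rw [Psi, coe_eval₂Hom, eval₂_monomial]
  rw [finsupp_prod_split m i _ (by simp)]
  rw [if_pos rfl]
  have : ∀ j ∈ m.support.erase i, (if j = i then Polynomial.X else Polynomial.C (x j)) ^ m j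
      = Polynomial.C (x j ^ m j) := by
    intro j hj
    rw [if_neg (Finset.ne_of_mem_erase hj), map_pow]
  rw [Finset.prod_congr rfl this, ← map_prod, map_mul]
  ring

lemma eval_monomial_split {n : ℕ} (x : Fin n → ℂ) (i : Fin n) (m : Fin n →₀ ℕ) (c : ℂ) :
    eval x (monomial m c) = c * (x i ^ m i * ∏ j ∈ m.support.erase i, x j ^ m j) := by
  rw [eval_monomial, finsupp_prod_split m i _ (by simp)]

lemma F3 {n : ℕ} (x : Fin n → ℂ) (i : Fin n) (f : MvPolynomial (Fin n) ℂ) :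
    eval x (mask (fun m => m i ≤ 1) f) = (Psi x i f).coeff 0 + (Psi x i f).coeff 1 * x i := by
  conv_lhs => rw [as_sum f]
  conv_rhs => rw [as_sum f]
  rw [mask_sum, map_sum, map_sum, Polynomial.finset_sum_coeff, Polynomial.finset_sum_coeff,
    Finset.sum_mul, ← Finset.sum_add_distrib]
  apply Finset.sum_congr rfl
  intro m _
  rw [psi_monomial, mask_monomial]
  set K := ∏ j ∈ m.support.erase i, x j ^ m j
  rw [Polynomial.coeff_C_mul, Polynomial.coeff_C_mul, Polynomial.coeff_X_pow,
    Polynomial.coeff_X_pow]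
  rcases Nat.lt_or_ge (m i) 2 with h2 | h2
  · interval_cases h : m i
    · rw [if_pos (by omega)]
      rw [eval_monomial_split x i, h]
      simp [K]
    · rw [if_pos (by omega)]
      rw [eval_monomial_split x i, h]
      simp
      ring
  · rw [if_neg (by omega), if_neg (by omega), if_neg (by omega)]
    simp


lemma lemL {n : ℕ} (f : MvPolynomial (Fin n) ℂ) (i : Fin n)
    (hf : ∀ x : Fin n → ℂ, (∀ j, 0 < (x j).im) → eval x f ≠ 0)
    (xs : Fin n → ℂ) (hxs : ∀ j, 0 < (xs j).im)
    (h0 : eval (Function.update xs i 0) f = 0) :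
    ∀ y : Fin n → ℂ, eval (Function.update y i 0) f = 0 := by
  intro y
  set u : Fin n → ℂ := fun j => y j - xs j with hu
  set vars : Fin n → Polynomial (Polynomial ℂ) := fun j =>
    if j = i then Polynomial.C Polynomial.X
    else (Polynomial.C (Polynomial.C (xs j)) + Polynomial.C (Polynomial.C (u j)) * Polynomial.X)
    with hvars
  set Q : Polynomial (Polynomial ℂ) := eval₂ (Polynomial.C.comp Polynomial.C) vars f with hQ
  -- the key evaluation identity
  have key : ∀ w ζ : ℂ, Polynomial.eval₂ (Polynomial.evalRingHom ζ) w Q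
      = eval (fun j => if j = i then ζ else xs j + u j * w) f := by
    intro w ζ
    have h1 : Polynomial.eval₂ (Polynomial.evalRingHom ζ) w Q
        = (Polynomial.eval₂RingHom (Polynomial.evalRingHom ζ) w) Q := rfl
    rw [h1, hQ, eval₂_comp_left]
    have h2 : (Polynomial.eval₂RingHom (Polynomial.evalRingHom ζ) w).comp
        (Polynomial.C.comp Polynomial.C) = RingHom.id ℂ := by
      ext a
      simp
    have h3 : ((Polynomial.eval₂RingHom (Polynomial.evalRingHom ζ) w) ∘ vars)
        = fun j => if j = i then ζ else xs j + u j * w := by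
      funext j
      by_cases hj : j = i <;> simp [hvars, hj]
    rw [h2, h3]
    rfl
  -- geometry constants
  have hne : (Finset.univ : Finset (Fin n)).Nonempty := ⟨i, Finset.mem_univ i⟩
  set δ : ℝ := Finset.univ.inf' hne (fun j => (xs j).im) with hδ
  have hδpos : 0 < δ := by
    rw [hδ, Finset.lt_inf'_iff]
    intro j _
    exact hxs j
  set M : ℝ := Finset.univ.sup' hne (fun j => ‖u j‖) with hM
  have hM0 : 0 ≤ M := by
    rw [hM]
    exact le_trans (norm_nonneg (u i)) (Finset.le_sup' (fun j => ‖u j‖) (Finset.mem_univ i))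
  set r : ℝ := δ / (2 * (M + 1)) with hr
  have hrpos : 0 < r := by positivity
  -- upper-half-plane membership of the substituted point
  have hupper : ∀ ε : ℝ, 0 < ε → ∀ w : ℂ, ‖w‖ ≤ r →
      ∀ j, 0 < ((fun j => if j = i then ((ε : ℂ) * Complex.I) else xs j + u j * w) j).im := by
    intro ε hε w hw j
    by_cases hj : j = i
    · simp [hj, Complex.mul_I_im, hε]
    · simp only [if_neg hj, Complex.add_im]
      have h1 : |(u j * w).im| ≤ ‖u j * w‖ := Complex.abs_im_le_norm _
      have h2 : ‖u j * w‖ ≤ M * r := by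
        rw [norm_mul]
        apply mul_le_mul _ hw (norm_nonneg _) hM0
        rw [hM]
        exact Finset.le_sup' (fun j => ‖u j‖) (Finset.mem_univ j)
      have h3 : δ ≤ (xs j).im := by
        rw [hδ]
        exact Finset.inf'_le (fun j => (xs j).im) (Finset.mem_univ j)
      have h4 : M * r ≤ δ / 2 := by
        rw [hr, ← mul_div_assoc, div_le_div_iff₀ (by positivity) (by norm_num : (0:ℝ) < 2)]
        nlinarith
      have := abs_le.1 h1
      linarith
  -- the bound from lemmaM, for each ε > 0
  set D : ℕ := Q.natDegree with hD
  have hbound : ∀ ε : ℝ, 0 < ε → ∀ w : ℂ, ‖w‖ ≤ r / 2 →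
      ‖Polynomial.eval₂ (Polynomial.evalRingHom ((ε:ℂ) * Complex.I)) w Q‖
        ≤ (3/2 : ℝ) ^ D * ‖Polynomial.eval₂ (Polynomial.evalRingHom ((ε:ℂ) * Complex.I)) 0 Q‖ := by
    intro ε hε w hw
    set qe := Q.map (Polynomial.evalRingHom ((ε:ℂ) * Complex.I)) with hqe
    have hqeval : ∀ w' : ℂ, qe.eval w'
        = Polynomial.eval₂ (Polynomial.evalRingHom ((ε:ℂ) * Complex.I)) w' Q := by
      intro w'; rw [hqe, Polynomial.eval_map]
    have hnz : ∀ w' : ℂ, ‖w'‖ ≤ r → qe.eval w' ≠ 0 := by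
      intro w' hw'
      rw [hqeval, key]
      exact hf _ (hupper ε hε w' hw')
    have := lemmaM qe r hrpos hnz w hw
    rw [hqeval, hqeval] at this
    refine le_trans this ?_
    apply mul_le_mul_of_nonneg_right _ (norm_nonneg _)
    apply pow_le_pow_right₀ (by norm_num)
    exact Polynomial.natDegree_map_le
  -- pass to the limit ε → 0⁺
  have hval : ∀ w ζ : ℂ, Polynomial.eval₂ (Polynomial.evalRingHom ζ) w Q
      = (Q.eval (Polynomial.C w)).eval ζ := by
    intro w ζ
    have h := Polynomial.eval₂_at_apply (p := Q) (Polynomial.evalRingHom ζ) (Polynomial.C w)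
    simp only [Polynomial.coe_evalRingHom, Polynomial.eval_C] at h
    exact h
  have hzero : ∀ w : ℂ, ‖w‖ ≤ r / 2 → (Q.eval (Polynomial.C w)).eval 0 = 0 := by
    intro w hw
    set Rw := Q.eval (Polynomial.C w) with hRw
    set R0 := Q.eval (Polynomial.C 0) with hR0
    have hcont : ∀ (p : Polynomial ℂ), Filter.Tendsto (fun ε : ℝ => ‖p.eval ((ε:ℂ) * Complex.I)‖)
        (nhdsWithin 0 (Set.Ioi 0)) (nhds ‖p.eval 0‖) := by
      intro p
      have c1 : Continuous fun ε : ℝ => ‖p.eval ((ε:ℂ) * Complex.I)‖ := by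
        apply Continuous.norm
        exact p.continuous.comp (Complex.continuous_ofReal.mul continuous_const)
      have := (c1.tendsto 0).mono_left (nhdsWithin_le_nhds (s := Set.Ioi 0))
      simpa using this
    have hineq : ∀ ε ∈ Set.Ioi (0:ℝ), ‖Rw.eval ((ε:ℂ) * Complex.I)‖
        ≤ (3/2 : ℝ) ^ D * ‖R0.eval ((ε:ℂ) * Complex.I)‖ := by
      intro ε hε
      have := hbound ε hε w hw
      rw [hval, hval] at this
      exact this
    have hlim : ‖Rw.eval 0‖ ≤ (3/2 : ℝ) ^ D * ‖R0.eval 0‖ := by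
      refine le_of_tendsto_of_tendsto (hcont Rw) ((hcont R0).const_mul _) ?_
      filter_upwards [self_mem_nhdsWithin] with ε hε using hineq ε hε
    have hR00 : R0.eval 0 = 0 := by
      rw [hR0, ← hval, key]
      have : (fun j => if j = i then (0:ℂ) else xs j + u j * 0) = Function.update xs i 0 := by
        funext j
        by_cases hj : j = i <;> simp [hj, Function.update_apply]
      rw [this, h0]
    rw [hR00, norm_zero, mul_zero] at hlim
    exact norm_le_zero_iff.1 hlim
  -- conclude the ζ=0 specialization is the zero polynomial
  have hQ0 : Q.map (Polynomial.evalRingHom (0:ℂ)) = 0 := by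
    apply Polynomial.eq_zero_of_infinite_isRoot
    apply Set.Infinite.mono (s := (fun t : ℝ => (t:ℂ)) '' Set.Ioo 0 (r/2))
    · rintro w ⟨t, ht, rfl⟩
      have hwn : ‖(t:ℂ)‖ ≤ r / 2 := by
        rw [Complex.norm_real, Real.norm_eq_abs, abs_of_pos ht.1]
        exact ht.2.le
      show Polynomial.IsRoot _ _
      rw [Polynomial.IsRoot, Polynomial.eval_map, hval]
      exact hzero _ hwn
    · apply Set.Infinite.image
      · exact fun a _ b _ h => Complex.ofReal_injective h
      · exact Set.Ioo_infinite (by linarith)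
  -- evaluate at w = 1
  have final : Polynomial.eval₂ (Polynomial.evalRingHom (0:ℂ)) 1 Q = 0 := by
    rw [← Polynomial.eval_map, hQ0, Polynomial.eval_zero]
  rw [key] at final
  have : (fun j => if j = i then (0:ℂ) else xs j + u j * 1) = Function.update y i 0 := by
    funext j
    by_cases hj : j = i <;> simp [hj, Function.update_apply, hu]
  rw [this] at final
  exact final



lemma F0 {n : ℕ} (x : Fin n → ℂ) (i : Fin n) (f : MvPolynomial (Fin n) ℂ) :
    eval x (mask (fun m => m i = 0) f) = (Psi x i f).coeff 0 := by
  conv_lhs => rw [as_sum f]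
  conv_rhs => rw [as_sum f]
  rw [mask_sum, map_sum, map_sum, Polynomial.finset_sum_coeff]
  apply Finset.sum_congr rfl
  intro m _
  rw [psi_monomial, mask_monomial]
  rw [Polynomial.coeff_C_mul, Polynomial.coeff_X_pow]
  by_cases h : m i = 0
  · rw [if_pos h, if_pos (by omega), eval_monomial_split x i, h]
    simp
  · rw [if_neg h, if_neg (by omega)]
    simp

lemma coeff0_eval {n : ℕ} (x : Fin n → ℂ) (i : Fin n) (f : MvPolynomial (Fin n) ℂ) :
    (Psi x i f).coeff 0 = eval (Function.update x i 0) f := by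
  rw [Polynomial.coeff_zero_eq_eval_zero, psi_eval]

lemma exists_div {n : ℕ} (f : MvPolynomial (Fin n) ℂ) (i : Fin n)
    (hzero : ∀ m : Fin n →₀ ℕ, m i = 0 → f.coeff m = 0) :
    ∃ g : MvPolynomial (Fin n) ℂ, X i * g = f := by
  refine ⟨∑ m ∈ f.support.filter (fun m => m i ≠ 0),
    monomial (m - Finsupp.single i 1) (f.coeff m), ?_⟩
  rw [Finset.mul_sum]
  have h1 : ∀ m ∈ f.support.filter (fun m => m i ≠ 0),
      X i * monomial (m - Finsupp.single i 1) (f.coeff m) = monomial m (f.coeff m) := by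
    intro m hm
    have hmi : m i ≠ 0 := (Finset.mem_filter.1 hm).2
    have hsum : Finsupp.single i 1 + (m - Finsupp.single i 1) = m := by
      ext j
      simp only [Finsupp.add_apply, Finsupp.tsub_apply, Finsupp.single_apply]
      by_cases hj : i = j
      · subst hj
        rw [if_pos rfl]
        omega
      · rw [if_neg hj]
        omega
    rw [X, monomial_mul, one_mul, hsum]
  rw [Finset.sum_congr rfl h1]
  conv_rhs => rw [as_sum f]
  apply Finset.sum_subset (Finset.filter_subset _ _)
  intro m hm hnm
  have : m i = 0 := by
    by_contra h
    exact hnm (Finset.mem_filter.2 ⟨hm, h⟩)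
  rw [hzero m this, map_zero]

lemma T_stable {n : ℕ} (i : Fin n) (f : MvPolynomial (Fin n) ℂ) (hf : IsStable f) :
    IsStable (mask (fun m => m i ≤ 1) f) := by
  rcases hf with rfl | hf
  · left; exact mask_zero _
  by_cases hex : ∃ xs : Fin n → ℂ, (∀ j, 0 < (xs j).im) ∧
      eval xs (mask (fun m => m i ≤ 1) f) = 0
  · left
    obtain ⟨xs, hxs, hev0⟩ := hex
    have hupd : ∀ (x : Fin n → ℂ) (ρ : ℂ), (∀ j, 0 < (x j).im) → 0 < ρ.im →
        ∀ j, 0 < ((Function.update x i ρ) j).im := by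
      intro x ρ hx hρ j
      rw [Function.update_apply]
      by_cases hj : j = i <;> simp [hj, hρ, hx j]
    have hroots : ∀ ρ : ℂ, (Psi xs i f).IsRoot ρ → ρ.im ≤ 0 := by
      intro ρ hρ
      by_contra h
      push_neg at h
      exact hf _ (hupd xs ρ hxs h) (by rw [← psi_eval]; exact hρ)
    have hGood := lemP (Psi xs i f) hroots
    rw [F3] at hev0
    have hc : (Psi xs i f).coeff 0 = 0 ∧ (Psi xs i f).coeff 1 = 0 := by
      rcases hGood with h | h
      · exact h
      · exact absurd hev0 (h (xs i) (hxs i))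
    have h00 : eval (Function.update xs i 0) f = 0 := by
      rw [← coeff0_eval]; exact hc.1
    have hF0 : ∀ y, eval (Function.update y i 0) f = 0 := lemL f i hf xs hxs h00
    have hcoe0 : ∀ m : Fin n →₀ ℕ, m i = 0 → f.coeff m = 0 := by
      have hmask0 : mask (fun m => m i = 0) f = 0 := by
        apply MvPolynomial.funext
        intro y
        rw [F0, coeff0_eval, hF0, map_zero]
      intro m hm
      have := congrArg (fun p => MvPolynomial.coeff m p) hmask0
      simpa [coeff_mask, hm] using this
    obtain ⟨g, hg⟩ := exists_div f i hcoe0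
    have hgst : ∀ x : Fin n → ℂ, (∀ j, 0 < (x j).im) → eval x g ≠ 0 := by
      intro x hx h
      apply hf x hx
      rw [← hg, map_mul, h, mul_zero]
    have hPg : Psi xs i f = Polynomial.X * Psi xs i g := by
      rw [← hg, map_mul]
      congr 1
      simp [Psi]
    have h10 : eval (Function.update xs i 0) g = 0 := by
      rw [← coeff0_eval]
      have : (Psi xs i f).coeff 1 = (Psi xs i g).coeff 0 := by
        rw [hPg, Polynomial.coeff_X_mul]
      rw [← this]; exact hc.2
    have hF1 : ∀ y, eval (Function.update y i 0) g = 0 := lemL g i hgst xs hxs h10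
    have hcoeg0 : ∀ m : Fin n →₀ ℕ, m i = 0 → g.coeff m = 0 := by
      have hmask0 : mask (fun m => m i = 0) g = 0 := by
        apply MvPolynomial.funext
        intro y
        rw [F0, coeff0_eval, hF1, map_zero]
      intro m hm
      have := congrArg (fun p => MvPolynomial.coeff m p) hmask0
      simpa [coeff_mask, hm] using this
    have hcoe1 : ∀ m : Fin n →₀ ℕ, m i = 1 → f.coeff m = 0 := by
      intro m hm
      have h1 : f.coeff m = g.coeff (m - Finsupp.single i 1) := by
        rw [← hg, coeff_X_mul']
        rw [if_pos (Finsupp.mem_support_iff.2 (by rw [hm]; omega))]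
      rw [h1]
      apply hcoeg0
      simp [Finsupp.tsub_apply, hm]
    apply MvPolynomial.ext
    intro m
    rw [coeff_mask]
    by_cases h : m i ≤ 1
    · rw [if_pos h]
      rcases Nat.le_one_iff_eq_zero_or_eq_one.1 h with h0 | h1
      · rw [hcoe0 m h0]; rfl
      · rw [hcoe1 m h1]; rfl
    · rw [if_neg h]; rfl
  · right
    push_neg at hex
    exact hex

lemma foldr_coeff {n : ℕ} (l : List (Fin n)) (f : MvPolynomial (Fin n) ℂ) (m : Fin n →₀ ℕ) :
    (l.foldr (fun i acc => mask (fun m => m i ≤ 1) acc) f).coeff m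
      = if (∀ i ∈ l, m i ≤ 1) then f.coeff m else 0 := by
  induction l with
  | nil => simp
  | cons a l ih =>
    rw [List.foldr_cons, coeff_mask, ih]
    by_cases ha : m a ≤ 1
    · by_cases hl : ∀ i ∈ l, m i ≤ 1
      · have hall : ∀ i ∈ a :: l, m i ≤ 1 := by
          intro i hi
          rcases List.mem_cons.1 hi with h | h
          · subst h; exact ha
          · exact hl i h
        simp [ha, hl, hall]
      · have hall : ¬ ∀ i ∈ a :: l, m i ≤ 1 :=
          fun h => hl fun i hi => h i (List.mem_cons_of_mem a hi)
        simp [ha, hl, hall]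
    · have hall : ¬ ∀ i ∈ a :: l, m i ≤ 1 := fun h => ha (h a List.mem_cons_self)
      simp [ha, hall]

lemma foldr_stable {n : ℕ} (l : List (Fin n)) (f : MvPolynomial (Fin n) ℂ) (hf : IsStable f) :
    IsStable (l.foldr (fun i acc => mask (fun m => m i ≤ 1) acc) f) := by
  induction l with
  | nil => exact hf
  | cons a l ih => exact T_stable a _ ih

lemma coeff_MAP {n : ℕ} (f : MvPolynomial (Fin n) ℂ) (m : Fin n →₀ ℕ) :
    (MAP f).coeff m = if (∀ i : Fin n, m i ≤ 1) then f.coeff m else 0 := by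
  rw [MAP, coeff_sum]
  simp only [coeff_monomial]
  rw [Finset.sum_ite_eq' _ m (fun m' => f.coeff m')]
  by_cases hP : ∀ i : Fin n, m i ≤ 1
  · by_cases hm : m ∈ f.support
    · rw [if_pos (Finset.mem_filter.2 ⟨hm, hP⟩), if_pos hP]
    · rw [if_neg (fun h => hm (Finset.mem_filter.1 h).1), if_pos hP]
      exact (notMem_support_iff.1 hm).symm ▸ (notMem_support_iff.1 hm)
  · rw [if_neg (fun h => hP (Finset.mem_filter.1 h).2), if_neg hP]

lemma MAP_eq_foldr {n : ℕ} (f : MvPolynomial (Fin n) ℂ) :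
    MAP f = (List.finRange n).foldr (fun i acc => mask (fun m => m i ≤ 1) acc) f := by
  apply MvPolynomial.ext
  intro m
  rw [coeff_MAP, foldr_coeff]
  by_cases h : ∀ i, m i ≤ 1
  · rw [if_pos h, if_pos (fun i _ => h i)]
  · rw [if_neg h, if_neg (by push_neg at h ⊢; obtain ⟨i, hi⟩ := h; exact ⟨i, List.mem_finRange i, hi⟩)]




/-- The multi-affine part operator preserves stability. -/
theorem stmt_2 {n : ℕ} (f : MvPolynomial (Fin n) ℂ) (hf : IsStable f) :
    IsStable (MAP f) := by
  rw [MAP_eq_foldr]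
  exact foldr_stable _ f hf
end

section
/- For every d ≥ 1, the polynomial ∑_{σ ∈ S_d} ∏_{k=1}^d (1 - x_k y_{σ(k)}) in the 2d variables x_1,...,x_d, y_1,...,y_d is stable. -/
open MvPolynomial Finset

section StableAux

open Polynomial Complex

lemma disk_iff (h : ℝ) (hh : 0 < h) (w : ℂ) :
    ‖(2*h + Complex.I * w)‖ ≤ ‖w‖ ↔ h ≤ w.im := by
  have e1 : Complex.normSq (2*h + Complex.I * w) = (2*h - w.im)^2 + w.re^2 := by
    simp [Complex.normSq_apply]; ring
  have e2 : Complex.normSq w = w.re^2 + w.im^2 := by simp [Complex.normSq_apply]; ring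
  constructor
  · intro hle
    have h2 := pow_le_pow_left₀ (norm_nonneg _) hle 2
    rw [Complex.sq_norm, Complex.sq_norm, e1, e2] at h2
    nlinarith
  · intro him
    have h2 : Complex.normSq (2*h + Complex.I * w) ≤ Complex.normSq w := by
      rw [e1, e2]; nlinarith
    have h3 := Real.sqrt_le_sqrt h2
    rwa [Complex.norm_def, Complex.norm_def]

lemma disk_est : ∀ (m : ℕ) (g : Polynomial ℂ), g ≠ 0 → g.natDegree = m →
    (∀ r : ℂ, g.IsRoot r → r.im ≤ 0) → ∀ s : ℂ, 0 < s.im →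
    g.eval s ≠ 0 ∧
    ‖(2*s.im * g.derivative.eval s + Complex.I * m * g.eval s)‖
      ≤ m * ‖(g.eval s)‖ := by
  intro m
  induction m with
  | zero =>
    intro g hg hdeg hroots s hs
    have hgC : g = Polynomial.C (g.coeff 0) := Polynomial.eq_C_of_natDegree_eq_zero hdeg
    have hc0 : g.coeff 0 ≠ 0 := fun h => hg (by rw [hgC, h, map_zero])
    constructor
    · rw [hgC]; simpa using hc0
    · rw [hgC]; simp
  | succ m ih =>
    intro g hg hdeg hroots s hs
    -- g has a root r
    obtain ⟨r, hr⟩ : ∃ r, g.IsRoot r := by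
      apply Complex.exists_root
      rw [Polynomial.degree_eq_natDegree hg, hdeg]
      exact_mod_cast Nat.succ_pos m
    obtain ⟨q, hq⟩ : (Polynomial.X - Polynomial.C r) ∣ g := Polynomial.dvd_iff_isRoot.2 hr
    have hqne : q ≠ 0 := fun h => hg (by rw [hq, h, mul_zero])
    have hdq : q.natDegree = m := by
      have := Polynomial.natDegree_mul (Polynomial.X_sub_C_ne_zero r) hqne
      rw [← hq, hdeg, Polynomial.natDegree_X_sub_C] at this
      omega
    have hqr : ∀ ρ : ℂ, q.IsRoot ρ → ρ.im ≤ 0 := by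
      intro ρ hρ
      exact hroots ρ (by rw [hq]; simp [Polynomial.IsRoot, hρ.eq_zero])
    have hrim : r.im ≤ 0 := hroots r hr
    obtain ⟨hqs, hqe⟩ := ih q hqne hdq hqr s hs
    have hsr : s - r ≠ 0 := by
      intro h0
      have : s.im - r.im = 0 := by rw [← Complex.sub_im, h0]; simp
      linarith
    constructor
    · rw [hq]; simp only [Polynomial.eval_mul, Polynomial.eval_sub, Polynomial.eval_X,
        Polynomial.eval_C]
      exact mul_ne_zero hsr hqs
    · have hder : g.derivative = q + (Polynomial.X - Polynomial.C r) * q.derivative := by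
        rw [hq]; rw [Polynomial.derivative_mul]; simp [mul_comm]
      rw [hder, hq]
      simp only [Polynomial.eval_add, Polynomial.eval_mul, Polynomial.eval_sub,
        Polynomial.eval_X, Polynomial.eval_C]
      have key : 2*(s.im:ℂ) * (q.eval s + (s - r) * q.derivative.eval s)
          + Complex.I * (m+1:ℕ) * ((s - r) * q.eval s)
          = (2*(s.im:ℂ) + Complex.I * (s - r)) * q.eval s
            + (s - r) * (2*(s.im:ℂ) * q.derivative.eval s + Complex.I * m * q.eval s) := by
        push_cast; ring
      rw [key]
      refine le_trans (norm_add_le _ _) ?_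
      rw [norm_mul, norm_mul]
      have h1 : ‖(2*(s.im:ℂ) + Complex.I * (s - r))‖ ≤ ‖(s - r)‖ := by
        have h2 := (disk_iff s.im hs (s - r)).2 (by simp [Complex.sub_im]; linarith)
        convert h2 using 3
      calc ‖(2*(s.im:ℂ) + Complex.I * (s-r))‖ * ‖(q.eval s)‖
            + ‖(s - r)‖ * ‖(2*(s.im:ℂ) * q.derivative.eval s + Complex.I * m * q.eval s)‖
          ≤ ‖(s-r)‖ * ‖(q.eval s)‖
            + ‖(s - r)‖ * (m * ‖(q.eval s)‖) := by
            refine add_le_add (mul_le_mul_of_nonneg_right h1 (norm_nonneg _)) ?_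
            exact mul_le_mul_of_nonneg_left hqe (norm_nonneg _)
        _ = (m+1:ℕ) * ‖((s-r) * q.eval s)‖ := by
            rw [norm_mul]; push_cast; ring

lemma laguerre (n : ℕ) (hn : 1 ≤ n) (g : Polynomial ℂ) (hg : g ≠ 0)
    (hdeg : g.natDegree ≤ n) (hroots : ∀ r : ℂ, g.IsRoot r → r.im ≤ 0)
    (s t : ℂ) (hs : 0 < s.im) (ht : 0 < t.im) :
    (n : ℂ) * g.eval s + (t - s) * g.derivative.eval s ≠ 0 := by
  intro heq
  obtain ⟨hgs, hest⟩ := disk_est g.natDegree g hg rfl hroots s hs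
  set m := g.natDegree with hm
  -- pad the disk estimate from m to n
  have hpad : ‖(2*s.im * g.derivative.eval s + Complex.I * n * g.eval s)‖
      ≤ n * ‖(g.eval s)‖ := by
    have : (2*(s.im:ℂ) * g.derivative.eval s + Complex.I * n * g.eval s)
        = (2*(s.im:ℂ) * g.derivative.eval s + Complex.I * m * g.eval s)
          + Complex.I * ((n:ℂ) - m) * g.eval s := by ring
    rw [this]
    refine le_trans (norm_add_le _ _) ?_
    have hmn' : (m:ℝ) ≤ n := by exact_mod_cast hdeg
    have habs : ‖(Complex.I * ((n:ℂ) - m) * g.eval s)‖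
        = ((n:ℝ) - m) * ‖(g.eval s)‖ := by
      have hc : ((n:ℂ) - m) = (((n:ℝ) - m : ℝ) : ℂ) := by push_cast; ring
      rw [norm_mul, norm_mul, hc, Complex.norm_I, one_mul, Complex.norm_real, Real.norm_eq_abs,
        _root_.abs_of_nonneg (by linarith : (0:ℝ) ≤ (n:ℝ) - m)]
    rw [habs]
    have hmn : (m:ℝ) ≤ n := by exact_mod_cast hdeg
    nlinarith [norm_nonneg (g.eval s)]
  -- use the equation
  have hgd : (t - s) * g.derivative.eval s = -(n:ℂ) * g.eval s := by linear_combination heq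
  -- multiply hpad by |t - s|
  have h2 : ‖(t - s)‖ * ‖(2*s.im * g.derivative.eval s + Complex.I * n * g.eval s)‖
      ≤ ‖(t-s)‖ * (n * ‖(g.eval s)‖) :=
    mul_le_mul_of_nonneg_left hpad (norm_nonneg _)
  rw [← norm_mul] at h2
  have h3 : (t - s) * (2*(s.im:ℂ) * g.derivative.eval s + Complex.I * n * g.eval s)
      = -((n:ℂ) * g.eval s) * (2*(s.im:ℂ) + Complex.I * (s - t)) := by
    have : (t-s) * (2*(s.im:ℂ) * g.derivative.eval s) = 2*(s.im:ℂ) * (-(n:ℂ) * g.eval s) := by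
      linear_combination 2*(s.im:ℂ) * hgd
    linear_combination this
  rw [h3, norm_mul, norm_neg] at h2
  have hne : ‖((n:ℂ) * g.eval s)‖ > 0 := by
    rw [norm_mul]
    apply mul_pos
    · simp only [map_natCast, Complex.norm_natCast]
      exact_mod_cast Nat.pos_of_ne_zero (by omega)
    · exact (norm_pos_iff).2 hgs
  have h4 : ‖(2*(s.im:ℂ) + Complex.I * (s - t))‖ ≤ ‖(s - t)‖ := by
    have := h2
    rw [mul_comm (‖((n:ℂ) * g.eval s)‖)] at this
    have habs2 : ‖(t - s)‖ * (n * ‖(g.eval s)‖) = ‖(s - t)‖ * ‖((n:ℂ)*g.eval s)‖ := by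
      rw [norm_mul]
      rw [show ‖(t - s)‖ = ‖(s - t)‖ by rw [← neg_sub s t, norm_neg]]
      simp only [map_natCast, Complex.norm_natCast]
    rw [habs2] at this
    exact le_of_mul_le_mul_right this hne
  have h5 : s.im ≤ (s - t).im := by
    exact (disk_iff s.im hs (s - t)).1 (by convert h4 using 3)
  rw [Complex.sub_im] at h5
  linarith

lemma esymm_zero' (s : Multiset ℂ) : s.esymm 0 = 1 := by
  simp [Multiset.esymm]

lemma esymm_cons (a : ℂ) (s : Multiset ℂ) (j : ℕ) :
    (a ::ₘ s).esymm (j+1) = s.esymm (j+1) + a * s.esymm j := by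
  rw [Multiset.esymm, Multiset.powersetCard_cons, Multiset.map_add, Multiset.sum_add,
    Multiset.map_map, Multiset.esymm]
  congr 1
  rw [Multiset.esymm]
  rw [show (Multiset.map (Multiset.prod ∘ Multiset.cons a) (Multiset.powersetCard j s))
      = Multiset.map (fun t => a * t.prod) (Multiset.powersetCard j s) from
    Multiset.map_congr rfl (fun t _ => by simp [Multiset.prod_cons])]
  rw [← Multiset.sum_map_mul_left]

lemma esymm_eq_zero (s : Multiset ℂ) (j : ℕ) (h : Multiset.card s < j) : s.esymm j = 0 := by
  rw [Multiset.esymm, Multiset.powersetCard_eq_empty j h]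
  simp

/-- generating identity : `∑ esymm*u^j = ∏ (1 + x u)` -/
lemma esymm_gen (s : Multiset ℂ) (u : ℂ) :
    ∑ j ∈ Finset.range (Multiset.card s + 1), s.esymm j * u ^ j
      = (s.map (fun x => 1 + x * u)).prod := by
  induction s using Multiset.induction with
  | empty => simp [esymm_zero']
  | cons a s ih =>
    rw [Multiset.map_cons, Multiset.prod_cons, ← ih]
    rw [Multiset.card_cons]
    rw [Finset.sum_range_succ']
    simp only [esymm_cons]
    rw [show ∑ j ∈ Finset.range (Multiset.card s + 1),
          (s.esymm (j+1) + a * s.esymm j) * u ^ (j+1)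
        = ∑ j ∈ Finset.range (Multiset.card s + 1), s.esymm (j+1) * u^(j+1)
          + a * u * ∑ j ∈ Finset.range (Multiset.card s + 1), s.esymm j * u^j from by
      rw [Finset.mul_sum, ← Finset.sum_add_distrib]
      exact Finset.sum_congr rfl (fun j _ => by ring)]
    have hz : s.esymm (Multiset.card s + 1) = 0 := esymm_eq_zero _ _ (by omega)
    rw [Finset.sum_range_succ, hz]
    rw [esymm_zero']
    have : ∑ j ∈ Finset.range (Multiset.card s + 1), s.esymm j * u ^ j
        = 1 + ∑ j ∈ Finset.range (Multiset.card s), s.esymm (j+1) * u^(j+1) := by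
      rw [Finset.sum_range_succ']
      rw [esymm_zero']; ring
    rw [this]; ring

noncomputable def gp (n : ℕ) (c : ℕ → ℂ) : Polynomial ℂ :=
  ∑ j ∈ Finset.range (n+1), Polynomial.C (c j * (n.choose j : ℂ)) * Polynomial.X ^ j

lemma gp_eval (n : ℕ) (c : ℕ → ℂ) (w : ℂ) :
    (gp n c).eval w = ∑ j ∈ Finset.range (n+1), c j * (n.choose j : ℂ) * w ^ j := by
  simp [gp, Polynomial.eval_finset_sum]

lemma gp_deriv_eval (n : ℕ) (c : ℕ → ℂ) (w : ℂ) :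
    (gp n c).derivative.eval w
      = ∑ j ∈ Finset.range (n+1), c j * (n.choose j : ℂ) * j * w ^ (j-1) := by
  rw [gp, Polynomial.derivative_sum, Polynomial.eval_finset_sum]
  refine Finset.sum_congr rfl (fun j _ => ?_)
  rw [Polynomial.derivative_C_mul, Polynomial.derivative_X_pow]
  simp; ring

lemma gp_natDegree_le (n : ℕ) (c : ℕ → ℂ) : (gp n c).natDegree ≤ n := by
  refine Polynomial.natDegree_sum_le_of_forall_le _ _ (fun j hj => ?_)
  refine le_trans (Polynomial.natDegree_C_mul_le _ _) ?_
  rw [Polynomial.natDegree_X_pow]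
  exact Nat.lt_succ_iff.1 (Finset.mem_range.1 hj)

lemma lemmaA (n : ℕ) (c : ℕ → ℂ) (w : ℂ) :
    ∑ j ∈ Finset.range (n+2), c j * ((n+1).choose j : ℂ) * w ^ j
      = ∑ j ∈ Finset.range (n+1), c j * (n.choose j : ℂ) * w ^ j
        + ∑ j ∈ Finset.range (n+1), c (j+1) * (n.choose j : ℂ) * w ^ (j+1) := by
  rw [Finset.sum_range_succ' (fun j => c j * ((n+1).choose j : ℂ) * w ^ j) (n+1)]
  have step : ∀ j, c (j+1) * ((n+1).choose (j+1) : ℂ) * w ^ (j+1)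
      = c (j+1) * (n.choose j : ℂ) * w ^ (j+1) + c (j+1) * (n.choose (j+1) : ℂ) * w ^ (j+1) := by
    intro j
    rw [Nat.choose_succ_succ]
    push_cast
    ring
  rw [Finset.sum_congr rfl (fun j _ => step j), Finset.sum_add_distrib]
  have glue : c 0 * ((n+1).choose 0 : ℂ) * w ^ 0
        + ∑ j ∈ Finset.range (n+1), c (j+1) * (n.choose (j+1) : ℂ) * w ^ (j+1)
      = ∑ j ∈ Finset.range (n+1), c j * (n.choose j : ℂ) * w ^ j := by
    rw [Finset.sum_range_succ, Nat.choose_succ_self]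
    rw [Finset.sum_range_succ' (fun j => c j * (n.choose j : ℂ) * w ^ j) n]
    simp
    ring
  linear_combination glue

lemma lemmaB (n : ℕ) (c : ℕ → ℂ) (w : ℂ) :
    ∑ j ∈ Finset.range (n+2), c j * ((n+1).choose j : ℂ) * j * w ^ (j-1)
      = ((n+1 : ℕ) : ℂ) * ∑ j ∈ Finset.range (n+1), c (j+1) * (n.choose j : ℂ) * w ^ j := by
  rw [Finset.sum_range_succ' (fun j => c j * ((n+1).choose j : ℂ) * j * w ^ (j-1)) (n+1)]
  rw [Finset.mul_sum]
  have step : ∀ j, c (j+1) * ((n+1).choose (j+1) : ℂ) * ((j+1 : ℕ) : ℂ) * w ^ ((j+1)-1)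
      = ((n+1:ℕ) : ℂ) * (c (j+1) * (n.choose j : ℂ) * w ^ j) := by
    intro j
    have h : (n+1) * n.choose j = (n+1).choose (j+1) * (j+1) := Nat.add_one_mul_choose_eq n j
    have hc := congrArg (fun k : ℕ => (k : ℂ))  h
    push_cast at hc ⊢
    linear_combination (-(c (j+1) * w ^ j)) * hc
  rw [Finset.sum_congr rfl (fun j _ => by exact_mod_cast step j)]
  simp

lemma gp_rec (n : ℕ) (c : ℕ → ℂ) (a w : ℂ) :
    ((n+1 : ℕ) : ℂ) * (gp n (fun j => c j + a * c (j+1))).eval w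
      = ((n+1:ℕ) : ℂ) * (gp (n+1) c).eval w + (a - w) * ((gp (n+1) c).derivative.eval w) := by
  rw [gp_eval, gp_eval, gp_deriv_eval, lemmaA n c w, lemmaB n c w]
  set A := ∑ j ∈ Finset.range (n+1), c j * (n.choose j : ℂ) * w ^ j with hA
  set B' := ∑ j ∈ Finset.range (n+1), c (j+1) * (n.choose j : ℂ) * w ^ j with hB
  have hBw : ∑ j ∈ Finset.range (n+1), c (j+1) * (n.choose j : ℂ) * w ^ (j+1) = w * B' := by
    rw [hB, Finset.mul_sum]
    exact Finset.sum_congr rfl (fun j _ => by ring)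
  have hL : ∑ j ∈ Finset.range (n+1), (c j + a * c (j+1)) * (n.choose j : ℂ) * w ^ j
      = A + a * B' := by
    rw [hA, hB, Finset.mul_sum, ← Finset.sum_add_distrib]
    exact Finset.sum_congr rfl (fun j _ => by ring)
  rw [hBw, hL]
  ring

/-- Grace–Walsh–Szegő for the upper half plane, coefficient form. -/
lemma gws : ∀ (n : ℕ) (c : ℕ → ℂ) (s : Multiset ℂ), Multiset.card s = n →
    (∀ z ∈ s, 0 < z.im) →
    (∑ j ∈ Finset.range (n+1), c j * s.esymm j) = 0 →
    ∃ ζ : ℂ, 0 < ζ.im ∧ (gp n c).eval ζ = 0 := by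
  intro n
  induction n with
  | zero =>
    intro c s hcard _ hsum
    refine ⟨Complex.I, by simp, ?_⟩
    rw [gp_eval]
    simpa [Multiset.card_eq_zero.1 hcard, Multiset.esymm, Multiset.powersetCard_zero_left]
      using hsum
  | succ n ih =>
    intro c s hcard hpos hsum
    obtain ⟨a, ha⟩ := Multiset.exists_mem_of_ne_zero
      (fun h0 => by simp [h0] at hcard : s ≠ 0)
    obtain ⟨t, rfl⟩ := Multiset.exists_cons_of_mem ha
    have ha' : 0 < a.im := hpos a (Multiset.mem_cons_self a t)
    have htpos : ∀ z ∈ t, 0 < z.im := fun z hz => hpos z (Multiset.mem_cons_of_mem hz)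
    have htcard : Multiset.card t = n := by
      have := hcard; rw [Multiset.card_cons] at this; omega
    set c' : ℕ → ℂ := fun j => c j + a * c (j+1) with hc'
    have e1 : ∑ j ∈ Finset.range (n+2), c j * (a ::ₘ t).esymm j
        = (∑ j ∈ Finset.range (n+1), c (j+1) * (t.esymm (j+1) + a * t.esymm j))
          + c 0 * (a ::ₘ t).esymm 0 := by
      rw [Finset.sum_range_succ' (fun j => c j * (a ::ₘ t).esymm j) (n+1)]
      exact congrArg (· + _) (Finset.sum_congr rfl fun j _ => by rw [esymm_cons])
    have split : ∑ j ∈ Finset.range (n+1), c (j+1) * (t.esymm (j+1) + a * t.esymm j)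
        = ∑ j ∈ Finset.range (n+1), c (j+1) * t.esymm (j+1)
          + ∑ j ∈ Finset.range (n+1), a * c (j+1) * t.esymm j := by
      rw [← Finset.sum_add_distrib]; exact Finset.sum_congr rfl fun j _ => by ring
    have h3 : ∑ j ∈ Finset.range (n+1), c (j+1) * t.esymm (j+1) + c 0
        = ∑ j ∈ Finset.range (n+1), c j * t.esymm j := by
      rw [Finset.sum_range_succ, esymm_eq_zero t (n+1) (by omega),
        Finset.sum_range_succ' (fun j => c j * t.esymm j) n, esymm_zero']
      ring
    have expand : ∑ j ∈ Finset.range (n+1), c' j * t.esymm j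
        = ∑ j ∈ Finset.range (n+1), c j * t.esymm j
          + ∑ j ∈ Finset.range (n+1), a * c (j+1) * t.esymm j := by
      rw [← Finset.sum_add_distrib]
      exact Finset.sum_congr rfl fun j _ => by rw [hc']; ring
    have hsum' : ∑ j ∈ Finset.range (n+1), c' j * t.esymm j = 0 := by
      have h0 : (a ::ₘ t).esymm 0 = 1 := esymm_zero' _
      have hsum2 : ∑ j ∈ Finset.range (n+2), c j * (a ::ₘ t).esymm j = 0 := hsum
      rw [expand]
      linear_combination hsum2 - e1 - split - (c 0) * h0 - h3
    obtain ⟨η, hη, hηe⟩ := ih c' t htcard htpos hsum'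
    by_cases hg : gp (n+1) c = 0
    · exact ⟨Complex.I, by simp, by rw [hg]; simp⟩
    · by_contra hno
      push_neg at hno
      have hroots : ∀ r : ℂ, (gp (n+1) c).IsRoot r → r.im ≤ 0 := by
        intro r hr
        by_contra hlt
        push_neg at hlt
        exact hno r hlt hr
      have hne := laguerre (n+1) (by omega) (gp (n+1) c) hg (gp_natDegree_le _ _)
        hroots η a hη ha'
      apply hne
      have := gp_rec n c a η
      rw [hηe, mul_zero] at this
      push_cast at this ⊢
      linear_combination -this

variable {d : ℕ}

noncomputable def permOfPair (S T : Finset (Fin d))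
    (f : {a : Fin d // a ∈ S} ≃ {a : Fin d // a ∈ T})
    (g : {a : Fin d // a ∉ S} ≃ {a : Fin d // a ∉ T}) : Equiv.Perm (Fin d) :=
  ((Equiv.sumCompl (· ∈ S)).symm.trans ((f.sumCongr g).trans (Equiv.sumCompl (· ∈ T))))

lemma permOfPair_pos (S T : Finset (Fin d)) (f) (g) (a : Fin d) (ha : a ∈ S) :
    permOfPair S T f g a = (f ⟨a, ha⟩ : Fin d) := by
  simp [permOfPair, Equiv.sumCompl_symm_apply_of_pos (p := (· ∈ S)) ha]

lemma permOfPair_neg (S T : Finset (Fin d)) (f) (g) (a : Fin d) (ha : a ∉ S) :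
    permOfPair S T f g a = (g ⟨a, ha⟩ : Fin d) := by
  simp [permOfPair, Equiv.sumCompl_symm_apply_of_neg (p := (· ∈ S)) ha]

lemma permOfPair_image (S T : Finset (Fin d)) (hST : S.card = T.card) (f) (g) :
    S.image (permOfPair S T f g) = T := by
  apply Finset.eq_of_subset_of_card_le
  · intro b hb
    obtain ⟨a, ha, rfl⟩ := Finset.mem_image.1 hb
    rw [permOfPair_pos S T f g a ha]
    exact (f ⟨a, ha⟩).2
  · rw [Finset.card_image_of_injective _ (permOfPair S T f g).injective, hST]

lemma count_perm (j : ℕ) (S T : Finset (Fin d)) (hS : S.card = j) (hT : T.card = j) :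
    (Finset.univ.filter (fun σ : Equiv.Perm (Fin d) => S.image σ = T)).card
      = j.factorial * (d - j).factorial := by
  classical
  have hST : S.card = T.card := by rw [hS, hT]
  have cardsub : ∀ (U : Finset (Fin d)), Fintype.card {a : Fin d // a ∈ U} = U.card := by
    intro U; exact Fintype.card_coe U
  -- the bijection
  have hbij : Function.Bijective
      (fun p : ({a : Fin d // a ∈ S} ≃ {a : Fin d // a ∈ T})
            × ({a : Fin d // a ∉ S} ≃ {a : Fin d // a ∉ T}) =>
        (⟨permOfPair S T p.1 p.2, permOfPair_image S T hST p.1 p.2⟩ :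
          {σ : Equiv.Perm (Fin d) // S.image σ = T})) := by
    constructor
    · rintro ⟨f, g⟩ ⟨f', g'⟩ hEq
      have hEq' : permOfPair S T f g = permOfPair S T f' g' := congrArg Subtype.val hEq
      have hf : f = f' := by
        ext a
        have := DFunLike.congr_fun hEq' (a.1 : Fin d)
        rw [permOfPair_pos S T f g a.1 a.2, permOfPair_pos S T f' g' a.1 a.2] at this
        exact congrArg Fin.val (by simpa using this)
      have hg : g = g' := by
        ext a
        have := DFunLike.congr_fun hEq' (a.1 : Fin d)
        rw [permOfPair_neg S T f g a.1 a.2, permOfPair_neg S T f' g' a.1 a.2] at this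
        exact congrArg Fin.val (by simpa using this)
      rw [Prod.mk.injEq]
      exact ⟨hf, hg⟩
    · rintro ⟨σ, hσ⟩
      have hmemT : ∀ a : Fin d, a ∈ S → σ a ∈ T := by
        intro a ha
        rw [← hσ]; exact Finset.mem_image_of_mem σ ha
      have hmemT' : ∀ a : Fin d, a ∉ S → σ a ∉ T := by
        intro a ha hmem
        rw [← hσ] at hmem
        obtain ⟨b, hb, heq⟩ := Finset.mem_image.1 hmem
        exact ha (by rwa [σ.injective heq] at hb)
      have cardA : Fintype.card {a : Fin d // a ∈ S} = Fintype.card {a : Fin d // a ∈ T} := by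
        rw [cardsub, cardsub]; exact hST
      have cardB : Fintype.card {a : Fin d // a ∉ S} = Fintype.card {a : Fin d // a ∉ T} := by
        rw [Fintype.card_subtype_compl, Fintype.card_subtype_compl, cardA]
      have hinjf : Function.Injective
          (fun a : {a : Fin d // a ∈ S} => (⟨σ a, hmemT a.1 a.2⟩ : {a : Fin d // a ∈ T})) := by
        intro u v huv
        have : σ u.1 = σ v.1 := congrArg Subtype.val huv
        exact Subtype.ext (σ.injective this)
      have hinjg : Function.Injective
          (fun a : {a : Fin d // a ∉ S} => (⟨σ a, hmemT' a.1 a.2⟩ : {a : Fin d // a ∉ T})) := by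
        intro u v huv
        have : σ u.1 = σ v.1 := congrArg Subtype.val huv
        exact Subtype.ext (σ.injective this)
      have hbf := (Fintype.bijective_iff_injective_and_card _).2 ⟨hinjf, cardA⟩
      have hbg := (Fintype.bijective_iff_injective_and_card _).2 ⟨hinjg, cardB⟩
      refine ⟨⟨Equiv.ofBijective _ hbf, Equiv.ofBijective _ hbg⟩, ?_⟩
      apply Subtype.ext
      apply Equiv.ext
      intro a
      by_cases ha : a ∈ S
      · rw [permOfPair_pos S T _ _ a ha]; rfl
      · rw [permOfPair_neg S T _ _ a ha]; rfl
  have hcard : (Finset.univ.filter (fun σ : Equiv.Perm (Fin d) => S.image σ = T)).card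
      = Fintype.card {σ : Equiv.Perm (Fin d) // S.image σ = T} := by
    rw [Fintype.card_subtype]
  rw [hcard, ← Fintype.card_of_bijective hbij]
  rw [Fintype.card_prod]
  have e1 : {a : Fin d // a ∈ S} ≃ {a : Fin d // a ∈ T} := by
    apply Fintype.equivOfCardEq
    rw [cardsub, cardsub, hS, hT]
  have e2 : {a : Fin d // a ∉ S} ≃ {a : Fin d // a ∉ T} := by
    apply Fintype.equivOfCardEq
    rw [Fintype.card_subtype_compl, Fintype.card_subtype_compl, cardsub, cardsub, hS, hT]
  rw [Fintype.card_equiv e1, Fintype.card_equiv e2]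
  congr 1
  · rw [cardsub, hS]
  · rw [Fintype.card_subtype_compl, cardsub, hS, Fintype.card_fin]

variable {d : ℕ}


lemma sum_perm_prod (y : Fin d → ℂ) (S : Finset (Fin d)) :
    ∑ σ : Equiv.Perm (Fin d), ∏ k ∈ S, y (σ k)
      = (S.card.factorial * (d - S.card).factorial : ℕ)
        * ∑ T ∈ Finset.powersetCard S.card Finset.univ, ∏ k ∈ T, y k := by
  classical
  have maps : ∀ σ ∈ (Finset.univ : Finset (Equiv.Perm (Fin d))),
      S.image σ ∈ Finset.powersetCard S.card Finset.univ := by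
    intro σ _
    rw [Finset.mem_powersetCard]
    exact ⟨Finset.subset_univ _, Finset.card_image_of_injective _ σ.injective⟩
  rw [← Finset.sum_fiberwise_of_maps_to maps (fun σ => ∏ k ∈ S, y (σ k))]
  rw [Finset.mul_sum]
  refine Finset.sum_congr rfl (fun T hT => ?_)
  have hTc : T.card = S.card := (Finset.mem_powersetCard.1 hT).2
  have inner : ∀ σ ∈ Finset.univ.filter (fun σ : Equiv.Perm (Fin d) => S.image σ = T),
      (∏ k ∈ S, y (σ k)) = ∏ k ∈ T, y k := by
    intro σ hσ
    have hσ' : S.image σ = T := (Finset.mem_filter.1 hσ).2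
    rw [← hσ']
    rw [Finset.prod_image (fun a _ b _ h => σ.injective h)]
  rw [Finset.sum_congr rfl inner, Finset.sum_const,
    count_perm S.card S T rfl hTc, nsmul_eq_mul]

lemma perm_expand (x y : Fin d → ℂ) :
    ∑ σ : Equiv.Perm (Fin d), ∏ k : Fin d, (1 - x k * y (σ k))
      = ∑ j ∈ Finset.range (d+1),
          ((-1:ℂ)^j * j.factorial * (d-j).factorial
            * (∑ S ∈ Finset.powersetCard j Finset.univ, ∏ k ∈ S, x k))
          * (∑ T ∈ Finset.powersetCard j Finset.univ, ∏ k ∈ T, y k) := by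
  classical
  have step1 : ∀ σ : Equiv.Perm (Fin d),
      (∏ k : Fin d, (1 - x k * y (σ k)))
        = ∑ S ∈ (Finset.univ : Finset (Fin d)).powerset,
            ∏ k ∈ S, (-(x k * y (σ k))) := by
    intro σ
    have : (∏ k : Fin d, (1 - x k * y (σ k)))
        = ∏ k : Fin d, ((fun k => -(x k * y (σ k))) k + (fun _ => (1:ℂ)) k) := by
      refine Finset.prod_congr rfl (fun k _ => by ring)
    rw [this, Finset.prod_add]
    exact Finset.sum_congr rfl (fun S _ => by simp)
  rw [Finset.sum_congr rfl (fun σ _ => step1 σ), Finset.sum_comm]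
  have hcards : (Finset.univ : Finset (Fin d)).card = d := by
    rw [Finset.card_univ, Fintype.card_fin]
  rw [Finset.powerset_card_biUnion,
    Finset.sum_biUnion (fun i _ j _ hij => Finset.pairwise_disjoint_powersetCard _ hij), hcards]
  refine Finset.sum_congr rfl (fun j hj => ?_)
  have inner : ∀ S ∈ Finset.powersetCard j (Finset.univ : Finset (Fin d)),
      (∑ σ : Equiv.Perm (Fin d), ∏ k ∈ S, (-(x k * y (σ k))))
        = ((-1:ℂ)^j * (∏ k ∈ S, x k) * (j.factorial * (d-j).factorial : ℕ))
            * ∑ T ∈ Finset.powersetCard j Finset.univ, ∏ k ∈ T, y k := by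
    intro S hS
    have hSc : S.card = j := (Finset.mem_powersetCard.1 hS).2
    have hsplit : ∀ σ : Equiv.Perm (Fin d),
        (∏ k ∈ S, (-(x k * y (σ k))))
          = ((-1:ℂ)^j * ∏ k ∈ S, x k) * ∏ k ∈ S, y (σ k) := by
      intro σ
      rw [show (∏ k ∈ S, (-(x k * y (σ k))))
          = ∏ k ∈ S, (((-1:ℂ) * x k) * y (σ k)) from
        Finset.prod_congr rfl (fun k _ => by ring)]
      rw [Finset.prod_mul_distrib, Finset.prod_mul_distrib, Finset.prod_const, hSc]
    rw [Finset.sum_congr rfl (fun σ _ => hsplit σ), ← Finset.mul_sum]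
    rw [sum_perm_prod y S, hSc]
    ring
  rw [Finset.sum_congr rfl inner, ← Finset.sum_mul]
  congr 1
  rw [Finset.mul_sum]
  refine Finset.sum_congr rfl (fun S _ => ?_)
  push_cast
  ring
end StableAux

/-- For every `d ≥ 1`, the polynomial `∑_{σ ∈ S_d} ∏_{k=1}^d (1 - x_k y_{σ(k)})`
in the `2d` variables `x_1,…,x_d,y_1,…,y_d` is stable: it does not vanish when all
variables lie in the open upper half-plane. Here the `x`-variables are indexed by
`Sum.inl` and the `y`-variables by `Sum.inr`. -/
theorem stmt_4 (d : ℕ) (hd : 1 ≤ d) :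
    ∀ z : Fin d ⊕ Fin d → ℂ, (∀ i, 0 < (z i).im) →
      MvPolynomial.eval z
        (∑ σ : Equiv.Perm (Fin d),
          ∏ k : Fin d, (1 - X (Sum.inl k) * X (Sum.inr (σ k)) :
            MvPolynomial (Fin d ⊕ Fin d) ℂ)) ≠ 0 := by
  intro z hz heval
  set x : Fin d → ℂ := fun k => z (Sum.inl k) with hx
  set y : Fin d → ℂ := fun k => z (Sum.inr k) with hy
  have hA : MvPolynomial.eval z
        (∑ σ : Equiv.Perm (Fin d),
          ∏ k : Fin d, (1 - X (Sum.inl k) * X (Sum.inr (σ k)) :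
            MvPolynomial (Fin d ⊕ Fin d) ℂ))
      = ∑ σ : Equiv.Perm (Fin d), ∏ k : Fin d, (1 - x k * y (σ k)) := by
    rw [map_sum]
    refine Finset.sum_congr rfl (fun σ _ => ?_)
    rw [map_prod]
    refine Finset.prod_congr rfl (fun k _ => ?_)
    simp [hx, hy]
  rw [hA, perm_expand x y] at heval
  set c : ℕ → ℂ := fun j => (-1:ℂ)^j * j.factorial * (d-j).factorial
      * (∑ S ∈ Finset.powersetCard j Finset.univ, ∏ k ∈ S, x k) with hc
  set Y : Multiset ℂ := Multiset.map y Finset.univ.val with hY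
  have hYcard : Multiset.card Y = d := by
    rw [hY, Multiset.card_map]
    exact Finset.card_fin d
  have hYpos : ∀ w ∈ Y, 0 < w.im := by
    intro w hw
    obtain ⟨k, _, rfl⟩ := Multiset.mem_map.1 hw
    exact hz (Sum.inr k)
  have hbridge : ∀ j, Y.esymm j = ∑ T ∈ Finset.powersetCard j Finset.univ, ∏ k ∈ T, y k :=
    fun j => Finset.esymm_map_val y Finset.univ j
  have hsum : ∑ j ∈ Finset.range (d+1), c j * Y.esymm j = 0 := by
    rw [← heval]
    exact Finset.sum_congr rfl (fun j _ => by rw [hbridge j, hc])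
  obtain ⟨ζ, hζ, hζe⟩ := gws d c Y hYcard hYpos hsum
  -- now compute eval ζ (gp d c)
  set XX : Multiset ℂ := Multiset.map x Finset.univ.val with hXX
  have hXcard : Multiset.card XX = d := by
    rw [hXX, Multiset.card_map]
    exact Finset.card_fin d
  have hxbridge : ∀ j, XX.esymm j = ∑ S ∈ Finset.powersetCard j Finset.univ, ∏ k ∈ S, x k :=
    fun j => Finset.esymm_map_val x Finset.univ j
  have hgpval : (gp d c).eval ζ
      = (d.factorial : ℂ) * ∑ j ∈ Finset.range (d+1), XX.esymm j * (-ζ)^j := by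
    rw [gp_eval, Finset.mul_sum]
    refine Finset.sum_congr rfl (fun j hj => ?_)
    have hjd : j ≤ d := Nat.lt_succ_iff.1 (Finset.mem_range.1 hj)
    have hfac : (d.choose j) * j.factorial * (d - j).factorial = d.factorial :=
      Nat.choose_mul_factorial_mul_factorial hjd
    have hfacC : ((d.choose j : ℕ) : ℂ) * (j.factorial : ℂ) * ((d-j).factorial : ℂ)
        = (d.factorial : ℂ) := by exact_mod_cast congrArg (fun k : ℕ => (k : ℂ)) hfac
    rw [hc, hxbridge j]
    have hpow : (-ζ)^j = (-1:ℂ)^j * ζ^j := by rw [neg_pow]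
    rw [hpow]
    linear_combination ((-1:ℂ)^j * ζ^j
      * (∑ S ∈ Finset.powersetCard j Finset.univ, ∏ k ∈ S, x k)) * hfacC
  have hgen := esymm_gen XX (-ζ)
  rw [hXcard] at hgen
  have hprodne : (Multiset.map (fun t => 1 + t * (-ζ)) XX).prod ≠ 0 := by
    apply Multiset.prod_ne_zero
    intro h0
    obtain ⟨t, ht, h0'⟩ := Multiset.mem_map.1 h0
    obtain ⟨k, _, rfl⟩ := Multiset.mem_map.1 ht
    have htim : 0 < (x k).im := hz (Sum.inl k)
    -- 1 + x k * (-ζ) = 0, i.e. x k * ζ = 1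
    have hmul : x k * ζ = 1 := by linear_combination -h0'
    have hxne : x k ≠ 0 := by
      intro hk0
      rw [hk0] at htim
      simp at htim
    have hζval : ζ = (x k)⁻¹ := by
      field_simp at hmul ⊢
      linear_combination hmul
    have : ζ.im < 0 := by
      rw [hζval, Complex.inv_im]
      apply div_neg_of_neg_of_pos
      · linarith
      · exact Complex.normSq_pos.2 hxne
    linarith
  have hfacne : (d.factorial : ℂ) ≠ 0 := by
    exact_mod_cast Nat.factorial_ne_zero d
  rw [hgpval, hgen] at hζe
  exact (mul_ne_zero hfacne hprodne) hζe
end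

section
/- Grace–Walsh–Szegő theorem: a symmetric multiaffine polynomial f(x_1,...,x_n) ∈ C[x_1,...,x_n] is stable if and only if the univariate polynomial f(x,x,...,x) is stable (equivalently, nonvanishing on the open upper half-plane). -/
section GWSAux
open Polynomial Finset


/-- Cauchy–Schwarz for multisets of nonneg reals -/
lemma ms_sq_sum_le (s : Multiset ℝ) (hs : ∀ a ∈ s, 0 ≤ a) :
    s.sum ^ 2 ≤ (Multiset.card s : ℝ) * (s.map (fun a => a ^ 2)).sum := by
  induction s using Multiset.induction_on with
  | empty => simp
  | cons a t ih =>
    have ha : 0 ≤ a := hs a (Multiset.mem_cons_self a t)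
    have ht : ∀ b ∈ t, 0 ≤ b := fun b hb => hs b (Multiset.mem_cons_of_mem hb)
    have iht := ih ht
    have hT : 0 ≤ t.sum := Multiset.sum_nonneg ht
    have hQ : 0 ≤ (t.map (fun a => a ^ 2)).sum := by
      apply Multiset.sum_nonneg; intro b hb
      obtain ⟨c, _, rfl⟩ := Multiset.mem_map.mp hb; positivity
    simp only [Multiset.sum_cons, Multiset.map_cons, Multiset.card_cons]
    push_cast
    rcases Nat.eq_zero_or_pos (Multiset.card t) with hc0 | hcpos
    · have : t = 0 := Multiset.card_eq_zero.mp hc0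
      subst this; simp
    · have hc1 : (1:ℝ) ≤ (Multiset.card t : ℝ) := by exact_mod_cast hcpos
      nlinarith [sq_nonneg ((Multiset.card t : ℝ) * a - t.sum), iht, hQ, ha, hT,
        mul_nonneg (mul_nonneg ha ha) (sub_nonneg.mpr hc1)]

lemma ms_normSq_sum_le (s : Multiset ℂ) :
    Complex.normSq s.sum ≤ (Multiset.card s : ℝ) * (s.map (fun u => Complex.normSq u)).sum := by
  have h1 : ‖s.sum‖ ≤ (s.map (fun u => ‖u‖)).sum := by
    simpa using norm_multiset_sum_le s
  have h2 := ms_sq_sum_le (s.map (fun u => ‖u‖)) (by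
    intro a ha; obtain ⟨c, _, rfl⟩ := Multiset.mem_map.mp ha; positivity)
  have h3 : Complex.normSq s.sum = (‖s.sum‖) ^ 2 := (Complex.sq_norm _).symm
  have h4 : ((s.map (fun u => ‖u‖)).map (fun a => a ^ 2)).sum
      = (s.map (fun u => Complex.normSq u)).sum := by
    rw [Multiset.map_map]; congr 1; ext u; simp [Complex.sq_norm]
  have h5 : (‖s.sum‖)^2 ≤ ((s.map (fun u => ‖u‖)).sum)^2 := by
    have := norm_nonneg s.sum
    nlinarith
  calc Complex.normSq s.sum = (‖s.sum‖)^2 := h3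
    _ ≤ ((s.map (fun u => ‖u‖)).sum)^2 := h5
    _ ≤ _ := by rw [← h4]; simpa using h2

lemma ms_im_sum (s : Multiset ℂ) : s.sum.im = (s.map Complex.im).sum := by
  induction s using Multiset.induction_on with
  | empty => simp
  | cons a t ih => simp [ih]

lemma ms_sum_nonpos (s : Multiset ℝ) (h : ∀ a ∈ s, a ≤ 0) : s.sum ≤ 0 := by
  induction s using Multiset.induction_on with
  | empty => simp
  | cons a t ih =>
    have := h a (Multiset.mem_cons_self a t)
    have := ih (fun b hb => h b (Multiset.mem_cons_of_mem hb))
    simp only [Multiset.sum_cons]; linarith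

/-- The key Laguerre-type inequality. -/
lemma key_laguerre (s : Multiset ℂ) (N : ℕ) (hN : 1 ≤ N) (hcard : Multiset.card s ≤ N)
    (hroots : ∀ ρ ∈ s, ρ.im ≤ 0) (z x : ℂ) (hz : 0 < z.im) (hx : 0 < x.im) :
    (N : ℂ) + (x - z) * (s.map (fun ρ => (z - ρ)⁻¹)).sum ≠ 0 := by
  intro heq
  set t := s.map (fun ρ => (z - ρ)⁻¹) with ht
  set S := t.sum with hS
  -- pointwise bound: for u ∈ t, z.im * normSq u + u.im ≤ 0
  have hpt : ∀ u ∈ t, z.im * Complex.normSq u + u.im ≤ 0 := by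
    intro u hu
    obtain ⟨ρ, hρ, rfl⟩ := Multiset.mem_map.mp hu
    have him : ρ.im ≤ 0 := hroots ρ hρ
    have hzρ : z - ρ ≠ 0 := by
      intro h0
      have : z = ρ := by linear_combination h0
      rw [this] at hz; linarith
    have hns : Complex.normSq (z - ρ) ≠ 0 := by
      simpa [Complex.normSq_eq_zero] using hzρ
    have hns' : 0 < Complex.normSq (z - ρ) := lt_of_le_of_ne (Complex.normSq_nonneg _) (Ne.symm hns)
    rw [Complex.normSq_inv, Complex.inv_im]
    have : Complex.normSq (z - ρ) = (z-ρ).re^2 + (z-ρ).im^2 := by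
      rw [Complex.normSq_apply]; ring
    have him2 : (z - ρ).im = z.im - ρ.im := by simp
    rw [div_eq_mul_inv, ← mul_comm]
    field_simp
    nlinarith [hns']
  -- aggregated bound
  have hagg : z.im * Complex.normSq S + (N : ℝ) * S.im ≤ 0 := by
    have h1 := ms_normSq_sum_le t
    have h2 : S.im = (t.map Complex.im).sum := ms_im_sum t
    have h3 : (t.map (fun u => z.im * Complex.normSq u + u.im)).sum ≤ 0 := by
      apply ms_sum_nonpos; intro a ha
      obtain ⟨u, hu, rfl⟩ := Multiset.mem_map.mp ha
      exact hpt u hu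
    have h4 : (t.map (fun u => z.im * Complex.normSq u + u.im)).sum
        = z.im * (t.map (fun u => Complex.normSq u)).sum + (t.map Complex.im).sum := by
      induction t using Multiset.induction_on with
      | empty => simp
      | cons a r ih => simp only [Multiset.map_cons, Multiset.sum_cons, ih]; ring
    have hcard' : (Multiset.card t : ℝ) ≤ (N : ℝ) := by
      rw [ht]; simp only [Multiset.card_map]; exact_mod_cast hcard
    have hQnn : 0 ≤ (t.map (fun u => Complex.normSq u)).sum := by
      apply Multiset.sum_nonneg; intro b hb
      obtain ⟨c, _, rfl⟩ := Multiset.mem_map.mp hb; exact Complex.normSq_nonneg _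
    rw [h4] at h3
    have : Complex.normSq S ≤ (N:ℝ) * (t.map (fun u => Complex.normSq u)).sum := by
      calc Complex.normSq S ≤ (Multiset.card t : ℝ) * (t.map (fun u => Complex.normSq u)).sum := h1
        _ ≤ (N:ℝ) * (t.map (fun u => Complex.normSq u)).sum :=
            mul_le_mul_of_nonneg_right hcard' hQnn
    nlinarith [hz, mul_le_mul_of_nonneg_left h3 (le_of_lt (show (0:ℝ) < N by exact_mod_cast hN))]
  -- now derive contradiction
  have hSne : S ≠ 0 := by
    intro h0; rw [h0] at heq; simp at heq; omega
  -- (z - x) * S = N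
  have hzx : (z - x) * S = (N : ℂ) := by linear_combination -heq
  -- multiply by conj S : (z-x) * |S|^2 = N * conj S
  have hcs : (z - x) * (Complex.normSq S : ℂ) = (N : ℂ) * (starRingEnd ℂ) S := by
    have : (Complex.normSq S : ℂ) = S * (starRingEnd ℂ) S := by
      rw [Complex.mul_conj]
    rw [this, ← mul_assoc, hzx]
  have him := congrArg Complex.im hcs
  simp only [Complex.mul_im, Complex.ofReal_re, Complex.ofReal_im, Complex.conj_im,
    Complex.conj_re, Complex.sub_im, Complex.sub_re, Complex.natCast_im, Complex.natCast_re] at him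
  have hSpos : 0 < Complex.normSq S := by
    rcases lt_or_eq_of_le (Complex.normSq_nonneg S) with h | h
    · exact h
    · exact absurd (Complex.normSq_eq_zero.mp h.symm) hSne
  -- him : (z.im - x.im) * normSq S = -(N * S.im)  roughly
  nlinarith [hagg, hSpos, hx, hz]

lemma eval_deriv_prod (s : Multiset ℂ) (z : ℂ) (hz : ∀ ρ ∈ s, z ≠ ρ) :
    eval z (derivative (s.map (fun ρ => X - C ρ)).prod)
      = eval z ((s.map (fun ρ => X - C ρ)).prod) * (s.map (fun ρ => (z - ρ)⁻¹)).sum := by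
  induction s using Multiset.induction_on with
  | empty => simp
  | cons a t ih =>
    have hza : z - a ≠ 0 := sub_ne_zero.mpr (hz a (Multiset.mem_cons_self a t))
    have iht := ih (fun ρ hρ => hz ρ (Multiset.mem_cons_of_mem hρ))
    simp only [Multiset.map_cons, Multiset.prod_cons, Multiset.sum_cons, derivative_mul,
      derivative_sub, derivative_X, derivative_C, sub_zero, one_mul, eval_add, eval_mul,
      eval_sub, eval_X, eval_C, iht]
    field_simp

lemma eval_prod_ne_zero (s : Multiset ℂ) (z : ℂ) (hz : ∀ ρ ∈ s, z ≠ ρ) :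
    eval z ((s.map (fun ρ => X - C ρ)).prod) ≠ 0 := by
  induction s using Multiset.induction_on with
  | empty => simp
  | cons a t ih =>
    simp only [Multiset.map_cons, Multiset.prod_cons, eval_mul, eval_sub, eval_X, eval_C]
    exact mul_ne_zero (sub_ne_zero.mpr (hz a (Multiset.mem_cons_self a t)))
      (ih (fun ρ hρ => hz ρ (Multiset.mem_cons_of_mem hρ)))

/-- Polar-derivative stability (Laguerre). -/
lemma polar_deriv_stable (N : ℕ) (hN : 1 ≤ N) (q : ℂ[X]) (hq0 : q ≠ 0)
    (hqd : q.natDegree ≤ N) (hq : ∀ z : ℂ, 0 < z.im → eval z q ≠ 0)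
    (x : ℂ) (hx : 0 < x.im) (z : ℂ) (hz : 0 < z.im) :
    eval z (C (N : ℂ) * q + (C x - X) * derivative q) ≠ 0 := by
  have hsplit : q = C q.leadingCoeff * (q.roots.map fun a => X - C a).prod :=
    (IsAlgClosed.splits q).eq_prod_roots
  have hcard : Multiset.card q.roots = q.natDegree :=
    splits_iff_card_roots.mp (IsAlgClosed.splits q)
  have hlc : q.leadingCoeff ≠ 0 := leadingCoeff_ne_zero.mpr hq0
  have hroots : ∀ ρ ∈ q.roots, ρ.im ≤ 0 := by
    intro ρ hρ
    by_contra h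
    push_neg at h
    exact hq ρ h ((mem_roots hq0).mp hρ)
  have hzr : ∀ ρ ∈ q.roots, z ≠ ρ := by
    intro ρ hρ h
    have := hroots ρ hρ
    rw [← h] at this; linarith
  have hev : eval z q = q.leadingCoeff * eval z ((q.roots.map fun a => X - C a).prod) := by
    conv_lhs => rw [hsplit]
    simp
  have hder : eval z (derivative q)
      = eval z q * (q.roots.map (fun ρ => (z - ρ)⁻¹)).sum := by
    conv_lhs => rw [hsplit]
    rw [derivative_mul, derivative_C, zero_mul]
    simp only [eval_add, eval_mul, eval_C, zero_add]
    rw [eval_deriv_prod _ _ hzr, hev]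
    ring
  have hqz : eval z q ≠ 0 := hq z hz
  simp only [eval_add, eval_mul, eval_sub, eval_C, eval_X, hder]
  have key := key_laguerre q.roots N hN (hcard ▸ hqd) hroots z x hz hx
  intro habs
  apply key
  have : eval z q * ((N : ℂ) + (x - z) * (q.roots.map (fun ρ => (z - ρ)⁻¹)).sum) = 0 := by
    linear_combination habs
  rcases mul_eq_zero.mp this with h | h
  · exact absurd h hqz
  · exact h

noncomputable def apolarSum (n : ℕ) (p q : ℂ[X]) : ℂ :=
  ∑ ij ∈ Finset.HasAntidiagonal.antidiagonal n,
    (-1:ℂ)^ij.1 * (Nat.factorial ij.1) * (Nat.factorial ij.2) * p.coeff ij.1 * q.coeff ij.2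

lemma neg_one_pow_anti (n : ℕ) (ij : ℕ × ℕ) (h : ij.1 + ij.2 = n) :
    (-1:ℂ)^ij.2 = (-1:ℂ)^n * (-1:ℂ)^ij.1 := by
  have e1 : (-1:ℂ)^ij.1 * (-1:ℂ)^ij.1 = 1 := by rw [← mul_pow]; norm_num
  calc (-1:ℂ)^ij.2 = (-1:ℂ)^ij.2 * ((-1:ℂ)^ij.1 * (-1:ℂ)^ij.1) := by rw [e1, mul_one]
    _ = ((-1:ℂ)^(ij.1+ij.2)) * (-1:ℂ)^ij.1 := by rw [pow_add]; ring
    _ = (-1:ℂ)^n * (-1:ℂ)^ij.1 := by rw [h]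

lemma apolar_swap (n : ℕ) (p q : ℂ[X]) : apolarSum n q p = (-1:ℂ)^n * apolarSum n p q := by
  unfold apolarSum
  rw [Finset.mul_sum]
  have hswap := Finset.Nat.sum_antidiagonal_swap
    (f := fun ij : ℕ × ℕ =>
      (-1:ℂ)^ij.1 * (Nat.factorial ij.1) * (Nat.factorial ij.2) * q.coeff ij.1 * p.coeff ij.2)
    (n := n)
  rw [← hswap]
  apply Finset.sum_congr rfl
  intro ij hij
  have hsum : ij.1 + ij.2 = n := Finset.HasAntidiagonal.mem_antidiagonal.mp hij
  simp only [Prod.fst_swap, Prod.snd_swap]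
  rw [neg_one_pow_anti n ij hsum]
  ring

lemma apolar_transfer (n : ℕ) (P Q : ℂ[X]) (x : ℂ) (hQ : Q.coeff (n+1) = 0) :
    apolarSum (n+1) P ((X - C x) * Q)
      = apolarSum n (C ((n:ℂ)+1) * P + (C x - X) * derivative P) Q := by
  have hcoeffR : ∀ j, ((X - C x) * Q).coeff j = (X*Q).coeff j - x * Q.coeff j := by
    intro j; rw [sub_mul, coeff_sub, coeff_C_mul]
  have hP1 : ∀ i, (C ((n:ℂ)+1) * P + (C x - X) * derivative P).coeff i
      = ((n:ℂ)+1) * P.coeff i + x * ((i:ℂ)+1) * P.coeff (i+1) - (i:ℂ) * P.coeff i := by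
    intro i
    have hXd : (X * derivative P).coeff i = (i:ℂ) * P.coeff i := by
      cases i with
      | zero => simp
      | succ k => rw [coeff_X_mul, coeff_derivative]; push_cast; ring
    rw [coeff_add, coeff_C_mul, sub_mul, coeff_sub, coeff_C_mul, coeff_derivative, hXd]
    push_cast; ring
  unfold apolarSum
  have hL : ∑ ij ∈ Finset.HasAntidiagonal.antidiagonal (n+1),
      (-1:ℂ)^ij.1 * (Nat.factorial ij.1) * (Nat.factorial ij.2) * P.coeff ij.1
        * ((X - C x) * Q).coeff ij.2
      = (∑ ij ∈ Finset.HasAntidiagonal.antidiagonal (n+1),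
          (-1:ℂ)^ij.1 * (Nat.factorial ij.1) * (Nat.factorial ij.2) * P.coeff ij.1
            * (X * Q).coeff ij.2)
        - x * ∑ ij ∈ Finset.HasAntidiagonal.antidiagonal (n+1),
          (-1:ℂ)^ij.1 * (Nat.factorial ij.1) * (Nat.factorial ij.2) * P.coeff ij.1
            * Q.coeff ij.2 := by
    rw [Finset.mul_sum, ← Finset.sum_sub_distrib]
    apply Finset.sum_congr rfl
    intro ij _
    rw [hcoeffR]; ring
  rw [hL]
  have h1 : ∑ ij ∈ Finset.HasAntidiagonal.antidiagonal (n+1),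
      (-1:ℂ)^ij.1 * (Nat.factorial ij.1) * (Nat.factorial ij.2) * P.coeff ij.1 * (X * Q).coeff ij.2
      = (-1:ℂ)^(n+1) * (Nat.factorial (n+1)) * (Nat.factorial 0) * P.coeff (n+1) * (X * Q).coeff 0
        + ∑ ij ∈ Finset.HasAntidiagonal.antidiagonal n,
        (-1:ℂ)^ij.1 * (Nat.factorial ij.1) * (Nat.factorial (ij.2+1)) * P.coeff ij.1
          * (X * Q).coeff (ij.2+1) :=
    Finset.Nat.sum_antidiagonal_succ'
  have h2 : ∑ ij ∈ Finset.HasAntidiagonal.antidiagonal (n+1),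
      (-1:ℂ)^ij.1 * (Nat.factorial ij.1) * (Nat.factorial ij.2) * P.coeff ij.1 * Q.coeff ij.2
      = (-1:ℂ)^0 * (Nat.factorial 0) * (Nat.factorial (n+1)) * P.coeff 0 * Q.coeff (n+1)
        + ∑ ij ∈ Finset.HasAntidiagonal.antidiagonal n,
        (-1:ℂ)^(ij.1+1) * (Nat.factorial (ij.1+1)) * (Nat.factorial ij.2) * P.coeff (ij.1+1)
          * Q.coeff ij.2 :=
    Finset.Nat.sum_antidiagonal_succ
  rw [h1, h2, hQ]
  have hXQ0 : (X * Q).coeff 0 = 0 := coeff_X_mul_zero Q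
  rw [hXQ0]
  simp only [mul_zero, zero_add]
  rw [Finset.mul_sum, ← Finset.sum_sub_distrib]
  apply Finset.sum_congr rfl
  intro ij hij
  have hsum : ij.1 + ij.2 = n := Finset.HasAntidiagonal.mem_antidiagonal.mp hij
  rw [hP1, coeff_X_mul]
  have hfac1 : ((Nat.factorial (ij.2 + 1)) : ℂ) = ((ij.2 : ℂ) + 1) * (Nat.factorial ij.2) := by
    rw [Nat.factorial_succ]; push_cast; ring
  have hfac2 : ((Nat.factorial (ij.1 + 1)) : ℂ) = ((ij.1 : ℂ) + 1) * (Nat.factorial ij.1) := by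
    rw [Nat.factorial_succ]; push_cast; ring
  have hn : (n:ℂ) = (ij.1 : ℂ) + (ij.2 : ℂ) := by exact_mod_cast hsum.symm
  rw [hfac1, hfac2, hn, pow_succ]
  ring

/-- Grace's theorem for the upper half-plane, in apolarity-sum form. -/
theorem grace : ∀ n : ℕ, ∀ p q : ℂ[X], p.natDegree = n →
    (∀ z : ℂ, z.im ≤ 0 → eval z p ≠ 0) → q ≠ 0 → q.natDegree ≤ n →
    (∀ z : ℂ, 0 < z.im → eval z q ≠ 0) → apolarSum n p q ≠ 0 := by
  intro n
  induction n with
  | zero =>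
    intro p q hpd hp hq0 hqd hq
    unfold apolarSum
    have : Finset.HasAntidiagonal.antidiagonal 0 = {(0,0)} := rfl
    rw [this, Finset.sum_singleton]
    simp only [pow_zero, Nat.factorial_zero, Nat.cast_one, one_mul, mul_one]
    apply mul_ne_zero
    · rw [coeff_zero_eq_eval_zero]
      exact hp 0 (by norm_num)
    · intro h
      apply hq0
      have := Polynomial.eq_C_of_natDegree_le_zero hqd
      rw [this, h, map_zero]
  | succ n ih =>
    intro p q hpd hp hq0 hqd hq
    -- p has a root x with positive imaginary part
    have hp0 : p ≠ 0 := fun h => hp 0 (le_refl 0) (by rw [h, eval_zero])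
    have hdeg : 0 < p.degree := by
      rw [Polynomial.degree_eq_natDegree hp0, hpd]
      exact_mod_cast Nat.succ_pos n
    obtain ⟨x, hxroot⟩ := Complex.exists_root hdeg
    have hx : 0 < x.im := by
      by_contra h
      push_neg at h
      exact hp x h hxroot
    obtain ⟨p₀, hfac⟩ := (dvd_iff_isRoot.mpr hxroot)
    have hp₀0 : p₀ ≠ 0 := by
      intro h; rw [h, mul_zero] at hfac; exact hp0 hfac
    have hXx : (X - C x) ≠ (0 : ℂ[X]) := X_sub_C_ne_zero x
    have hp₀d : p₀.natDegree = n := by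
      have := Polynomial.natDegree_mul hXx hp₀0
      rw [← hfac, hpd, natDegree_X_sub_C] at this
      omega
    have hp₀ : ∀ z : ℂ, z.im ≤ 0 → eval z p₀ ≠ 0 := by
      intro z hz h
      apply hp z hz
      rw [hfac, eval_mul, h, mul_zero]
    -- polar derivative of q
    set q₁ : ℂ[X] := C ((n:ℂ)+1) * q + (C x - X) * derivative q with hq₁def
    have hq₁ : ∀ z : ℂ, 0 < z.im → eval z q₁ ≠ 0 := by
      intro z hz
      have := polar_deriv_stable (n+1) (Nat.succ_le_succ (Nat.zero_le n)) q hq0 hqd hq x hx z hz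
      simpa [hq₁def] using this
    have hq₁0 : q₁ ≠ 0 := by
      intro h
      exact hq₁ Complex.I (by simp) (by rw [h, eval_zero])
    have hq₁d : q₁.natDegree ≤ n := by
      have h1 : natDegree (C ((n:ℂ)+1) * q) ≤ n + 1 :=
        le_trans (natDegree_C_mul_le _ _) hqd
      have h2 : natDegree ((C x - X) * derivative q) ≤ n + 1 := by
        apply le_trans (natDegree_mul_le)
        have : natDegree (C x - X) ≤ 1 := by
          apply le_trans (natDegree_sub_le _ _)
          simp
        have hd : natDegree (derivative q) ≤ n := by
          apply le_trans (natDegree_derivative_le q)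
          omega
        omega
      -- show coeff at n+1 vanishes
      have hco : q₁.coeff (n+1) = 0 := by
        rw [hq₁def, coeff_add, coeff_C_mul, sub_mul, coeff_sub, coeff_C_mul, coeff_derivative,
          coeff_X_mul, coeff_derivative]
        have : q.coeff (n+1+1) = 0 := by
          apply coeff_eq_zero_of_natDegree_lt; omega
        rw [this]
        push_cast; ring
      have : q₁.natDegree ≤ n + 1 := le_trans (natDegree_add_le _ _) (by omega)
      -- if natDegree = n+1 then leading coeff = coeff (n+1) ≠ 0
      rcases Nat.lt_or_ge q₁.natDegree (n+1) with h | h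
      · omega
      · have heq : q₁.natDegree = n + 1 := le_antisymm ‹q₁.natDegree ≤ n + 1› h
        exfalso
        apply hq₁0
        have := leadingCoeff_ne_zero.mpr hq₁0
        rw [Polynomial.leadingCoeff, heq] at this
        exact absurd hco this
    -- main computation
    have hchain : apolarSum (n+1) p q = - apolarSum n p₀ q₁ := by
      have e1 : apolarSum (n+1) p q = (-1:ℂ)^(n+1) * apolarSum (n+1) q p := by
        rw [← apolar_swap]
      have hp₀co : p₀.coeff (n+1) = 0 := by
        apply coeff_eq_zero_of_natDegree_lt; omega
      have e2 : apolarSum (n+1) q p = apolarSum n q₁ p₀ := by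
        rw [hfac]
        exact apolar_transfer n q p₀ x hp₀co
      have e3 : apolarSum n q₁ p₀ = (-1:ℂ)^n * apolarSum n p₀ q₁ := apolar_swap n p₀ q₁
      rw [e1, e2, e3, ← mul_assoc, ← pow_add]
      have : (-1:ℂ)^(n+1+n) = -1 := by
        have : n+1+n = 2*n+1 := by omega
        rw [this, pow_succ, pow_mul]
        norm_num
      rw [this]; ring
    rw [hchain, neg_ne_zero]
    exact ih p₀ q₁ hp₀d hp₀ hq₁0 hq₁d hq₁

end GWSAux

open MvPolynomial Finset

/-- `f` is multiaffine: every variable occurs with degree at most one. -/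
def IsMultiaffine {n : ℕ} (f : MvPolynomial (Fin n) ℂ) : Prop :=
  ∀ m ∈ f.support, ∀ i, m i ≤ 1

/-- `f` is symmetric: invariant under every permutation of the variables. -/
def IsSymmPoly {n : ℕ} (f : MvPolynomial (Fin n) ℂ) : Prop :=
  ∀ σ : Equiv.Perm (Fin n), rename σ f = f


section GWSMv
open Finset

section MvSide

variable {n : ℕ}

/-- indicator finsupp of a finset -/
noncomputable def indS (S : Finset (Fin n)) : Fin n →₀ ℕ := ∑ i ∈ S, Finsupp.single i 1

lemma indS_apply (S : Finset (Fin n)) (j : Fin n) :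
    indS S j = if j ∈ S then 1 else 0 := by
  unfold indS
  rw [Finsupp.finset_sum_apply]
  rw [Finset.sum_congr rfl (fun i _ => Finsupp.single_apply)]
  exact Finset.sum_ite_eq' S j (fun _ => 1)

lemma indS_support (S : Finset (Fin n)) : (indS S).support = S := by
  ext j
  rw [Finsupp.mem_support_iff, indS_apply]
  by_cases h : j ∈ S <;> simp [h]

lemma eq_indS_of_multiaffine (d : Fin n →₀ ℕ) (hd : ∀ i, d i ≤ 1) : d = indS d.support := by
  ext j
  rw [indS_apply]
  by_cases h : j ∈ d.support
  · have h1 : d j ≠ 0 := Finsupp.mem_support_iff.mp h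
    have h2 := hd j
    simp only [h, if_true]
    omega
  · have h1 : d j = 0 := Finsupp.notMem_support_iff.mp h
    simp [h, h1]

lemma mapDomain_indS (σ : Equiv.Perm (Fin n)) (S : Finset (Fin n)) :
    Finsupp.mapDomain σ (indS S) = indS (S.image σ) := by
  unfold indS
  rw [Finsupp.mapDomain_finset_sum]
  rw [Finset.sum_congr rfl (fun i _ => Finsupp.mapDomain_single)]
  rw [Finset.sum_image]
  intro a _ b _ h
  exact σ.injective h

/-- a permutation carrying S to T exists whenever cards agree -/
lemma exists_perm_image (S T : Finset (Fin n)) (h : S.card = T.card) :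
    ∃ σ : Equiv.Perm (Fin n), S.image σ = T := by
  classical
  have hS : Fintype.card {x // x ∈ S} = S.card := Fintype.card_coe S
  have hT : Fintype.card {x // x ∈ T} = T.card := Fintype.card_coe T
  have hSc : Fintype.card {x // x ∉ S} = n - S.card := by
    rw [Fintype.card_subtype_compl]; simp
  have hTc : Fintype.card {x // x ∉ T} = n - T.card := by
    rw [Fintype.card_subtype_compl]; simp
  have eS : {x // x ∈ S} ≃ {x // x ∈ T} := Fintype.equivOfCardEq (by rw [hS, hT, h])
  have eSc : {x // x ∉ S} ≃ {x // x ∉ T} := Fintype.equivOfCardEq (by rw [hSc, hTc, h])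
  let σ : Equiv.Perm (Fin n) :=
    ((Equiv.sumCompl (· ∈ S)).symm.trans ((eS.sumCongr eSc).trans (Equiv.sumCompl (· ∈ T))))
  have hmem : ∀ i, i ∈ S → σ i ∈ T := by
    intro i hi
    show ((Equiv.sumCompl (· ∈ T)) ((eS.sumCongr eSc) ((Equiv.sumCompl (· ∈ S)).symm i))) ∈ T
    rw [Equiv.sumCompl_symm_apply_of_pos hi]
    simp only [Equiv.sumCongr_apply, Sum.map_inl, Equiv.sumCompl_apply_inl]
    exact (eS ⟨i, hi⟩).2
  use σ
  apply Finset.eq_of_subset_of_card_le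
  · intro j hj
    obtain ⟨i, hi, rfl⟩ := Finset.mem_image.mp hj
    exact hmem i hi
  · rw [Finset.card_image_of_injective S σ.injective, h]

variable (f : MvPolynomial (Fin n) ℂ)

lemma coeff_indS_card_eq (hsymm : ∀ σ : Equiv.Perm (Fin n), rename σ f = f)
    (S T : Finset (Fin n)) (h : S.card = T.card) :
    f.coeff (indS S) = f.coeff (indS T) := by
  obtain ⟨σ, hσ⟩ := exists_perm_image S T h
  calc f.coeff (indS S) = (rename σ f).coeff (Finsupp.mapDomain σ (indS S)) :=
        (coeff_rename_mapDomain σ σ.injective f (indS S)).symm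
    _ = f.coeff (indS T) := by rw [hsymm σ, mapDomain_indS, hσ]

end MvSide

/-- elementary symmetric function as plain sum -/
noncomputable def esymF (k : ℕ) (x : Fin n → ℂ) : ℂ :=
  ∑ S ∈ Finset.powersetCard k (Finset.univ : Finset (Fin n)), ∏ i ∈ S, x i

section Main

variable (f : MvPolynomial (Fin n) ℂ)
  (hma : ∀ m ∈ f.support, ∀ i, m i ≤ 1)
  (hsymm : ∀ σ : Equiv.Perm (Fin n), rename σ f = f)

/-- the coefficient sequence -/
noncomputable def cseq : ℕ → ℂ := fun k =>
  if h : k ≤ n then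
    f.coeff (indS (Classical.choose (Finset.exists_subset_card_eq
      (show k ≤ (Finset.univ : Finset (Fin n)).card by simpa using h))))
  else 0

include hsymm in
lemma cseq_spec (S : Finset (Fin n)) : f.coeff (indS S) = cseq f S.card := by
  have hcard : S.card ≤ n := by
    have := Finset.card_le_univ S
    simpa using this
  unfold cseq
  rw [dif_pos hcard]
  set T := Classical.choose (Finset.exists_subset_card_eq
      (show S.card ≤ (Finset.univ : Finset (Fin n)).card by simpa using hcard)) with hT
  have hTspec := Classical.choose_spec (Finset.exists_subset_card_eq
      (show S.card ≤ (Finset.univ : Finset (Fin n)).card by simpa using hcard))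
  exact coeff_indS_card_eq f hsymm S T hTspec.2.symm

include hma hsymm in
lemma eval_eq_csum (x : Fin n → ℂ) :
    eval x f = ∑ k ∈ Finset.range (n+1), cseq f k * esymF k x := by
  have step1 : eval x f = ∑ d ∈ f.support, f.coeff d * ∏ i ∈ d.support, x i := by
    rw [eval_eq' x f]
    apply Finset.sum_congr rfl
    intro d hd
    congr 1
    -- ∏ i : Fin n, x i ^ d i = ∏ i ∈ d.support, x i
    rw [← Finset.prod_subset (Finset.subset_univ d.support)
      (fun i _ hi => by rw [Finsupp.notMem_support_iff.mp hi, pow_zero])]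
    apply Finset.prod_congr rfl
    intro i hi
    have h1 : d i ≠ 0 := Finsupp.mem_support_iff.mp hi
    have h2 : d i ≤ 1 := hma d hd i
    have : d i = 1 := by omega
    rw [this, pow_one]
  have hinj : ∀ d1 ∈ f.support, ∀ d2 ∈ f.support, d1.support = d2.support → d1 = d2 := by
    intro d1 h1 d2 h2 h
    rw [eq_indS_of_multiaffine d1 (hma d1 h1), eq_indS_of_multiaffine d2 (hma d2 h2), h]
  have step2 : ∑ d ∈ f.support, f.coeff d * ∏ i ∈ d.support, x i
      = ∑ S ∈ f.support.image Finsupp.support, f.coeff (indS S) * ∏ i ∈ S, x i := by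
    rw [Finset.sum_image hinj]
    apply Finset.sum_congr rfl
    intro d hd
    rw [← eq_indS_of_multiaffine d (hma d hd)]
  have step3 : ∑ S ∈ f.support.image Finsupp.support, f.coeff (indS S) * ∏ i ∈ S, x i
      = ∑ S ∈ (Finset.univ : Finset (Fin n)).powerset, f.coeff (indS S) * ∏ i ∈ S, x i := by
    apply Finset.sum_subset
    · intro S _
      exact Finset.mem_powerset.mpr (Finset.subset_univ S)
    · intro S _ hS
      have : f.coeff (indS S) = 0 := by
        by_contra hc
        apply hS
        rw [Finset.mem_image]
        exact ⟨indS S, MvPolynomial.mem_support_iff.mpr hc, indS_support S⟩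
      rw [this, zero_mul]
  have step4 : ∑ S ∈ (Finset.univ : Finset (Fin n)).powerset, f.coeff (indS S) * ∏ i ∈ S, x i
      = ∑ k ∈ Finset.range (n+1), cseq f k * esymF k x := by
    rw [Finset.sum_powerset]
    simp only [Finset.card_univ, Fintype.card_fin]
    apply Finset.sum_congr rfl
    intro k _
    unfold esymF
    rw [Finset.mul_sum]
    apply Finset.sum_congr rfl
    intro S hS
    have hcard : S.card = k := (Finset.mem_powersetCard.mp hS).2
    rw [cseq_spec f hsymm S, hcard]
  rw [step1, step2, step3, step4]

end Main

section Part7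

noncomputable def qpoly (f : MvPolynomial (Fin n) ℂ) : Polynomial ℂ :=
  ∑ k ∈ Finset.range (n+1), Polynomial.C (cseq f k * (n.choose k : ℂ)) * Polynomial.X ^ k

lemma qpoly_coeff (f : MvPolynomial (Fin n) ℂ) (j : ℕ) :
    (qpoly f).coeff j = if j ∈ Finset.range (n+1) then cseq f j * (n.choose j : ℂ) else 0 := by
  unfold qpoly
  rw [Polynomial.finset_sum_coeff]
  simp only [Polynomial.coeff_C_mul, Polynomial.coeff_X_pow, mul_ite, mul_one, mul_zero]
  exact Finset.sum_ite_eq (Finset.range (n+1)) j (fun k => cseq f k * (n.choose k : ℂ))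

lemma qpoly_natDegree (f : MvPolynomial (Fin n) ℂ) : (qpoly f).natDegree ≤ n := by
  apply Polynomial.natDegree_sum_le_of_forall_le
  intro k hk
  apply le_trans (Polynomial.natDegree_C_mul_le _ _)
  rw [Polynomial.natDegree_X_pow]
  exact Nat.lt_succ_iff.mp (Finset.mem_range.mp hk)

lemma esymF_const (k : ℕ) (t : ℂ) : esymF k (fun _ : Fin n => t) = (n.choose k : ℂ) * t^k := by
  unfold esymF
  rw [Finset.sum_congr rfl (fun S hS => by
    rw [Finset.prod_const, (Finset.mem_powersetCard.mp hS).2] :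
    ∀ S ∈ Finset.powersetCard k (Finset.univ : Finset (Fin n)),
      (∏ _i ∈ S, t) = t ^ k)]
  rw [Finset.sum_const, Finset.card_powersetCard, Finset.card_univ, Fintype.card_fin,
    nsmul_eq_mul]

lemma qpoly_eval (f : MvPolynomial (Fin n) ℂ)
    (hma : ∀ m ∈ f.support, ∀ i, m i ≤ 1)
    (hsymm : ∀ σ : Equiv.Perm (Fin n), rename σ f = f) (t : ℂ) :
    Polynomial.eval t (qpoly f) = eval (fun _ => t) f := by
  unfold qpoly
  rw [Polynomial.eval_finset_sum]
  rw [eval_eq_csum f hma hsymm]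
  apply Finset.sum_congr rfl
  intro k _
  rw [Polynomial.eval_mul, Polynomial.eval_C, Polynomial.eval_pow, Polynomial.eval_X,
    esymF_const]
  ring

lemma qpoly_ne_zero (f : MvPolynomial (Fin n) ℂ)
    (hma : ∀ m ∈ f.support, ∀ i, m i ≤ 1)
    (hsymm : ∀ σ : Equiv.Perm (Fin n), rename σ f = f) (hf : f ≠ 0) :
    qpoly f ≠ 0 := by
  intro hq
  apply hf
  rw [← MvPolynomial.support_eq_empty]
  by_contra hs
  obtain ⟨d, hd⟩ := Finset.nonempty_iff_ne_empty.mpr hs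
  have h1 : f.coeff d ≠ 0 := MvPolynomial.mem_support_iff.mp hd
  have h2 : f.coeff d = cseq f d.support.card := by
    rw [eq_indS_of_multiaffine d (hma d hd)]
    rw [indS_support]
    exact cseq_spec f hsymm d.support
  have hcard : d.support.card ≤ n := by
    have := Finset.card_le_univ d.support
    simpa using this
  have h3 : (qpoly f).coeff d.support.card = 0 := by rw [hq, Polynomial.coeff_zero]
  rw [qpoly_coeff, if_pos (Finset.mem_range.mpr (Nat.lt_succ_of_le hcard))] at h3
  have h4 : ((n.choose d.support.card : ℕ) : ℂ) ≠ 0 :=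
    Nat.cast_ne_zero.mpr (Nat.choose_pos hcard).ne'
  rcases mul_eq_zero.mp h3 with h | h
  · exact h1 (h2 ▸ h)
  · exact h4 h

noncomputable def ppoly (x : Fin n → ℂ) : Polynomial ℂ :=
  ∏ i : Fin n, (Polynomial.X - Polynomial.C (x i))

lemma ppoly_natDegree (x : Fin n → ℂ) : (ppoly x).natDegree = n := by
  unfold ppoly
  rw [Polynomial.natDegree_prod]
  · simp
  · intro i _; exact Polynomial.X_sub_C_ne_zero (x i)

lemma ppoly_eval_ne_zero (x : Fin n → ℂ) (hx : ∀ i, 0 < (x i).im) (z : ℂ) (hz : z.im ≤ 0) :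
    Polynomial.eval z (ppoly x) ≠ 0 := by
  unfold ppoly
  rw [Polynomial.eval_prod]
  apply Finset.prod_ne_zero_iff.mpr
  intro i _
  rw [Polynomial.eval_sub, Polynomial.eval_X, Polynomial.eval_C]
  intro h
  have : z = x i := by linear_combination h
  rw [this] at hz
  linarith [hx i]

lemma ppoly_coeff (x : Fin n → ℂ) (k : ℕ) (hk : k ≤ n) :
    (ppoly x).coeff k = (-1:ℂ)^(n-k) * esymF (n-k) x := by
  unfold ppoly
  rw [Finset.prod_eq_multiset_prod]
  have hmm : Multiset.map (fun i => Polynomial.X - Polynomial.C (x i))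
      (Finset.univ : Finset (Fin n)).val
      = Multiset.map (fun t => Polynomial.X - Polynomial.C t)
        (Multiset.map x (Finset.univ : Finset (Fin n)).val) := by
    rw [Multiset.map_map]; rfl
  rw [hmm]
  have hcard : Multiset.card (Multiset.map x (Finset.univ : Finset (Fin n)).val) = n := by
    rw [Multiset.card_map]; simp
  rw [Multiset.prod_X_sub_C_coeff _ (le_of_le_of_eq hk hcard.symm)]
  rw [hcard]
  congr 1
  rw [Finset.esymm_map_val]
  rfl

lemma apolar_link (f : MvPolynomial (Fin n) ℂ)
    (hma : ∀ m ∈ f.support, ∀ i, m i ≤ 1)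
    (hsymm : ∀ σ : Equiv.Perm (Fin n), rename σ f = f) (x : Fin n → ℂ) :
    apolarSum n (ppoly x) (qpoly f) = (-1:ℂ)^n * (Nat.factorial n) * eval x f := by
  unfold apolarSum
  rw [Finset.Nat.sum_antidiagonal_eq_sum_range_succ
    (f := fun i j => (-1:ℂ)^i * (Nat.factorial i) * (Nat.factorial j) * (ppoly x).coeff i
      * (qpoly f).coeff j)]
  rw [eval_eq_csum f hma hsymm, Finset.mul_sum]
  rw [← Finset.sum_range_reflect (fun j => (-1:ℂ)^n * (Nat.factorial n) * (cseq f j * esymF j x))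
    (n+1)]
  apply Finset.sum_congr rfl
  intro k hk
  have hk' : k ≤ n := Nat.lt_succ_iff.mp (Finset.mem_range.mp hk)
  have hred : n + 1 - 1 - k = n - k := by omega
  rw [hred]
  rw [ppoly_coeff x k hk', qpoly_coeff f (n-k),
    if_pos (Finset.mem_range.mpr (by omega : n - k < n + 1))]
  have hsign : (-1:ℂ)^k * (-1:ℂ)^(n-k) = (-1:ℂ)^n := by
    rw [← pow_add]
    congr 1
    omega
  have hfac : ((Nat.factorial k : ℕ) : ℂ) * ((Nat.factorial (n-k) : ℕ) : ℂ)
      * ((n.choose (n-k) : ℕ) : ℂ) = ((Nat.factorial n : ℕ) : ℂ) := by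
    have h1 : n.choose (n-k) = n.choose k := Nat.choose_symm hk'
    rw [h1]
    have h2 : n.choose k * Nat.factorial k * Nat.factorial (n-k) = Nat.factorial n :=
      Nat.choose_mul_factorial_mul_factorial hk'
    push_cast [← h2]
    ring
  calc (-1:ℂ)^k * (Nat.factorial k) * (Nat.factorial (n-k))
        * ((-1:ℂ)^(n-k) * esymF (n-k) x) * (cseq f (n-k) * (n.choose (n-k) : ℂ))
      = ((-1:ℂ)^k * (-1:ℂ)^(n-k))
        * ((Nat.factorial k : ℂ) * (Nat.factorial (n-k) : ℂ) * (n.choose (n-k) : ℂ))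
        * (cseq f (n-k) * esymF (n-k) x) := by ring
    _ = (-1:ℂ)^n * (Nat.factorial n) * (cseq f (n-k) * esymF (n-k) x) := by
        rw [hsign, hfac]

end Part7

end GWSMv

/-- Grace–Walsh–Szegő: a symmetric multiaffine polynomial is stable if and only
if its diagonalization `f(x, x, …, x)` is nonvanishing on the open upper
half-plane (with the zero polynomial counted as stable). -/
theorem stmt_6 {n : ℕ} (f : MvPolynomial (Fin n) ℂ)
    (hma : IsMultiaffine f) (hsymm : IsSymmPoly f) :
    IsStable f ↔ (f = 0 ∨ ∀ x : ℂ, 0 < x.im → MvPolynomial.eval (fun _ => x) f ≠ 0) := by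
  constructor
  · intro hs
    rcases hs with h | h
    · exact Or.inl h
    · exact Or.inr (fun t ht => h (fun _ => t) (fun _ => ht))
  · intro h
    rcases h with h | h
    · exact Or.inl h
    by_cases hf : f = 0
    · exact Or.inl hf
    right
    intro x hx hzero
    have hma' : ∀ m ∈ f.support, ∀ i, m i ≤ 1 := hma
    have hsymm' : ∀ σ : Equiv.Perm (Fin n), rename σ f = f := hsymm
    have hq0 : qpoly f ≠ 0 := qpoly_ne_zero f hma' hsymm' hf
    have hqd : (qpoly f).natDegree ≤ n := qpoly_natDegree f
    have hqnv : ∀ z : ℂ, 0 < z.im → Polynomial.eval z (qpoly f) ≠ 0 := by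
      intro z hz
      rw [qpoly_eval f hma' hsymm']
      exact h z hz
    have hpd := ppoly_natDegree x
    have hpnv := ppoly_eval_ne_zero x hx
    exact grace n (ppoly x) (qpoly f) hpd hpnv hq0 hqd hqnv
      (by rw [apolar_link f hma' hsymm' x, hzero, mul_zero])
end

section
/- Let G be a graph on [n] and P a probability distribution on the subsets of [n]. If P is strong Rayleigh (equivalently, its partition function Z_P(x) = ∑_{S⊆[n]} P(S) x^S is stable), then the expected multivariate matching polynomial E^P_{S⊆[n]} μ_{G[S]}(x) = ∑_{S⊆[n]} P(S) μ_{G[S]}(x) is stable. -/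
open MvPolynomial Finset
open scoped Classical

/-- The multivariate matching polynomial of the subgraph `G[S]` of `G` induced by the
vertices in `S`: the sum is over matchings of `G` all of whose vertices lie in `S`. -/
noncomputable def inducedMatchPoly {n : ℕ} (G : SimpleGraph (Fin n)) (S : Finset (Fin n)) :
    MvPolynomial (Fin n) ℂ :=
  ∑ M ∈ Finset.univ.filter (fun M => IsMatching G M ∧ matchedVerts M ⊆ S),
    (-1 : MvPolynomial (Fin n) ℂ) ^ M.card * ∏ i ∈ S \ matchedVerts M, X i


section
variable {n : ℕ}


private lemma claimNeg (p q : ℝ) (u v : ℂ) (hu : p < u.im) (hq : q < 0) :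
    ∃ u' v' : ℂ, p < u'.im ∧ q < v'.im ∧ u' * v' = u * v - 1 := by
  by_cases hw : u * v - 1 = 0
  · exact ⟨u, 0, hu, by simpa using hq, by simp [hw]⟩
  · set w := u * v - 1 with hwdef
    set R : ℝ := max 0 (‖w‖ / (-q) - u.im + 1) with hR
    set u' : ℂ := u + (R : ℂ) * Complex.I with hu'
    have him : u'.im = u.im + R := by simp [hu']
    have hR0 : 0 ≤ R := le_max_left _ _
    have hR1 : ‖w‖ / (-q) - u.im + 1 ≤ R := le_max_right _ _
    have habsw : 0 < ‖w‖ := by simpa using hw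
    have hqpos : 0 < -q := by linarith
    have hdivpos : 0 ≤ ‖w‖ / (-q) := div_nonneg habsw.le hqpos.le
    have h1 : ‖w‖ / (-q) + 1 ≤ u.im + R := by linarith
    have hpos : 0 < u.im + R := by linarith
    have hune : u' ≠ 0 := by
      intro h0
      rw [h0] at him
      simp at him
      linarith
    refine ⟨u', w / u', ?_, ?_, mul_div_cancel₀ _ hune⟩
    · rw [him]; linarith
    · have habs : ‖u'‖ ≥ u.im + R := by
        rw [← him]
        exact le_trans (le_abs_self _) (Complex.abs_im_le_norm u')
      have h2 : ‖w / u'‖ ≤ ‖w‖ / (u.im + R) := by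
        rw [norm_div]
        exact div_le_div_of_nonneg_left habsw.le hpos habs
      have h3 : ‖w‖ / (u.im + R) < -q := by
        rw [div_lt_iff₀ hpos]
        have : ‖w‖ / (-q) < u.im + R := by linarith
        rw [div_lt_iff₀ hqpos] at this
        linarith [this]
      have h4 : ‖w / u'‖ < -q := lt_of_le_of_lt h2 h3
      have h5 : -(‖w / u'‖) ≤ (w / u').im := by
        have := Complex.abs_im_le_norm (w / u')
        have := neg_abs_le (w / u').im
        linarith
      linarith

private lemma claimPos (p q : ℝ) (u v : ℂ) (hu : p < u.im) (hv : q < v.im)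
    (hp : 0 ≤ p) : ∃ u' v' : ℂ, p < u'.im ∧ q < v'.im ∧ u' * v' = u * v - 1 := by
  have huim : 0 < u.im := lt_of_le_of_lt hp hu
  have hune : u ≠ 0 := by
    intro h0; rw [h0] at huim; simp at huim
  refine ⟨u, v - u⁻¹, hu, ?_, ?_⟩
  · have : (u⁻¹).im = -u.im / Complex.normSq u := Complex.inv_im u
    have hnsq : 0 < Complex.normSq u := Complex.normSq_pos.2 hune
    have : (u⁻¹).im < 0 := by
      rw [this]; exact div_neg_of_neg_of_pos (by linarith) hnsq
    have : (v - u⁻¹).im = v.im - (u⁻¹).im := by simp [Complex.sub_im]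
    rw [this]; linarith
  · field_simp

private lemma claim2 (p q : ℝ) (u v : ℂ) (hu : p < u.im) (hv : q < v.im) :
    ∃ u' v' : ℂ, p < u'.im ∧ q < v'.im ∧ u' * v' = u * v - 1 := by
  by_cases hq : q < 0
  · exact claimNeg p q u v hu hq
  by_cases hp : p < 0
  · obtain ⟨v', u', hv', hu', h⟩ := claimNeg q p v u hv hp
    exact ⟨u', v', hu', hv', by rw [mul_comm, h, mul_comm]⟩
  · exact claimPos p q u v hu hv (not_lt.1 hp)

private lemma lemL_s10 (a b c d : ℂ)
    (h : ∀ s t : ℂ, 0 < s.im → 0 < t.im → a + b * s + c * t + d * (s * t) ≠ 0)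
    (s t : ℂ) (hs : 0 < s.im) (ht : 0 < t.im) :
    a - d + b * s + c * t + d * (s * t) ≠ 0 := by
  by_cases hd : d = 0
  · simpa [hd] using h s t hs ht
  intro hzero
  set β := b / d with hβ
  set γ := c / d with hγ
  set e := a / d - β * γ with he
  have key : ∀ s' t' : ℂ, 0 < s'.im → 0 < t'.im → (s' + γ) * (t' + β) + e ≠ 0 := by
    intro s' t' hs' ht' hC
    apply h s' t' hs' ht'
    have : a + b * s' + c * t' + d * (s' * t') = d * ((s' + γ) * (t' + β) + e) := by
      rw [he, hβ, hγ]
      field_simp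
      ring
    rw [this, hC, mul_zero]
  have hzero' : (s + γ) * (t + β) - 1 = -e := by
    have hd' : d * ((s + γ) * (t + β) + e - 1) = a - d + b * s + c * t + d * (s * t) := by
      rw [he, hβ, hγ]
      field_simp
      ring
    rw [hzero] at hd'
    have := (mul_eq_zero.1 hd').resolve_left hd
    linear_combination this
  have hu : γ.im < (s + γ).im := by rw [Complex.add_im]; linarith
  have hv : β.im < (t + β).im := by rw [Complex.add_im]; linarith
  obtain ⟨u', v', hu', hv', huv⟩ := claim2 γ.im β.im (s + γ) (t + β) hu hv
  apply key (u' - γ) (v' - β) (by rw [Complex.sub_im]; linarith) (by rw [Complex.sub_im]; linarith)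
  have : u' - γ + γ = u' := by ring
  rw [this]
  have : v' - β + β = v' := by ring
  rw [this]
  rw [huv, hzero']
  ring



private lemma eval_decomp (c : Finset (Fin n) → ℂ) (u v : Fin n) (huv : u ≠ v)
    (x : Fin n → ℂ) (s t : ℂ) :
    (∑ S : Finset (Fin n), c S * ∏ i ∈ S, Function.update (Function.update x u s) v t i) =
      (∑ S ∈ Finset.univ.filter (fun S : Finset (Fin n) => u ∉ S ∧ v ∉ S), c S * ∏ i ∈ S, x i)
      + (∑ S ∈ Finset.univ.filter (fun S : Finset (Fin n) => u ∈ S ∧ v ∉ S),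
          c S * ∏ i ∈ S.erase u, x i) * s
      + (∑ S ∈ Finset.univ.filter (fun S : Finset (Fin n) => u ∉ S ∧ v ∈ S),
          c S * ∏ i ∈ S.erase v, x i) * t
      + (∑ S ∈ Finset.univ.filter (fun S : Finset (Fin n) => u ∈ S ∧ v ∈ S),
          c S * ∏ i ∈ (S.erase u).erase v, x i) * (s * t) := by
  classical
  set y := Function.update (Function.update x u s) v t with hy
  have hyu : y u = s := by
    rw [hy, Function.update_of_ne huv, Function.update_self]
  have hyv : y v = t := by rw [hy, Function.update_self]
  have hyi : ∀ i, i ≠ u → i ≠ v → y i = x i := by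
    intro i hiu hiv
    rw [hy, Function.update_of_ne hiv, Function.update_of_ne hiu]
  have e4 : ∑ S ∈ Finset.univ.filter (fun S : Finset (Fin n) => u ∉ S ∧ v ∉ S),
      c S * ∏ i ∈ S, y i
      = ∑ S ∈ Finset.univ.filter (fun S : Finset (Fin n) => u ∉ S ∧ v ∉ S),
        c S * ∏ i ∈ S, x i := by
    refine Finset.sum_congr rfl fun S hS => ?_
    simp only [Finset.mem_filter] at hS
    congr 1
    refine Finset.prod_congr rfl fun i hi => ?_
    exact hyi i (fun h => hS.2.1 (h ▸ hi)) (fun h => hS.2.2 (h ▸ hi))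
  have e2 : ∑ S ∈ Finset.univ.filter (fun S : Finset (Fin n) => u ∈ S ∧ v ∉ S),
      c S * ∏ i ∈ S, y i
      = (∑ S ∈ Finset.univ.filter (fun S : Finset (Fin n) => u ∈ S ∧ v ∉ S),
          c S * ∏ i ∈ S.erase u, x i) * s := by
    rw [Finset.sum_mul]
    refine Finset.sum_congr rfl fun S hS => ?_
    simp only [Finset.mem_filter] at hS
    rw [← Finset.mul_prod_erase S y hS.2.1, hyu]
    have : ∏ i ∈ S.erase u, y i = ∏ i ∈ S.erase u, x i := by
      refine Finset.prod_congr rfl fun i hi => ?_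
      have hiu : i ≠ u := (Finset.mem_erase.1 hi).1
      exact hyi i hiu (fun h => hS.2.2 (h ▸ (Finset.mem_erase.1 hi).2))
    rw [this]; ring
  have e3 : ∑ S ∈ Finset.univ.filter (fun S : Finset (Fin n) => u ∉ S ∧ v ∈ S),
      c S * ∏ i ∈ S, y i
      = (∑ S ∈ Finset.univ.filter (fun S : Finset (Fin n) => u ∉ S ∧ v ∈ S),
          c S * ∏ i ∈ S.erase v, x i) * t := by
    rw [Finset.sum_mul]
    refine Finset.sum_congr rfl fun S hS => ?_
    simp only [Finset.mem_filter] at hS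
    rw [← Finset.mul_prod_erase S y hS.2.2, hyv]
    have : ∏ i ∈ S.erase v, y i = ∏ i ∈ S.erase v, x i := by
      refine Finset.prod_congr rfl fun i hi => ?_
      have hiv : i ≠ v := (Finset.mem_erase.1 hi).1
      exact hyi i (fun h => hS.2.1 (h ▸ (Finset.mem_erase.1 hi).2)) hiv
    rw [this]; ring
  have e1 : ∑ S ∈ Finset.univ.filter (fun S : Finset (Fin n) => u ∈ S ∧ v ∈ S),
      c S * ∏ i ∈ S, y i
      = (∑ S ∈ Finset.univ.filter (fun S : Finset (Fin n) => u ∈ S ∧ v ∈ S),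
          c S * ∏ i ∈ (S.erase u).erase v, x i) * (s * t) := by
    rw [Finset.sum_mul]
    refine Finset.sum_congr rfl fun S hS => ?_
    simp only [Finset.mem_filter] at hS
    have hv' : v ∈ S.erase u := Finset.mem_erase.2 ⟨Ne.symm huv, hS.2.2⟩
    rw [← Finset.mul_prod_erase S y hS.2.1, ← Finset.mul_prod_erase _ y hv', hyu, hyv]
    have : ∏ i ∈ (S.erase u).erase v, y i = ∏ i ∈ (S.erase u).erase v, x i := by
      refine Finset.prod_congr rfl fun i hi => ?_
      have hiv : i ≠ v := (Finset.mem_erase.1 hi).1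
      have hiu : i ≠ u := (Finset.mem_erase.1 (Finset.mem_erase.1 hi).2).1
      exact hyi i hiu hiv
    rw [this]; ring
  have split : (∑ S : Finset (Fin n), c S * ∏ i ∈ S, y i)
      = (∑ S ∈ Finset.univ.filter (fun S : Finset (Fin n) => u ∈ S ∧ v ∈ S),
          c S * ∏ i ∈ S, y i)
        + (∑ S ∈ Finset.univ.filter (fun S : Finset (Fin n) => u ∈ S ∧ v ∉ S),
          c S * ∏ i ∈ S, y i)
        + ((∑ S ∈ Finset.univ.filter (fun S : Finset (Fin n) => u ∉ S ∧ v ∈ S),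
          c S * ∏ i ∈ S, y i)
        + (∑ S ∈ Finset.univ.filter (fun S : Finset (Fin n) => u ∉ S ∧ v ∉ S),
          c S * ∏ i ∈ S, y i)) := by
    rw [← Finset.sum_filter_add_sum_filter_not (Finset.univ : Finset (Finset (Fin n)))
        (fun S => u ∈ S) (fun S => c S * ∏ i ∈ S, y i)]
    congr 1
    · rw [← Finset.sum_filter_add_sum_filter_not
          (Finset.univ.filter (fun S : Finset (Fin n) => u ∈ S))
          (fun S => v ∈ S) (fun S => c S * ∏ i ∈ S, y i),
        Finset.filter_filter, Finset.filter_filter]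
    · rw [← Finset.sum_filter_add_sum_filter_not
          (Finset.univ.filter (fun S : Finset (Fin n) => u ∉ S))
          (fun S => v ∈ S) (fun S => c S * ∏ i ∈ S, y i),
        Finset.filter_filter, Finset.filter_filter]
  rw [split, e1, e2, e3, e4]
  ring



private lemma Dsum (c : Finset (Fin n) → ℂ) (u v : Fin n) (huv : u ≠ v) (x : Fin n → ℂ) :
    (∑ S : Finset (Fin n),
        (if u ∈ S ∨ v ∈ S then 0 else c (insert u (insert v S))) * ∏ i ∈ S, x i)
      = ∑ S ∈ Finset.univ.filter (fun S : Finset (Fin n) => u ∈ S ∧ v ∈ S),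
          c S * ∏ i ∈ (S.erase u).erase v, x i := by
  classical
  have h1 : (∑ S : Finset (Fin n),
      (if u ∈ S ∨ v ∈ S then 0 else c (insert u (insert v S))) * ∏ i ∈ S, x i)
      = ∑ S ∈ Finset.univ.filter (fun S : Finset (Fin n) => ¬(u ∈ S ∨ v ∈ S)),
          c (insert u (insert v S)) * ∏ i ∈ S, x i := by
    rw [Finset.sum_filter]
    refine Finset.sum_congr rfl fun S _ => ?_
    by_cases h : u ∈ S ∨ v ∈ S <;> simp [h]
  rw [h1]
  refine Finset.sum_nbij' (fun S => insert u (insert v S)) (fun S => (S.erase u).erase v)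
    ?_ ?_ ?_ ?_ ?_
  · intro S hS
    simp only [Finset.mem_filter, not_or] at hS ⊢
    exact ⟨Finset.mem_univ _, Finset.mem_insert_self _ _,
      Finset.mem_insert_of_mem (Finset.mem_insert_self _ _)⟩
  · intro S hS
    simp only [Finset.mem_filter, not_or] at hS ⊢
    refine ⟨Finset.mem_univ _, ?_, ?_⟩
    · intro h
      exact (Finset.mem_erase.1 (Finset.mem_erase.1 h).2).1 rfl
    · intro h
      exact (Finset.mem_erase.1 h).1 rfl
  · intro S hS
    simp only [Finset.mem_filter, not_or] at hS
    show ((insert u (insert v S)).erase u).erase v = S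
    have hu' : u ∉ insert v S := by
      simp only [Finset.mem_insert, not_or]
      exact ⟨huv, hS.2.1⟩
    rw [Finset.erase_insert hu', Finset.erase_insert hS.2.2]
  · intro S hS
    simp only [Finset.mem_filter] at hS
    show insert u (insert v ((S.erase u).erase v)) = S
    have hvv : v ∈ S.erase u := Finset.mem_erase.2 ⟨Ne.symm huv, hS.2.2⟩
    rw [Finset.insert_erase hvv, Finset.insert_erase hS.2.1]
  · intro S hS
    simp only [Finset.mem_filter, not_or] at hS
    have hu' : u ∉ insert v S := by
      simp only [Finset.mem_insert, not_or]
      exact ⟨huv, hS.2.1⟩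
    have hset : ((insert u (insert v S)).erase u).erase v = S := by
      rw [Finset.erase_insert hu', Finset.erase_insert hS.2.2]
    show c (insert u (insert v S)) * ∏ i ∈ S, x i
      = c (insert u (insert v S)) * ∏ i ∈ ((insert u (insert v S)).erase u).erase v, x i
    rw [hset]

private lemma edge_step (u v : Fin n) (huv : u ≠ v) (c : Finset (Fin n) → ℂ)
    (hc : ∀ x : Fin n → ℂ, (∀ i, 0 < (x i).im) →
      (∑ S : Finset (Fin n), c S * ∏ i ∈ S, x i) ≠ 0)
    (x : Fin n → ℂ) (hx : ∀ i, 0 < (x i).im) :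
    (∑ S : Finset (Fin n),
      (c S - if u ∈ S ∨ v ∈ S then 0 else c (insert u (insert v S))) * ∏ i ∈ S, x i) ≠ 0 := by
  classical
  set A0 := ∑ S ∈ Finset.univ.filter (fun S : Finset (Fin n) => u ∉ S ∧ v ∉ S),
      c S * ∏ i ∈ S, x i with hA0
  set B0 := ∑ S ∈ Finset.univ.filter (fun S : Finset (Fin n) => u ∈ S ∧ v ∉ S),
      c S * ∏ i ∈ S.erase u, x i with hB0
  set C0 := ∑ S ∈ Finset.univ.filter (fun S : Finset (Fin n) => u ∉ S ∧ v ∈ S),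
      c S * ∏ i ∈ S.erase v, x i with hC0
  set D0 := ∑ S ∈ Finset.univ.filter (fun S : Finset (Fin n) => u ∈ S ∧ v ∈ S),
      c S * ∏ i ∈ (S.erase u).erase v, x i with hD0
  have hyp : ∀ s t : ℂ, 0 < s.im → 0 < t.im → A0 + B0 * s + C0 * t + D0 * (s * t) ≠ 0 := by
    intro s t hs ht
    have hdec := eval_decomp c u v huv x s t
    rw [← hA0, ← hB0, ← hC0, ← hD0] at hdec
    rw [← hdec]
    apply hc
    intro i
    by_cases hiv : i = v
    · rw [hiv, Function.update_self]; exact ht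
    · rw [Function.update_of_ne hiv]
      by_cases hiu : i = u
      · rw [hiu, Function.update_self]; exact hs
      · rw [Function.update_of_ne hiu]; exact hx i
  have main := lemL_s10 A0 B0 C0 D0 hyp (x u) (x v) (hx u) (hx v)
  have hfull : (∑ S : Finset (Fin n), c S * ∏ i ∈ S, x i)
      = A0 + B0 * x u + C0 * x v + D0 * (x u * x v) := by
    have hdec := eval_decomp c u v huv x (x u) (x v)
    rw [← hA0, ← hB0, ← hC0, ← hD0] at hdec
    rw [← hdec]
    have hxy : Function.update (Function.update x u (x u)) v (x v) = x := by
      rw [Function.update_eq_self, Function.update_eq_self]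
    rw [hxy]
  have hsplit : (∑ S : Finset (Fin n),
      (c S - if u ∈ S ∨ v ∈ S then 0 else c (insert u (insert v S))) * ∏ i ∈ S, x i)
      = A0 - D0 + B0 * x u + C0 * x v + D0 * (x u * x v) := by
    have : (∑ S : Finset (Fin n),
        (c S - if u ∈ S ∨ v ∈ S then 0 else c (insert u (insert v S))) * ∏ i ∈ S, x i)
        = (∑ S : Finset (Fin n), c S * ∏ i ∈ S, x i)
          - (∑ S : Finset (Fin n),
            (if u ∈ S ∨ v ∈ S then 0 else c (insert u (insert v S))) * ∏ i ∈ S, x i) := by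
      rw [← Finset.sum_sub_distrib]
      refine Finset.sum_congr rfl fun S _ => ?_
      ring
    rw [this, hfull, Dsum c u v huv x, ← hD0]
    ring
  rw [hsplit]
  exact main

private lemma mem_mV {M : Finset (Sym2 (Fin n))} {a : Fin n} :
    a ∈ matchedVerts M ↔ ∃ f ∈ M, a ∈ f := by simp [matchedVerts]

private lemma mV_empty : matchedVerts (∅ : Finset (Sym2 (Fin n))) = ∅ := by
  ext a; simp [mem_mV]

private lemma mV_insert (u v : Fin n) (M : Finset (Sym2 (Fin n))) :
    matchedVerts (insert s(u, v) M) = insert u (insert v (matchedVerts M)) := by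
  ext a
  simp only [mem_mV, Finset.mem_insert, Sym2.mem_iff]
  constructor
  · rintro ⟨f, (rfl | hf), ha⟩
    · rcases Sym2.mem_iff.1 ha with h | h
      · exact Or.inl h
      · exact Or.inr (Or.inl h)
    · exact Or.inr (Or.inr ⟨f, hf, ha⟩)
  · rintro (rfl | rfl | ⟨f, hf, ha⟩)
    · exact ⟨s(a, v), Or.inl rfl, Sym2.mem_mk_left _ _⟩
    · exact ⟨s(u, a), Or.inl rfl, Sym2.mem_mk_right _ _⟩
    · exact ⟨f, Or.inr hf, ha⟩

private lemma isMatching_subset {G : SimpleGraph (Fin n)} {M M' : Finset (Sym2 (Fin n))}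
    (h : IsMatching G M) (hs : M' ⊆ M) : IsMatching G M' :=
  ⟨fun e he => h.1 e (hs he), fun e he f hf hef w => h.2 e (hs he) f (hs hf) hef w⟩

private lemma isMatching_empty (G : SimpleGraph (Fin n)) :
    IsMatching G (∅ : Finset (Sym2 (Fin n))) :=
  ⟨fun e he => absurd he (Finset.notMem_empty e),
   fun e he => absurd he (Finset.notMem_empty e)⟩

private noncomputable def Fc (G : SimpleGraph (Fin n)) (P : Finset (Fin n) → ℝ)
    (E : Finset (Sym2 (Fin n))) (S : Finset (Fin n)) : ℂ :=
  ∑ M ∈ Finset.univ.filter (fun M : Finset (Sym2 (Fin n)) =>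
      IsMatching G M ∧ M ⊆ E ∧ Disjoint (matchedVerts M) S),
    (-1 : ℂ) ^ M.card * (P (S ∪ matchedVerts M) : ℂ)

private lemma Fc_empty (G : SimpleGraph (Fin n)) (P : Finset (Fin n) → ℝ)
    (S : Finset (Fin n)) : Fc G P ∅ S = (P S : ℂ) := by
  classical
  have hfil : Finset.univ.filter (fun M : Finset (Sym2 (Fin n)) =>
      IsMatching G M ∧ M ⊆ (∅ : Finset (Sym2 (Fin n))) ∧ Disjoint (matchedVerts M) S)
      = {∅} := by
    ext M
    simp only [Finset.mem_filter, Finset.mem_univ, true_and, Finset.mem_singleton,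
      Finset.subset_empty]
    constructor
    · rintro ⟨_, rfl, _⟩; rfl
    · rintro rfl
      exact ⟨isMatching_empty G, rfl, by rw [mV_empty]; exact Finset.disjoint_empty_left S⟩
  rw [Fc, hfil, Finset.sum_singleton, Finset.card_empty, pow_zero, one_mul, mV_empty,
    Finset.union_empty]

private lemma Fc_insert_nonedge (G : SimpleGraph (Fin n)) (P : Finset (Fin n) → ℝ)
    {e : Sym2 (Fin n)} (he : e ∉ G.edgeSet) (E : Finset (Sym2 (Fin n)))
    (S : Finset (Fin n)) : Fc G P (insert e E) S = Fc G P E S := by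
  classical
  rw [Fc, Fc]
  congr 1
  ext M
  simp only [Finset.mem_filter, Finset.mem_univ, true_and]
  constructor
  · rintro ⟨hm, hsub, hd⟩
    refine ⟨hm, fun a ha => ?_, hd⟩
    rcases Finset.mem_insert.1 (hsub ha) with rfl | h
    · exact absurd (hm.1 a ha) he
    · exact h
  · rintro ⟨hm, hsub, hd⟩
    exact ⟨hm, hsub.trans (Finset.subset_insert _ _), hd⟩

private lemma Fc_insert_edge (G : SimpleGraph (Fin n)) (P : Finset (Fin n) → ℝ)
    {u v : Fin n} (hadj : G.Adj u v) {E : Finset (Sym2 (Fin n))} (he : s(u, v) ∉ E)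
    (S : Finset (Fin n)) :
    Fc G P (insert s(u, v) E) S
      = Fc G P E S
        - (if u ∈ S ∨ v ∈ S then 0 else Fc G P E (insert u (insert v S))) := by
  classical
  set e : Sym2 (Fin n) := s(u, v) with hedef
  have hue : u ∈ e := Sym2.mem_mk_left _ _
  have hve : v ∈ e := Sym2.mem_mk_right _ _
  have hsplit := Finset.sum_filter_add_sum_filter_not
    (Finset.univ.filter (fun M : Finset (Sym2 (Fin n)) =>
      IsMatching G M ∧ M ⊆ insert e E ∧ Disjoint (matchedVerts M) S))
    (fun M => e ∈ M)
    (fun M => (-1 : ℂ) ^ M.card * (P (S ∪ matchedVerts M) : ℂ))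
  rw [Finset.filter_filter, Finset.filter_filter] at hsplit
  have hpart2 : (∑ M ∈ Finset.univ.filter (fun M : Finset (Sym2 (Fin n)) =>
      (IsMatching G M ∧ M ⊆ insert e E ∧ Disjoint (matchedVerts M) S) ∧ e ∉ M),
      (-1 : ℂ) ^ M.card * (P (S ∪ matchedVerts M) : ℂ)) = Fc G P E S := by
    rw [Fc]
    congr 1
    ext M
    simp only [Finset.mem_filter, Finset.mem_univ, true_and]
    constructor
    · rintro ⟨⟨hm, hsub, hd⟩, hem⟩
      refine ⟨hm, fun a ha => ?_, hd⟩
      rcases Finset.mem_insert.1 (hsub ha) with rfl | h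
      · exact absurd ha hem
      · exact h
    · rintro ⟨hm, hsub, hd⟩
      exact ⟨⟨hm, hsub.trans (Finset.subset_insert _ _), hd⟩, fun hem => he (hsub hem)⟩
  by_cases hS : u ∈ S ∨ v ∈ S
  · have hempty : Finset.univ.filter (fun M : Finset (Sym2 (Fin n)) =>
        (IsMatching G M ∧ M ⊆ insert e E ∧ Disjoint (matchedVerts M) S) ∧ e ∈ M)
        = ∅ := by
      ext M
      simp only [Finset.mem_filter, Finset.mem_univ, true_and, Finset.notMem_empty,
        iff_false]
      rintro ⟨⟨hm, hsub, hd⟩, hem⟩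
      rcases hS with hu | hv
      · exact Finset.disjoint_left.1 hd (mem_mV.2 ⟨e, hem, hue⟩) hu
      · exact Finset.disjoint_left.1 hd (mem_mV.2 ⟨e, hem, hve⟩) hv
    rw [if_pos hS, sub_zero, Fc, ← hsplit, hempty, Finset.sum_empty, zero_add, ← hpart2]
  · push_neg at hS
    rw [if_neg (by push_neg; exact hS)]
    have hpart1 : (∑ M ∈ Finset.univ.filter (fun M : Finset (Sym2 (Fin n)) =>
        (IsMatching G M ∧ M ⊆ insert e E ∧ Disjoint (matchedVerts M) S) ∧ e ∈ M),
        (-1 : ℂ) ^ M.card * (P (S ∪ matchedVerts M) : ℂ))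
        = - Fc G P E (insert u (insert v S)) := by
      rw [Fc, ← Finset.sum_neg_distrib]
      refine Finset.sum_nbij' (fun M => M.erase e) (fun M => insert e M) ?_ ?_ ?_ ?_ ?_
      · -- forward membership
        intro M hM
        simp only [Finset.mem_filter, Finset.mem_univ, true_and] at hM ⊢
        obtain ⟨⟨hm, hsub, hd⟩, hem⟩ := hM
        refine ⟨isMatching_subset hm (Finset.erase_subset _ _), ?_, ?_⟩
        · intro a ha
          have h1 := Finset.mem_erase.1 ha
          rcases Finset.mem_insert.1 (hsub h1.2) with rfl | h
          · exact absurd rfl h1.1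
          · exact h
        · rw [Finset.disjoint_left]
          intro a ha haS
          obtain ⟨f, hf, haf⟩ := mem_mV.1 ha
          have hfM : f ∈ M := (Finset.erase_subset _ _) hf
          have hfe : f ≠ e := (Finset.mem_erase.1 hf).1
          rcases Finset.mem_insert.1 haS with rfl | haS'
          · exact hm.2 f hfM e hem hfe a ⟨haf, hue⟩
          rcases Finset.mem_insert.1 haS' with rfl | haS''
          · exact hm.2 f hfM e hem hfe a ⟨haf, hve⟩
          · exact Finset.disjoint_left.1 hd (mem_mV.2 ⟨f, hfM, haf⟩) haS''
      · -- backward membership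
        intro M hM
        simp only [Finset.mem_filter, Finset.mem_univ, true_and] at hM ⊢
        obtain ⟨hm, hsub, hd⟩ := hM
        have hnotm : ∀ a, a ∈ matchedVerts M → a ≠ u ∧ a ≠ v := by
          intro a ha
          constructor
          · rintro rfl
            exact Finset.disjoint_left.1 hd ha (Finset.mem_insert_self _ _)
          · rintro rfl
            exact Finset.disjoint_left.1 hd ha
              (Finset.mem_insert_of_mem (Finset.mem_insert_self _ _))
        constructor
        constructor
        · -- IsMatching G (insert e M)
          constructor
          · intro f hf
            rcases Finset.mem_insert.1 hf with rfl | h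
            · exact (SimpleGraph.mem_edgeSet G).2 hadj
            · exact hm.1 f h
          · intro f hf g hg hfg w hw
            rcases Finset.mem_insert.1 hf with rfl | hf' <;>
              rcases Finset.mem_insert.1 hg with rfl | hg'
            · exact hfg rfl
            · -- f = e, g ∈ M
              have haw : w ∈ matchedVerts M := mem_mV.2 ⟨g, hg', hw.2⟩
              rcases Sym2.mem_iff.1 hw.1 with rfl | rfl
              · exact (hnotm w haw).1 rfl
              · exact (hnotm w haw).2 rfl
            · have haw : w ∈ matchedVerts M := mem_mV.2 ⟨f, hf', hw.1⟩
              rcases Sym2.mem_iff.1 hw.2 with rfl | rfl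
              · exact (hnotm w haw).1 rfl
              · exact (hnotm w haw).2 rfl
            · exact hm.2 f hf' g hg' hfg w hw
        · -- subset and disjoint
          constructor
          · exact Finset.insert_subset_insert e hsub
          · rw [hedef, mV_insert, Finset.disjoint_left]
            intro a ha haS
            rcases Finset.mem_insert.1 ha with rfl | ha'
            · exact hS.1 haS
            rcases Finset.mem_insert.1 ha' with rfl | ha''
            · exact hS.2 haS
            · exact Finset.disjoint_left.1 hd ha''
                (Finset.mem_insert_of_mem (Finset.mem_insert_of_mem haS))
        · exact Finset.mem_insert_self _ _
      · -- left inverse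
        intro M hM
        simp only [Finset.mem_filter] at hM
        exact Finset.insert_erase hM.2.2
      · -- right inverse
        intro M hM
        simp only [Finset.mem_filter, Finset.mem_univ, true_and] at hM
        have heM : e ∉ M := fun h => he (hM.2.1 h)
        exact Finset.erase_insert heM
      · -- values
        intro M hM
        simp only [Finset.mem_filter, Finset.mem_univ, true_and] at hM
        obtain ⟨⟨hm, hsub, hd⟩, hem⟩ := hM
        have heM' : e ∉ M.erase e := Finset.notMem_erase _ _
        have hcard : (M.erase e).card + 1 = M.card := Finset.card_erase_add_one hem
        have hMeq : insert e (M.erase e) = M := Finset.insert_erase hem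
        have hmv : matchedVerts M = insert u (insert v (matchedVerts (M.erase e))) := by
          conv_lhs => rw [← hMeq]
          rw [hedef, mV_insert]
        have hsets : S ∪ matchedVerts M
            = insert u (insert v S) ∪ matchedVerts (M.erase e) := by
          rw [hmv]
          ext a
          simp only [Finset.mem_union, Finset.mem_insert]
          tauto
        rw [hsets, ← hcard, pow_succ]
        ring
    rw [Fc, ← hsplit, hpart1, ← hpart2]
    ring

private lemma main_identity (G : SimpleGraph (Fin n)) (P : Finset (Fin n) → ℝ)
    (x : Fin n → ℂ) :
    (∑ S : Finset (Fin n), (P S : ℂ) *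
        ∑ M ∈ Finset.univ.filter (fun M : Finset (Sym2 (Fin n)) =>
            IsMatching G M ∧ matchedVerts M ⊆ S),
          (-1 : ℂ) ^ M.card * ∏ i ∈ S \ matchedVerts M, x i)
      = ∑ S : Finset (Fin n), Fc G P G.edgeFinset S * ∏ i ∈ S, x i := by
  classical
  have lhs_eq : (∑ S : Finset (Fin n), (P S : ℂ) *
        ∑ M ∈ Finset.univ.filter (fun M : Finset (Sym2 (Fin n)) =>
            IsMatching G M ∧ matchedVerts M ⊆ S),
          (-1 : ℂ) ^ M.card * ∏ i ∈ S \ matchedVerts M, x i)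
      = ∑ S : Finset (Fin n), ∑ M : Finset (Sym2 (Fin n)),
          (if IsMatching G M ∧ matchedVerts M ⊆ S then
            (-1 : ℂ) ^ M.card * (P S : ℂ) * ∏ i ∈ S \ matchedVerts M, x i else 0) := by
    refine Finset.sum_congr rfl fun S _ => ?_
    rw [Finset.mul_sum, Finset.sum_filter]
    refine Finset.sum_congr rfl fun M _ => ?_
    split_ifs with h
    · ring
    · rfl
  have rhs_eq : (∑ S : Finset (Fin n), Fc G P G.edgeFinset S * ∏ i ∈ S, x i)
      = ∑ S : Finset (Fin n), ∑ M : Finset (Sym2 (Fin n)),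
          (if IsMatching G M ∧ M ⊆ G.edgeFinset ∧ Disjoint (matchedVerts M) S then
            (-1 : ℂ) ^ M.card * (P (S ∪ matchedVerts M) : ℂ) * ∏ i ∈ S, x i else 0) := by
    refine Finset.sum_congr rfl fun S _ => ?_
    rw [Fc, Finset.sum_mul, Finset.sum_filter]
  rw [lhs_eq, rhs_eq]
  rw [Finset.sum_comm]
  conv_rhs => rw [Finset.sum_comm]
  refine Finset.sum_congr rfl fun M _ => ?_
  by_cases hm : IsMatching G M
  · have hsubE : M ⊆ G.edgeFinset := fun f hf => (SimpleGraph.mem_edgeFinset).2 (hm.1 f hf)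
    have l1 : ∀ S : Finset (Fin n),
        (if IsMatching G M ∧ matchedVerts M ⊆ S then
          (-1 : ℂ) ^ M.card * (P S : ℂ) * ∏ i ∈ S \ matchedVerts M, x i else 0)
        = (if matchedVerts M ⊆ S then
          (-1 : ℂ) ^ M.card * (P S : ℂ) * ∏ i ∈ S \ matchedVerts M, x i else 0) := by
      intro S; simp [hm]
    have l2 : ∀ S : Finset (Fin n),
        (if IsMatching G M ∧ M ⊆ G.edgeFinset ∧ Disjoint (matchedVerts M) S then
          (-1 : ℂ) ^ M.card * (P (S ∪ matchedVerts M) : ℂ) * ∏ i ∈ S, x i else 0)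
        = (if Disjoint (matchedVerts M) S then
          (-1 : ℂ) ^ M.card * (P (S ∪ matchedVerts M) : ℂ) * ∏ i ∈ S, x i else 0) := by
      intro S; simp [hm, hsubE]
    rw [Finset.sum_congr rfl fun S _ => l1 S, Finset.sum_congr rfl fun S _ => l2 S,
      ← Finset.sum_filter, ← Finset.sum_filter]
    refine Finset.sum_nbij' (fun S => S \ matchedVerts M) (fun S => S ∪ matchedVerts M)
      ?_ ?_ ?_ ?_ ?_
    · intro S hS
      simp only [Finset.mem_filter, Finset.mem_univ, true_and] at hS ⊢
      exact disjoint_sdiff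
    · intro S hS
      simp only [Finset.mem_filter, Finset.mem_univ, true_and] at hS ⊢
      exact Finset.subset_union_right
    · intro S hS
      simp only [Finset.mem_filter, Finset.mem_univ, true_and] at hS
      exact Finset.sdiff_union_of_subset hS
    · intro S hS
      simp only [Finset.mem_filter, Finset.mem_univ, true_and] at hS
      exact Finset.union_sdiff_cancel_right hS.symm
    · intro S hS
      simp only [Finset.mem_filter, Finset.mem_univ, true_and] at hS
      rw [Finset.sdiff_union_of_subset hS]
  · simp [hm]


private lemma driver (G : SimpleGraph (Fin n)) (P : Finset (Fin n) → ℝ)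
    (hbase : ∀ x : Fin n → ℂ, (∀ i, 0 < (x i).im) →
      (∑ S : Finset (Fin n), (P S : ℂ) * ∏ i ∈ S, x i) ≠ 0)
    (E : Finset (Sym2 (Fin n))) :
    ∀ x : Fin n → ℂ, (∀ i, 0 < (x i).im) →
      (∑ S : Finset (Fin n), Fc G P E S * ∏ i ∈ S, x i) ≠ 0 := by
  classical
  induction E using Finset.induction_on with
  | empty =>
    intro x hx
    rw [Finset.sum_congr rfl fun S _ => by rw [Fc_empty G P S]]
    exact hbase x hx
  | @insert e E he ih =>
    induction e using Sym2.ind with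
    | _ u v =>
      by_cases hedge : s(u, v) ∈ G.edgeSet
      · have hadj : G.Adj u v := (SimpleGraph.mem_edgeSet G).1 hedge
        have huv : u ≠ v := hadj.ne
        intro x hx
        have key := edge_step u v huv (Fc G P E) ih x hx
        rw [Finset.sum_congr rfl fun S _ => by rw [Fc_insert_edge G P hadj he S]]
        exact key
      · intro x hx
        rw [Finset.sum_congr rfl fun S _ => by rw [Fc_insert_nonedge G P hedge E S]]
        exact ih x hx

end

/-- If `P` is a strong Rayleigh probability distribution on subsets of `[n]`
(equivalently, by Brändén's theorem, its partition function
`Z_P(x) = ∑_S P(S) x^S` is stable), then the expected multivariate matching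
polynomial `∑_S P(S) μ_{G[S]}(x)` is stable. -/
theorem stmt_10 {n : ℕ} (G : SimpleGraph (Fin n)) (P : Finset (Fin n) → ℝ)
    (hP0 : ∀ S, 0 ≤ P S) (hP1 : ∑ S : Finset (Fin n), P S = 1)
    (hZ : IsStable (∑ S : Finset (Fin n), (P S : ℂ) • ∏ i ∈ S, (X i : MvPolynomial (Fin n) ℂ))) :
    IsStable (∑ S : Finset (Fin n), (P S : ℂ) • inducedMatchPoly G S) := by
  classical
  have heval : ∀ x : Fin n → ℂ,
      MvPolynomial.eval x (∑ S : Finset (Fin n),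
        (P S : ℂ) • ∏ i ∈ S, (X i : MvPolynomial (Fin n) ℂ))
      = ∑ S : Finset (Fin n), (P S : ℂ) * ∏ i ∈ S, x i := by
    intro x
    rw [map_sum]
    refine Finset.sum_congr rfl fun S _ => ?_
    rw [smul_eq_C_mul, map_mul, eval_C, map_prod]
    simp
  have hZne : ∀ x : Fin n → ℂ, (∀ i, 0 < (x i).im) →
      (∑ S : Finset (Fin n), (P S : ℂ) * ∏ i ∈ S, x i) ≠ 0 := by
    rcases hZ with h0 | hne
    · exfalso
      have h1 := heval (fun _ => 1)
      rw [h0] at h1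
      simp only [map_zero] at h1
      have h2 : (∑ S : Finset (Fin n), (P S : ℂ) * ∏ _i ∈ S, (1 : ℂ)) = 1 := by
        simp only [Finset.prod_const_one, mul_one]
        rw [← Complex.ofReal_sum, hP1, Complex.ofReal_one]
      rw [← h1] at h2
      exact zero_ne_one h2
    · intro x hx
      rw [← heval x]
      exact hne x hx
  refine Or.inr ?_
  intro x hx
  have hevalG : MvPolynomial.eval x (∑ S : Finset (Fin n), (P S : ℂ) • inducedMatchPoly G S)
      = ∑ S : Finset (Fin n), (P S : ℂ) *
          ∑ M ∈ Finset.univ.filter (fun M : Finset (Sym2 (Fin n)) =>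
              IsMatching G M ∧ matchedVerts M ⊆ S),
            (-1 : ℂ) ^ M.card * ∏ i ∈ S \ matchedVerts M, x i := by
    rw [map_sum]
    refine Finset.sum_congr rfl fun S _ => ?_
    rw [smul_eq_C_mul, map_mul, eval_C, inducedMatchPoly, map_sum]
    congr 1
    refine Finset.sum_congr rfl fun M _ => ?_
    rw [map_mul, map_pow, map_prod]
    simp
  rw [hevalG, main_identity G P x]
  exact driver G P hZne G.edgeFinset x hx
end

section
/- For a graph G on [n], the differential operator T_G = ∏_{{i,j} ∈ E(G)} (1 - ∂_i ∂_j) applied to the monomial x^S = ∏_{i∈S} x_i equals the multivariate matching polynomial μ_{G[S]}(x) of the induced subgraph G[S], for every S ⊆ [n]. -/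
open MvPolynomial Finset
open scoped Classical

/-- The monomial differential operator `∂^m = ∏_i (∂/∂x_i)^{m_i}`. -/
noncomputable def Dmon {n : ℕ} (m : Fin n →₀ ℕ) (g : MvPolynomial (Fin n) ℂ) :
    MvPolynomial (Fin n) ℂ :=
  (List.finRange n).foldr (fun i h => (pderiv i)^[m i] h) g

/-- The constant-coefficient differential operator `f(∂/∂x_1, …, ∂/∂x_n)`
applied to `g`; for `f = ∏_{{i,j} ∈ E(G)} (1 - x_i x_j)` this is the operator
`T_G = ∏_{{i,j} ∈ E(G)} (1 - ∂_i ∂_j)`. -/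
noncomputable def applyDiff {n : ℕ} (f g : MvPolynomial (Fin n) ℂ) :
    MvPolynomial (Fin n) ℂ :=
  ∑ m ∈ f.support, f.coeff m • Dmon m g

/-- The product `x_i * x_j` associated to the edge `{i, j}`. -/
noncomputable def edgeProd {n : ℕ} (e : Sym2 (Fin n)) : MvPolynomial (Fin n) ℂ :=
  Sym2.lift ⟨fun i j => X i * X j, fun _ _ => mul_comm _ _⟩ e

noncomputable def ind {n : ℕ} (A : Finset (Fin n)) : Fin n →₀ ℕ :=
  ∑ i ∈ A, Finsupp.single i 1

lemma ind_apply {n : ℕ} (A : Finset (Fin n)) (j : Fin n) :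
    ind A j = if j ∈ A then 1 else 0 := by
  rw [ind, Finsupp.finset_sum_apply]
  simp [Finsupp.single_apply]

lemma prod_X_eq {n : ℕ} (A : Finset (Fin n)) :
    (∏ i ∈ A, X i : MvPolynomial (Fin n) ℂ) = monomial (ind A) 1 := by
  induction A using Finset.induction with
  | empty => simp [ind]
  | @insert a s h ih =>
      simp only [ind] at *
      rw [Finset.prod_insert h, ih, Finset.sum_insert h, X, monomial_mul, one_mul]

lemma pderiv_monomial_ind {n : ℕ} (a : Fin n) (A : Finset (Fin n)) :
    pderiv a (monomial (ind A) (1:ℂ)) = if a ∈ A then monomial (ind (A.erase a)) 1 else 0 := by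
  rw [pderiv_monomial, ind_apply]
  split
  · next h =>
      have h2 : ind A = ind (A.erase a) + Finsupp.single a 1 := by
        rw [ind, ind, Finset.sum_erase_add A _ h]
      rw [h2, add_tsub_cancel_right]
      norm_num
  · simp

lemma iter_pderiv_zero {n : ℕ} (i : Fin n) (k : ℕ) :
    (pderiv i)^[k] (0 : MvPolynomial (Fin n) ℂ) = 0 := by
  induction k with
  | zero => rfl
  | succ k ih => rw [Function.iterate_succ_apply, map_zero, ih]

lemma foldr_pderiv {n : ℕ} (m : Fin n →₀ ℕ) (S : Finset (Fin n)) :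
    ∀ (l : List (Fin n)), l.Nodup →
    l.foldr (fun i h => (pderiv i)^[m i] h) (monomial (ind S) (1:ℂ))
      = if ∀ i ∈ l, m i = 0 ∨ (m i = 1 ∧ i ∈ S) then
          monomial (ind (S \ l.toFinset.filter (fun i => m i ≠ 0))) 1 else 0 := by
  intro l
  induction l with
  | nil => intro _; simp
  | cons a l ih =>
      intro hnd
      have hal : a ∉ l := (List.nodup_cons.1 hnd).1
      have hnd' : l.Nodup := (List.nodup_cons.1 hnd).2
      have haT : a ∉ l.toFinset.filter (fun i => m i ≠ 0) := by
        simp only [Finset.mem_filter, List.mem_toFinset]; tauto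
      rw [List.foldr_cons, ih hnd']
      have hT' : (a :: l).toFinset.filter (fun i => m i ≠ 0)
          = if m a ≠ 0 then insert a (l.toFinset.filter (fun i => m i ≠ 0))
            else l.toFinset.filter (fun i => m i ≠ 0) := by
        rw [List.toFinset_cons, Finset.filter_insert]
      by_cases hP : ∀ i ∈ l, m i = 0 ∨ (m i = 1 ∧ i ∈ S)
      · rw [if_pos hP]
        by_cases h0 : m a = 0
        · rw [h0, Function.iterate_zero_apply, if_pos, hT', if_neg (by simp [h0])]
          intro i hi
          rcases List.mem_cons.1 hi with rfl | hi
          · exact Or.inl h0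
          · exact hP i hi
        · by_cases hS : a ∈ S
          · by_cases h1 : m a = 1
            · rw [h1, Function.iterate_one, pderiv_monomial_ind,
                if_pos (by simp [Finset.mem_sdiff, hS, haT]), if_pos, hT', if_pos (by simp [h1])]
              · congr 2
                rw [Finset.sdiff_insert]
              · intro i hi
                rcases List.mem_cons.1 hi with rfl | hi
                · exact Or.inr ⟨h1, hS⟩
                · exact hP i hi
            · -- m a ≥ 2, a ∈ S : derivative twice kills it
              obtain ⟨k, hk⟩ : ∃ k, m a = k + 2 := ⟨m a - 2, by omega⟩
              rw [hk, if_neg]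
              · rw [Function.iterate_succ_apply, Function.iterate_succ_apply,
                  pderiv_monomial_ind, if_pos (by simp [Finset.mem_sdiff, hS, haT]),
                  pderiv_monomial_ind, if_neg (by simp), iter_pderiv_zero]
              · push_neg
                exact ⟨a, List.mem_cons_self, h0, fun h1' => absurd h1' h1⟩
          · -- a ∉ S, m a ≥ 1
            obtain ⟨k, hk⟩ : ∃ k, m a = k + 1 := ⟨m a - 1, by omega⟩
            rw [hk, if_neg]
            · rw [Function.iterate_succ_apply, pderiv_monomial_ind,
                if_neg (by simp [Finset.mem_sdiff, hS]), iter_pderiv_zero]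
            · push_neg
              exact ⟨a, List.mem_cons_self, h0, fun _ => hS⟩
      · rw [if_neg hP, if_neg, iter_pderiv_zero]
        intro h
        exact hP fun i hi => h i (List.mem_cons_of_mem a hi)

lemma Dmon_prod_X {n : ℕ} (m : Fin n →₀ ℕ) (S : Finset (Fin n)) :
    Dmon m (∏ i ∈ S, X i)
      = if ∀ i, m i = 0 ∨ (m i = 1 ∧ i ∈ S) then monomial (ind (S \ m.support)) 1 else 0 := by
  rw [prod_X_eq, Dmon, foldr_pderiv m S _ (List.nodup_finRange n)]
  have h1 : (∀ i ∈ List.finRange n, m i = 0 ∨ (m i = 1 ∧ i ∈ S))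
      ↔ ∀ i, m i = 0 ∨ (m i = 1 ∧ i ∈ S) := by simp
  have h2 : (List.finRange n).toFinset.filter (fun i => m i ≠ 0) = m.support := by
    ext i; simp [Finsupp.mem_support_iff]
  rw [h2]
  exact if_congr h1 rfl rfl

lemma applyDiff_add {n : ℕ} (f₁ f₂ g : MvPolynomial (Fin n) ℂ) :
    applyDiff (f₁ + f₂) g = applyDiff f₁ g + applyDiff f₂ g := by
  have key : ∀ (f : MvPolynomial (Fin n) ℂ) (s : Finset (Fin n →₀ ℕ)), f.support ⊆ s →
      applyDiff f g = ∑ m ∈ s, f.coeff m • Dmon m g := by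
    intro f s hs
    exact Finset.sum_subset hs (fun m _ hm => by
      simp only [mem_support_iff, not_not] at hm; rw [hm, zero_smul])
  rw [key (f₁ + f₂) (f₁.support ∪ f₂.support) support_add,
    key f₁ _ Finset.subset_union_left, key f₂ _ Finset.subset_union_right,
    ← Finset.sum_add_distrib]
  simp only [coeff_add, add_smul]

lemma applyDiff_sum {n : ℕ} {ι : Type*} (s : Finset ι) (f : ι → MvPolynomial (Fin n) ℂ)
    (g : MvPolynomial (Fin n) ℂ) :
    applyDiff (∑ i ∈ s, f i) g = ∑ i ∈ s, applyDiff (f i) g := by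
  have h0 : applyDiff 0 g = 0 := by simp [applyDiff]
  exact map_sum (AddMonoidHom.mk' (fun f => applyDiff f g) (fun a b => applyDiff_add a b g)) f s

lemma applyDiff_monomial {n : ℕ} (m : Fin n →₀ ℕ) (c : ℂ) (g : MvPolynomial (Fin n) ℂ) :
    applyDiff (monomial m c) g = c • Dmon m g := by
  by_cases hc : c = 0
  · simp [hc, applyDiff]
  · rw [applyDiff, support_monomial, if_neg hc, Finset.sum_singleton, coeff_monomial, if_pos rfl]

noncomputable def edgeM {n : ℕ} (e : Sym2 (Fin n)) : Fin n →₀ ℕ :=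
  Sym2.lift ⟨fun i j => Finsupp.single i 1 + Finsupp.single j 1, fun _ _ => add_comm _ _⟩ e

lemma edgeProd_eq {n : ℕ} (e : Sym2 (Fin n)) : edgeProd e = monomial (edgeM e) 1 := by
  induction e using Sym2.ind with
  | _ i j =>
      rw [edgeProd, edgeM, Sym2.lift_mk, Sym2.lift_mk]
      simp only [X, monomial_mul, one_mul]

lemma edgeM_apply {n : ℕ} (e : Sym2 (Fin n)) (he : ¬ e.IsDiag) (v : Fin n) :
    edgeM e v = if v ∈ e then 1 else 0 := by
  induction e using Sym2.ind with
  | _ i j =>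
      have hij : i ≠ j := by simpa using he
      rw [edgeM, Sym2.lift_mk]
      simp only [Finsupp.add_apply, Finsupp.single_apply, Sym2.mem_iff]
      by_cases h1 : i = v <;> by_cases h2 : j = v <;> simp_all [eq_comm]

lemma prod_edgeProd {n : ℕ} (E : Finset (Sym2 (Fin n))) :
    ∏ e ∈ E, edgeProd e = monomial (∑ e ∈ E, edgeM e) 1 := by
  induction E using Finset.induction with
  | empty => simp
  | @insert a s h ih =>
      rw [Finset.prod_insert h, ih, Finset.sum_insert h, edgeProd_eq, monomial_mul, one_mul]

lemma msum_apply {n : ℕ} (t : Finset (Sym2 (Fin n))) (ht : ∀ e ∈ t, ¬ e.IsDiag) (v : Fin n) :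
    (∑ e ∈ t, edgeM e) v = (t.filter (fun e => v ∈ e)).card := by
  rw [Finsupp.finset_sum_apply, Finset.sum_congr rfl (fun e he => edgeM_apply e (ht e he) v)]
  rw [Finset.card_filter]

lemma support_msum {n : ℕ} (t : Finset (Sym2 (Fin n))) (ht : ∀ e ∈ t, ¬ e.IsDiag) :
    (∑ e ∈ t, edgeM e).support = matchedVerts t := by
  ext v
  simp only [Finsupp.mem_support_iff, msum_apply t ht, matchedVerts, Finset.mem_filter,
    Finset.mem_univ, true_and]
  rw [Finset.card_ne_zero, Finset.filter_nonempty_iff]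

lemma good_iff {n : ℕ} (G : SimpleGraph (Fin n)) (S : Finset (Fin n))
    (t : Finset (Sym2 (Fin n))) (ht : t ⊆ G.edgeFinset) :
    (∀ v, (∑ e ∈ t, edgeM e) v = 0 ∨ ((∑ e ∈ t, edgeM e) v = 1 ∧ v ∈ S))
      ↔ (IsMatching G t ∧ matchedVerts t ⊆ S) := by
  have hd : ∀ e ∈ t, ¬ e.IsDiag := fun e he =>
    G.not_isDiag_of_mem_edgeSet (SimpleGraph.mem_edgeFinset.1 (ht he))
  simp only [msum_apply t hd]
  constructor
  · intro h
    refine ⟨⟨fun e he => SimpleGraph.mem_edgeFinset.1 (ht he), ?_⟩, ?_⟩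
    · intro e he f hf hef v hv
      have h2 : 1 < (t.filter (fun e => v ∈ e)).card :=
        Finset.one_lt_card.2
          ⟨e, Finset.mem_filter.2 ⟨he, hv.1⟩, f, Finset.mem_filter.2 ⟨hf, hv.2⟩, hef⟩
      rcases h v with h0 | ⟨h1, _⟩ <;> omega
    · intro v hv
      simp only [matchedVerts, Finset.mem_filter, Finset.mem_univ, true_and] at hv
      obtain ⟨e, he, hve⟩ := hv
      rcases h v with h0 | ⟨_, hS⟩
      · exact absurd h0 (Finset.card_ne_zero.2 ⟨e, Finset.mem_filter.2 ⟨he, hve⟩⟩)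
      · exact hS
  · rintro ⟨⟨_, hdisj⟩, hsub⟩ v
    by_cases hv : ∃ e ∈ t, v ∈ e
    · right
      obtain ⟨e, he, hve⟩ := hv
      constructor
      · have hle : (t.filter (fun e => v ∈ e)).card ≤ 1 := by
          apply Finset.card_le_one.2
          intro a ha b hb
          simp only [Finset.mem_filter] at ha hb
          by_contra hab
          exact hdisj a ha.1 b hb.1 hab v ⟨ha.2, hb.2⟩
        have hge : (t.filter (fun e => v ∈ e)).card ≠ 0 :=
          Finset.card_ne_zero.2 ⟨e, Finset.mem_filter.2 ⟨he, hve⟩⟩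
        omega
      · refine hsub ?_
        simp only [matchedVerts, Finset.mem_filter, Finset.mem_univ, true_and]
        exact ⟨e, he, hve⟩
    · left
      rw [Finset.card_eq_zero, Finset.filter_eq_empty_iff]
      intro e he hve
      exact hv ⟨e, he, hve⟩

/-- The operator `T_G = ∏_{{i,j} ∈ E(G)} (1 - ∂_i ∂_j)` applied to the monomial
`x^S = ∏_{i ∈ S} x_i` equals the multivariate matching polynomial of `G[S]`. -/
theorem stmt_11 {n : ℕ} (G : SimpleGraph (Fin n)) (S : Finset (Fin n)) :
    applyDiff (∏ e ∈ G.edgeFinset, (1 - edgeProd e)) (∏ i ∈ S, X i)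
      = inducedMatchPoly G S := by
  rw [Finset.prod_sub (fun _ => (1 : MvPolynomial (Fin n) ℂ)) edgeProd G.edgeFinset,
    applyDiff_sum]
  have hterm : ∀ t ∈ G.edgeFinset.powerset,
      applyDiff ((-1) ^ t.card * (∏ _e ∈ G.edgeFinset \ t, (1 : MvPolynomial (Fin n) ℂ)) *
          ∏ e ∈ t, edgeProd e) (∏ i ∈ S, X i)
        = if IsMatching G t ∧ matchedVerts t ⊆ S then
            (-1 : MvPolynomial (Fin n) ℂ) ^ t.card * ∏ i ∈ S \ matchedVerts t, X i else 0 := by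
    intro t hmem
    have htsub : t ⊆ G.edgeFinset := Finset.mem_powerset.1 hmem
    have hd : ∀ e ∈ t, ¬ e.IsDiag := fun e he =>
      G.not_isDiag_of_mem_edgeSet (SimpleGraph.mem_edgeFinset.1 (htsub he))
    have hC : ((-1 : MvPolynomial (Fin n) ℂ)) ^ t.card = C ((-1 : ℂ) ^ t.card) := by
      rw [map_pow, map_neg, map_one]
    rw [Finset.prod_const_one, mul_one, prod_edgeProd, hC, C_mul_monomial, mul_one,
      applyDiff_monomial, Dmon_prod_X]
    by_cases hgood : ∀ v, (∑ e ∈ t, edgeM e) v = 0 ∨ ((∑ e ∈ t, edgeM e) v = 1 ∧ v ∈ S)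
    · rw [if_pos hgood, if_pos ((good_iff G S t htsub).1 hgood), support_msum t hd,
        prod_X_eq, smul_eq_C_mul]
    · rw [if_neg hgood, if_neg (fun hc => hgood ((good_iff G S t htsub).2 hc)), smul_zero]
  rw [Finset.sum_congr rfl hterm, ← Finset.sum_filter, inducedMatchPoly]
  congr 1
  ext M
  simp only [Finset.mem_filter, Finset.mem_powerset, Finset.mem_univ, true_and]
  constructor
  · rintro ⟨_, h⟩; exact h
  · intro h
    exact ⟨fun e he => SimpleGraph.mem_edgeFinset.2 (h.1.1 e he), h⟩
end

section
/- Let G = K_2 be the single-edge graph on vertices {1,2} and let P be the probability distribution with P({1,2}) = a, P({1}) = b, P({2}) = c, P(∅) = d (a,b,c,d ≥ 0, a+b+c+d = 1). Then the polynomial a(x_1 x_2 - 1) + b x_1 + c x_2 + d is stable if and only if bc - a(d - a) ≥ 0, whereas the partition function a x_1 x_2 + b x_1 + c x_2 + d is stable if and only if bc - ad ≥ 0. In particular there exist non-strong-Rayleigh distributions P for which the expected matching polynomial ∑_S P(S) μ_{G[S]}(x) is stable. -/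
open MvPolynomial Finset

/-- A polynomial in two variables is stable if it does not vanish when both
variables lie in the open upper half-plane. -/
def IsStable2 (f : MvPolynomial (Fin 2) ℂ) : Prop :=
  ∀ x : Fin 2 → ℂ, (∀ i, 0 < (x i).im) → MvPolynomial.eval x f ≠ 0

/-- The expected matching polynomial of `K_2` under `P`,
`a(x_1 x_2 - 1) + b x_1 + c x_2 + d`. -/
noncomputable def expMatchK2 (a b c d : ℝ) : MvPolynomial (Fin 2) ℂ :=
  C (a : ℂ) * (X 0 * X 1 - 1) + C (b : ℂ) * X 0 + C (c : ℂ) * X 1 + C (d : ℂ)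

/-- The partition function `Z_P = a x_1 x_2 + b x_1 + c x_2 + d`. -/
noncomputable def partK2 (a b c d : ℝ) : MvPolynomial (Fin 2) ℂ :=
  C (a : ℂ) * (X 0 * X 1) + C (b : ℂ) * X 0 + C (c : ℂ) * X 1 + C (d : ℂ)

lemma key_stable (a b c e : ℝ) (ha : 0 ≤ a) (hb : 0 ≤ b) (hc : 0 ≤ c)
    (hne : ¬ (a = 0 ∧ b = 0 ∧ c = 0 ∧ e = 0)) :
    (∀ x y : ℂ, 0 < x.im → 0 < y.im →
      (a:ℂ) * (x * y) + b * x + c * y + e ≠ 0) ↔ 0 ≤ b * c - a * e := by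
  constructor
  · intro hst
    by_contra hlt
    push_neg at hlt
    have hap : 0 < a := by
      rcases ha.lt_or_eq with h | h
      · exact h
      · exfalso; rw [← h] at hlt; nlinarith [mul_nonneg hb hc]
    have hae : 0 < a * e - b * c := by linarith
    set D : ℂ := (a:ℂ) * Complex.I + b with hD
    have hDne : D ≠ 0 := by
      intro h
      have := congrArg Complex.im h
      simp [hD] at this
      exact hap.ne' this
    set x : ℂ := -((c:ℂ) * Complex.I + e) / D with hx
    have hxim : 0 < x.im := by
      have hnorm : 0 < Complex.normSq D := Complex.normSq_pos.mpr hDne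
      have : x.im = (a * e - b * c) / Complex.normSq D := by
        rw [hx, Complex.div_im]
        simp [hD]
        field_simp
        ring
      rw [this]
      positivity
    have heq : (a:ℂ) * (x * Complex.I) + b * x + c * Complex.I + e = 0 := by
      have hxD : x * D = -((c:ℂ) * Complex.I + e) := div_mul_cancel₀ _ hDne
      rw [hD] at hxD
      linear_combination hxD
    exact hst x Complex.I hxim (by simp) heq
  · intro h x y hxim hyim heq
    rcases ha.lt_or_eq with hap | haz
    · -- a > 0
      set D : ℂ := (a:ℂ) * y + b with hD
      have hDim : D.im = a * y.im := by simp [hD]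
      have hDne : D ≠ 0 := by
        intro h0
        have := congrArg Complex.im h0
        rw [hDim] at this
        simp at this
        rcases this with h1 | h1
        · exact hap.ne' h1
        · exact hyim.ne' h1
      have hN : 0 < Complex.normSq D := Complex.normSq_pos.mpr hDne
      have hkey : x * ((Complex.normSq D : ℝ) : ℂ) =
          -((c:ℂ) * y + e) * (starRingEnd ℂ) D := by
        rw [← Complex.mul_conj]
        linear_combination (starRingEnd ℂ) D * heq
      have him := congrArg Complex.im hkey
      simp [hD, Complex.mul_im, Complex.mul_re, Complex.conj_re, Complex.conj_im,
        Complex.add_re, Complex.add_im, Complex.ofReal_re, Complex.ofReal_im] at him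
      -- him : x.im * normSq D = (a*e - b*c) * y.im  (in some form)
      nlinarith [mul_pos hxim hN, mul_nonneg (by linarith : (0:ℝ) ≤ b * c - a * e) hyim.le]
    · -- a = 0
      rw [← haz] at heq
      have him := congrArg Complex.im heq
      simp [Complex.add_im, Complex.mul_im, Complex.ofReal_re, Complex.ofReal_im] at him
      have hb0 : b = 0 := by nlinarith [mul_nonneg hb hxim.le, mul_nonneg hc hyim.le]
      have hc0 : c = 0 := by nlinarith [mul_nonneg hb hxim.le, mul_nonneg hc hyim.le]
      rw [hb0, hc0] at heq
      have hre := congrArg Complex.re heq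
      simp at hre
      exact hne ⟨haz.symm, hb0, hc0, hre⟩

lemma expMatch_iff (a b c d : ℝ) :
    IsStable2 (expMatchK2 a b c d) ↔
      (∀ x y : ℂ, 0 < x.im → 0 < y.im →
        (a:ℂ) * (x * y) + b * x + c * y + ((d - a : ℝ) : ℂ) ≠ 0) := by
  constructor
  · intro hst x y hx hy h
    refine hst ![x, y] (fun i => by fin_cases i <;> simpa) ?_
    simp [expMatchK2]
    push_cast at h ⊢
    linear_combination h
  · intro hpt x hx h
    refine hpt (x 0) (x 1) (hx 0) (hx 1) ?_
    simp [expMatchK2] at h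
    push_cast at h ⊢
    linear_combination h

lemma part_iff (a b c d : ℝ) :
    IsStable2 (partK2 a b c d) ↔
      (∀ x y : ℂ, 0 < x.im → 0 < y.im →
        (a:ℂ) * (x * y) + b * x + c * y + ((d : ℝ) : ℂ) ≠ 0) := by
  constructor
  · intro hst x y hx hy h
    refine hst ![x, y] (fun i => by fin_cases i <;> simpa) ?_
    simp [partK2]
    linear_combination h
  · intro hpt x hx h
    refine hpt (x 0) (x 1) (hx 0) (hx 1) ?_
    simp [partK2] at h
    linear_combination h

/-- For the single–edge graph `K_2` and the distribution `P({1,2}) = a`,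
`P({1}) = b`, `P({2}) = c`, `P(∅) = d`: the expected matching polynomial
`a(x_1x_2 - 1) + bx_1 + cx_2 + d` is stable iff `bc - a(d - a) ≥ 0`, while the
partition function `ax_1x_2 + bx_1 + cx_2 + d` is stable iff `bc - ad ≥ 0`;
in particular there is a non–strong-Rayleigh distribution whose expected
matching polynomial is stable. -/
theorem stmt_12 :
    (∀ a b c d : ℝ, 0 ≤ a → 0 ≤ b → 0 ≤ c → 0 ≤ d → a + b + c + d = 1 →
      ((IsStable2 (expMatchK2 a b c d) ↔ 0 ≤ b * c - a * (d - a)) ∧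
       (IsStable2 (partK2 a b c d) ↔ 0 ≤ b * c - a * d))) ∧
    (∃ a b c d : ℝ, 0 ≤ a ∧ 0 ≤ b ∧ 0 ≤ c ∧ 0 ≤ d ∧ a + b + c + d = 1 ∧
      ¬ IsStable2 (partK2 a b c d) ∧ IsStable2 (expMatchK2 a b c d)) := by
  constructor
  · intro a b c d ha hb hc hd hsum
    constructor
    · rw [expMatch_iff]
      exact key_stable a b c (d - a) ha hb hc
        (by rintro ⟨h1, h2, h3, h4⟩; rw [h1, h2, h3] at hsum; linarith)
    · rw [part_iff]
      exact key_stable a b c d ha hb hc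
        (by rintro ⟨h1, h2, h3, h4⟩; rw [h1, h2, h3, h4] at hsum; norm_num at hsum)
  · refine ⟨1/2, 0, 0, 1/2, by norm_num, le_rfl, le_rfl, by norm_num, by norm_num, ?_, ?_⟩
    · rw [part_iff, key_stable (1/2) 0 0 (1/2) (by norm_num) le_rfl le_rfl (by norm_num)]
      norm_num
    · rw [expMatch_iff,
        key_stable (1/2) 0 0 (1/2 - 1/2) (by norm_num) le_rfl le_rfl (by norm_num)]
      norm_num
end
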